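/- arXiv:1001.5095 — 9 statements merged into one kernel-verified Lean document; each statement's English description precedes it below -/
import Mathlib

section
/- (Zaslavsky) Let 𝒜 be a central hyperplane arrangement of rank r in ℝ^d. Then (−1)^r χ_𝒜(−1) = |ℛ(𝒜)|, the number of regions of 𝒜. -/
/-!
Formalization of statements from "Projection Volumes of Hyperplane Arrangements"
by Klivans and Swartz.
-/

open scoped RealInnerProductSpace Pointwise
open MeasureTheory Metric Set

noncomputable section

attribute [local instance] Classical.decEq Classical.propDecidable

/-- Shorthand for the ambient Euclidean space `ℝ^d`. -/
abbrev Euc (d : ℕ) := EuclideanSpace ℝ (Fin d)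

variable {E : Type*} [NormedAddCommGroup E] [InnerProductSpace ℝ E] [FiniteDimensional ℝ E]
  [MeasurableSpace E] [BorelSpace E]

/-- A (linear) hyperplane: the orthogonal complement of a nonzero vector,
i.e. a codimension-one linear subspace. -/
def IsLinearHyperplane (H : Submodule ℝ E) : Prop :=
  ∃ η : E, η ≠ 0 ∧ H = (Submodule.span ℝ {η})ᗮ

/-- The intersection poset `L(𝒜)`: all intersections of subsets of `𝒜`
(the empty intersection being the whole space `⊤`), as a finset of subspaces.
It is ordered by *reverse* inclusion: `x ⊑ y` in `L(𝒜)` iff `y ≤ x` as submodules;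
the minimal element `ℝ^d` is `⊤`. -/
def interPoset (A : Finset (Submodule ℝ E)) : Finset (Submodule ℝ E) :=
  A.powerset.image fun S => S.inf id

/-- The complement of the union of the hyperplanes of `𝒜`. -/
def hypComplement (A : Finset (Submodule ℝ E)) : Set E :=
  {z | ∀ H ∈ A, z ∉ H}

/-- A region of `𝒜`: a connected component of the complement of the hyperplanes. -/
def IsRegion (A : Finset (Submodule ℝ E)) (C : Set E) : Prop :=
  ∃ z ∈ hypComplement A, C = connectedComponentIn (hypComplement A) z

/-- `p` is the nearest point of `C` to `z` (i.e. `p = π_C(z)`, the orthogonal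
projection of `z` onto `C`; it is unique when `C` is nonempty, closed and convex). -/
def IsNearestPt (C : Set E) (z p : E) : Prop :=
  p ∈ C ∧ ∀ q ∈ C, dist z p ≤ dist z q

/-- A face of a convex set `C`: a nonempty exposed face (`C` itself included). -/
def IsFaceOf (C F : Set E) : Prop :=
  F.Nonempty ∧ IsExposed ℝ C F

/-- The dimension of a set: the dimension of the direction space of its affine span. -/
def sdim (F : Set E) : ℕ := Module.finrank ℝ (vectorSpan ℝ F)

/-- `X_F`: the set of points `z` whose orthogonal projection onto `C` lies in the
relative interior (= intrinsic interior) of the face `F`. -/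
def projRegion (C F : Set E) : Set E :=
  {z | ∃ p, IsNearestPt C z p ∧ p ∈ intrinsicInterior ℝ F}

/-- `ν_C(F)`: the fraction of the volume of the unit ball occupied by `X_F`. -/
def nuF (C F : Set E) : ℝ :=
  (volume (projRegion C F ∩ closedBall (0 : E) 1)).toReal /
    (volume (closedBall (0 : E) 1)).toReal

/-- `ν_k(C)`: the sum of `ν_C(F)` over all `k`-dimensional faces `F` of `C`. -/
def nuK (C : Set E) (k : ℕ) : ℝ :=
  ∑ᶠ F ∈ {F | IsFaceOf C F ∧ sdim F = k}, nuF C F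

/-!
Choose a normal `η H` for every hyperplane `H`. A region is a chamber on which every `⟪η H, ·⟫`
has constant sign, so regions correspond to realisable sign vectors (recorded as sets of positive
coordinates). For `H₀ = v^⊥ ∈ 𝒜`, a sign vector of `𝒜 \ {H₀}` is realised on both sides of `H₀`
iff it is realised on `H₀` (chambers are open and convex), and the sign vectors realised on `H₀`
are those of the restriction `𝒜^{H₀}`, whose normals are the projections of the `η H` to `v^⊥`.
Hence `#ℛ(𝒜) = #ℛ(𝒜 \ {H₀}) + #ℛ(𝒜^{H₀})`. The sum `∑_{S ⊆ 𝒜} (-1)^(|S| + rank S)` obeys the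
same recursion, since the rank of `S ∪ {H₀}` is one more than that of the projected normals of
`S`. Whitney's formula `μ(x) = ∑_{⋂ S = x} (-1)^|S|` identifies this sum with `(-1)^r χ_𝒜(-1)`.
-/

open Module (finrank)
open Submodule (span)

section Mobius

theorem Finset.eqOn_of_sum_filter_le_eq {α : Type*} [PartialOrder α] (L : Finset α)
    {f g δ : α → ℤ} (hf : ∀ x ∈ L, ∑ z ∈ L.filter (x ≤ ·), f z = δ x)
    (hg : ∀ x ∈ L, ∑ z ∈ L.filter (x ≤ ·), g z = δ x) : Set.EqOn f g L := by
  intro x hx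
  refine Set.WellFoundedOn.induction (r := (· > ·)) (P := fun x => f x = g x)
    L.finite_toSet.wellFoundedOn hx fun x hx ih => ?_
  have hxL : x ∈ L.filter (x ≤ ·) := Finset.mem_filter.2 ⟨hx, le_rfl⟩
  have hrest : ∑ z ∈ (L.filter (x ≤ ·)).erase x, f z = ∑ z ∈ (L.filter (x ≤ ·)).erase x, g z :=
    Finset.sum_congr rfl fun z hz => by
      obtain ⟨hzx, hz⟩ := Finset.mem_erase.1 hz
      exact ih z (Finset.mem_filter.1 hz).1 (lt_of_le_of_ne (Finset.mem_filter.1 hz).2 hzx.symm)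
  have := (hf x hx).trans (hg x hx).symm
  rw [← Finset.add_sum_erase _ _ hxL, ← Finset.add_sum_erase _ _ hxL, hrest] at this
  exact add_right_cancel this

variable {α : Type*} [SemilatticeInf α] [OrderTop α]

def whitneyMobius (A : Finset α) (x : α) : ℤ :=
  ∑ S ∈ A.powerset.filter (·.inf id = x), (-1) ^ S.card

theorem sum_whitneyMobius_mul (A : Finset α) (g : α → ℤ) :
    ∑ x ∈ A.powerset.image (·.inf id), whitneyMobius A x * g x
      = ∑ S ∈ A.powerset, (-1) ^ S.card * g (S.inf id) := by
  rw [← Finset.sum_fiberwise_of_maps_to (g := fun S : Finset α => S.inf id)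
    (fun S hS => Finset.mem_image_of_mem _ hS)]
  refine Finset.sum_congr rfl fun x _ => ?_
  rw [whitneyMobius, Finset.sum_mul]
  exact Finset.sum_congr rfl fun S hS => by rw [(Finset.mem_filter.1 hS).2]

theorem sum_filter_le_whitneyMobius {A : Finset α} (hA : ⊤ ∉ A) {x : α}
    (hx : x ∈ A.powerset.image (·.inf id)) :
    ∑ z ∈ (A.powerset.image (·.inf id)).filter (x ≤ ·), whitneyMobius A z
      = if x = ⊤ then 1 else 0 := by
  have hfilter : A.powerset.filter (x ≤ ·.inf id) = (A.filter (x ≤ ·)).powerset := by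
    ext S
    simp only [Finset.mem_filter, Finset.mem_powerset, Finset.le_inf_iff, id, Finset.subset_iff]
    grind
  have hempty : A.filter (x ≤ ·) = ∅ ↔ x = ⊤ := by
    obtain ⟨S, hS, rfl⟩ := Finset.mem_image.1 hx
    rw [Finset.filter_eq_empty_iff]
    constructor
    · intro h
      rw [Finset.inf_eq_top_iff]
      intro H hH
      exact absurd (Finset.inf_le hH) (h (Finset.mem_powerset.1 hS hH))
    · intro h H hH hle
      exact hA (top_le_iff.1 (h ▸ hle) ▸ hH)
  calc ∑ z ∈ (A.powerset.image (·.inf id)).filter (x ≤ ·), whitneyMobius A z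
      = ∑ S ∈ A.powerset.filter (x ≤ ·.inf id), (-1) ^ S.card := by
        simpa only [Finset.sum_filter, mul_boole]
          using sum_whitneyMobius_mul A fun z => if x ≤ z then 1 else 0
    _ = if x = ⊤ then 1 else 0 := by
        rw [hfilter, Finset.sum_powerset_neg_one_pow_card]
        exact if_congr hempty rfl rfl

end Mobius

theorem neg_one_pow_mul_neg_one_pow_sub {k n : ℕ} (h : k ≤ n) :
    (-1 : ℤ) ^ n * (-1) ^ (n - k) = (-1) ^ k := by
  obtain ⟨m, rfl⟩ := Nat.exists_eq_add_of_le h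
  rw [Nat.add_sub_cancel_left, pow_add, mul_assoc, ← pow_add, ← two_mul, pow_mul]
  norm_num

section Arrangement

variable {ι V : Type*} [NormedAddCommGroup V] [InnerProductSpace ℝ V]

def offHyperplanes (s : Finset ι) (η : ι → V) : Set V := {z | ∀ i ∈ s, ⟪η i, z⟫ ≠ 0}

def positiveSide (s : Finset ι) (η : ι → V) (z : V) : Finset ι := s.filter fun i => 0 < ⟪η i, z⟫

def signVectorsOn (s : Finset ι) (η : ι → V) (U : Set V) : Set (Finset ι) :=
  positiveSide s η '' (offHyperplanes s η ∩ U)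

def chamber (s : Finset ι) (η : ι → V) (z : V) : Set V :=
  {w | ∀ i ∈ s, 0 < ⟪η i, z⟫ * ⟪η i, w⟫}

theorem IsPreconnected.mul_pos_of_ne_zero {X : Type*} [TopologicalSpace X] {S : Set X}
    (hS : IsPreconnected S) {f : X → ℝ} (hf : ContinuousOn f S) (h0 : ∀ x ∈ S, f x ≠ 0)
    {x y : X} (hx : x ∈ S) (hy : y ∈ S) : 0 < f x * f y := by
  by_contra! hxy
  obtain ⟨z, hz, hfz⟩ : (0 : ℝ) ∈ f '' S := by
    rcases mul_nonpos_iff.1 hxy with ⟨hfx, hfy⟩ | ⟨hfx, hfy⟩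
    · exact hS.intermediate_value hy hx hf ⟨hfy, hfx⟩
    · exact hS.intermediate_value hx hy hf ⟨hfx, hfy⟩
  exact h0 z hz hfz

theorem self_mem_chamber {s : Finset ι} {η : ι → V} {z : V} (hz : z ∈ offHyperplanes s η) :
    z ∈ chamber s η z :=
  fun i hi => mul_self_pos.2 (hz i hi)

theorem mem_chamber_iff {s : Finset ι} {η : ι → V} {z w : V} (hz : z ∈ offHyperplanes s η) :
    w ∈ chamber s η z ↔ w ∈ offHyperplanes s η ∧ positiveSide s η w = positiveSide s η z := by
  simp only [chamber, offHyperplanes, positiveSide, Set.mem_ofPred_eq, Finset.filter_inj']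
  refine ⟨fun h => ⟨fun i hi => right_ne_zero_of_mul (h i hi).ne', fun i hi => ?_⟩,
    fun ⟨hw, hzw⟩ i hi => ?_⟩
  · rcases (hz i hi).lt_or_gt with hzi | hzi
    · have := neg_of_mul_pos_right (h i hi) hzi.le
      constructor <;> intro <;> linarith
    · have := pos_of_mul_pos_right (h i hi) hzi.le
      constructor <;> intro <;> linarith
  · rcases (hz i hi).lt_or_gt with hzi | hzi
    · have hwi : ⟪η i, w⟫ < 0 := (hw i hi).lt_of_le (not_lt.1 fun h => hzi.not_gt ((hzw hi).1 h))
      exact mul_pos_of_neg_of_neg hzi hwi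
    · exact mul_pos hzi ((hzw hi).2 hzi)

theorem convex_chamber (s : Finset ι) (η : ι → V) (z : V) : Convex ℝ (chamber s η z) := by
  simp only [chamber, Set.ofPred_forall]
  refine convex_iInter₂ fun i _ => ?_
  simp only [← real_inner_smul_left]
  exact convex_halfSpace_gt (innerₛₗ ℝ _).isLinear 0

theorem isOpen_chamber (s : Finset ι) (η : ι → V) (z : V) : IsOpen (chamber s η z) := by
  simp only [chamber, Set.ofPred_forall]
  exact isOpen_biInter_finset fun i _ => isOpen_lt continuous_const (by fun_prop)

theorem connectedComponentIn_offHyperplanes {s : Finset ι} {η : ι → V} {z : V}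
    (hz : z ∈ offHyperplanes s η) :
    connectedComponentIn (offHyperplanes s η) z = chamber s η z := by
  refine subset_antisymm (fun w hw i hi => ?_) ?_
  · exact isPreconnected_connectedComponentIn.mul_pos_of_ne_zero (by fun_prop)
      (fun x hx => connectedComponentIn_subset (offHyperplanes s η) z hx i hi)
      (mem_connectedComponentIn hz) hw
  · exact (convex_chamber s η z).isPreconnected.subset_connectedComponentIn (self_mem_chamber hz)
      fun w hw => ((mem_chamber_iff hz).1 hw).1

theorem ncard_connectedComponentIn_offHyperplanes (s : Finset ι) (η : ι → V) :
    (connectedComponentIn (offHyperplanes s η) '' offHyperplanes s η).ncard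
      = (signVectorsOn s η Set.univ).ncard := by
  set fiber : Finset ι → Set V := fun t => {w ∈ offHyperplanes s η | positiveSide s η w = t}
  have hcomponent : ∀ z ∈ offHyperplanes s η,
      connectedComponentIn (offHyperplanes s η) z = fiber (positiveSide s η z) := fun z hz => by
    ext w
    rw [connectedComponentIn_offHyperplanes hz, mem_chamber_iff hz]
    rfl
  rw [Set.image_congr hcomponent, ← Set.image_image, signVectorsOn, Set.inter_univ]
  refine Set.InjOn.ncard_image ?_
  rintro _ ⟨z, hz, rfl⟩ t _ heq
  have hzt : z ∈ fiber t := heq ▸ ⟨hz, rfl⟩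
  exact hzt.2

theorem signVectorsOn_subset_powerset (s : Finset ι) (η : ι → V) (U : Set V) :
    signVectorsOn s η U ⊆ ↑s.powerset := by
  rintro _ ⟨z, -, rfl⟩
  exact Finset.mem_powerset.2 (Finset.filter_subset _ _)

theorem finite_signVectorsOn (s : Finset ι) (η : ι → V) (U : Set V) :
    (signVectorsOn s η U).Finite :=
  s.powerset.finite_toSet.subset (signVectorsOn_subset_powerset s η U)

theorem signVectorsOn_mono (s : Finset ι) (η : ι → V) {U U' : Set V} (h : U ⊆ U') :
    signVectorsOn s η U ⊆ signVectorsOn s η U' :=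
  Set.image_mono (Set.inter_subset_inter_right _ h)

theorem signVectorsOn_empty (η : ι → V) : signVectorsOn ∅ η Set.univ = {∅} := by
  have hoff : offHyperplanes (∅ : Finset ι) η = Set.univ := by simp [offHyperplanes]
  simp [signVectorsOn, hoff, positiveSide]

theorem offHyperplanes_insert (a : ι) (s : Finset ι) (η : ι → V) :
    offHyperplanes (insert a s) η = {z | ⟪η a, z⟫ ≠ 0} ∩ offHyperplanes s η := by
  ext z
  simp [offHyperplanes]

theorem positiveSide_insert (a : ι) (s : Finset ι) (η : ι → V) (z : V) :
    positiveSide (insert a s) η z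
      = if 0 < ⟪η a, z⟫ then insert a (positiveSide s η z) else positiveSide s η z :=
  Finset.filter_insert _ _ _

theorem signVectorsOn_insert_of_eq_zero {a : ι} (s : Finset ι) {η : ι → V} (hv : η a = 0)
    (U : Set V) : signVectorsOn (insert a s) η U = ∅ := by
  simp [signVectorsOn, offHyperplanes_insert, hv]

theorem signVectorsOn_insert (a : ι) (s : Finset ι) (η : ι → V) :
    signVectorsOn (insert a s) η Set.univ
      = insert a '' signVectorsOn s η {z | 0 < ⟪η a, z⟫}
        ∪ signVectorsOn s η {z | ⟪η a, z⟫ < 0} := by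
  ext t
  simp only [signVectorsOn, offHyperplanes_insert, Set.inter_univ, Set.mem_union, Set.mem_image,
    Set.mem_inter_iff, Set.mem_ofPred_eq]
  constructor
  · rintro ⟨z, ⟨hza, hz⟩, rfl⟩
    rcases hza.lt_or_gt with h | h
    · exact .inr ⟨z, ⟨hz, h⟩, by rw [positiveSide_insert, if_neg h.not_gt]⟩
    · exact .inl ⟨_, ⟨z, ⟨hz, h⟩, rfl⟩, by rw [positiveSide_insert, if_pos h]⟩
  · rintro (⟨_, ⟨z, ⟨hz, h⟩, rfl⟩, rfl⟩ | ⟨z, ⟨hz, h⟩, rfl⟩)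
    · exact ⟨z, ⟨h.ne', hz⟩, by rw [positiveSide_insert, if_pos h]⟩
    · exact ⟨z, ⟨h.ne, hz⟩, by rw [positiveSide_insert, if_neg h.not_gt]⟩

theorem ncard_signVectorsOn_insert {a : ι} {s : Finset ι} (ha : a ∉ s) (η : ι → V) :
    (signVectorsOn (insert a s) η Set.univ).ncard
      = (signVectorsOn s η {z | 0 < ⟪η a, z⟫}).ncard
        + (signVectorsOn s η {z | ⟪η a, z⟫ < 0}).ncard := by
  have hnot : ∀ U, ∀ t ∈ signVectorsOn s η U, a ∉ t := fun U t ht hat =>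
    ha (Finset.mem_powerset.1 (signVectorsOn_subset_powerset s η U ht) hat)
  rw [signVectorsOn_insert, Set.ncard_union_eq _ ((finite_signVectorsOn _ _ _).image _)
    (finite_signVectorsOn _ _ _)]
  · rw [Set.InjOn.ncard_image fun t ht t' ht' h => by
      rw [← Finset.erase_insert (hnot _ t ht), h, Finset.erase_insert (hnot _ t' ht')]]
  · rw [Set.disjoint_left]
    rintro _ ⟨t, -, rfl⟩ ht
    exact hnot _ _ ht (Finset.mem_insert_self a t)

theorem exists_mem_chamber_inner_pos {s : Finset ι} {η : ι → V} {z v : V}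
    (hz : z ∈ offHyperplanes s η) (hv : v ≠ 0) (hvz : 0 ≤ ⟪v, z⟫) :
    ∃ w ∈ chamber s η z, 0 < ⟪v, w⟫ := by
  have hlim : Filter.Tendsto (fun t : ℝ => z + t • v) (nhdsWithin 0 (Set.Ioi 0)) (nhds z) :=
    tendsto_nhdsWithin_of_tendsto_nhds (Continuous.tendsto' (by fun_prop) 0 z (by simp))
  obtain ⟨t, hmem, ht⟩ := ((hlim.eventually ((isOpen_chamber s η z).mem_nhds
    (self_mem_chamber hz))).and self_mem_nhdsWithin).exists
  refine ⟨_, hmem, ?_⟩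
  rw [inner_add_right, real_inner_smul_right, real_inner_self_eq_norm_sq]
  have : 0 < ‖v‖ := norm_pos_iff.2 hv
  have : (0 : ℝ) < t := ht
  positivity

theorem signVectorsOn_pos_union_neg (s : Finset ι) (η : ι → V) {v : V} (hv : v ≠ 0) :
    signVectorsOn s η {z | 0 < ⟪v, z⟫} ∪ signVectorsOn s η {z | ⟪v, z⟫ < 0}
      = signVectorsOn s η Set.univ := by
  refine subset_antisymm (Set.union_subset (signVectorsOn_mono s η (Set.subset_univ _))
    (signVectorsOn_mono s η (Set.subset_univ _))) ?_
  rintro _ ⟨z, ⟨hz, -⟩, rfl⟩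
  rcases lt_or_ge ⟪v, z⟫ 0 with h | h
  · exact .inr ⟨z, ⟨hz, h⟩, rfl⟩
  · obtain ⟨w, hw, hvw⟩ := exists_mem_chamber_inner_pos hz hv h
    obtain ⟨hw, hzw⟩ := (mem_chamber_iff hz).1 hw
    exact .inl ⟨w, ⟨hw, hvw⟩, hzw⟩

theorem signVectorsOn_pos_inter_neg (s : Finset ι) (η : ι → V) {v : V} (hv : v ≠ 0) :
    signVectorsOn s η {z | 0 < ⟪v, z⟫} ∩ signVectorsOn s η {z | ⟪v, z⟫ < 0}
      = signVectorsOn s η (ℝ ∙ v)ᗮ := by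
  ext t
  constructor
  · rintro ⟨⟨zp, ⟨hzp, hp⟩, rfl⟩, ⟨zm, ⟨hzm, hm⟩, hzpm⟩⟩
    have hsegment : segment ℝ zp zm ⊆ chamber s η zp :=
      (convex_chamber s η zp).segment_subset (self_mem_chamber hzp)
        ((mem_chamber_iff hzp).2 ⟨hzm, hzpm⟩)
    obtain ⟨w, hw, hvw⟩ : (0 : ℝ) ∈ (⟪v, ·⟫) '' segment ℝ zp zm :=
      (convex_segment zp zm).isPreconnected.intermediate_value (right_mem_segment ℝ zp zm)
        (left_mem_segment ℝ zp zm) (by fun_prop) ⟨hm.le, hp.le⟩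
    obtain ⟨hw, hzw⟩ := (mem_chamber_iff hzp).1 (hsegment hw)
    exact ⟨w, ⟨hw, Submodule.mem_orthogonal_singleton_iff_inner_right.2 hvw⟩, hzw⟩
  · rintro ⟨z, ⟨hz, hvz⟩, rfl⟩
    rw [SetLike.mem_coe, Submodule.mem_orthogonal_singleton_iff_inner_right] at hvz
    obtain ⟨wp, hwp, hp⟩ := exists_mem_chamber_inner_pos hz hv hvz.ge
    obtain ⟨wm, hwm, hm⟩ := exists_mem_chamber_inner_pos hz (neg_ne_zero.2 hv)
      (by rw [inner_neg_left, hvz, neg_zero])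
    obtain ⟨hwp, hzwp⟩ := (mem_chamber_iff hz).1 hwp
    obtain ⟨hwm, hzwm⟩ := (mem_chamber_iff hz).1 hwm
    rw [inner_neg_left, neg_pos] at hm
    exact ⟨⟨wp, ⟨hwp, hp⟩, hzwp⟩, ⟨wm, ⟨hwm, hm⟩, hzwm⟩⟩

theorem signVectorsOn_submodule (s : Finset ι) (η : ι → V) (K : Submodule ℝ V)
    [K.HasOrthogonalProjection] :
    signVectorsOn s η K = signVectorsOn s (K.starProjection ∘ η) Set.univ := by
  have hside : ∀ z,
      positiveSide s (K.starProjection ∘ η) z = positiveSide s η (K.starProjection z) := fun z => by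
    simp only [positiveSide, Function.comp_apply, Submodule.inner_starProjection_left_eq_right]
  have hoff :
      offHyperplanes s (K.starProjection ∘ η) = K.starProjection ⁻¹' offHyperplanes s η := by
    ext z
    simp only [offHyperplanes, Function.comp_apply, Submodule.inner_starProjection_left_eq_right,
      Set.mem_preimage, Set.mem_ofPred_eq]
  rw [signVectorsOn, signVectorsOn, Set.inter_univ, hoff, funext hside, ← Function.comp_def,
    Set.image_comp, Set.image_preimage_eq_inter_range]
  congr 2
  ext z
  simp only [SetLike.mem_coe, Set.mem_range]
  exact ⟨fun h => ⟨z, Submodule.starProjection_eq_self_iff.2 h⟩,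
    by rintro ⟨y, rfl⟩; exact K.starProjection_apply_mem y⟩

def rankSignSum (s : Finset ι) (η : ι → V) : ℤ :=
  ∑ t ∈ s.powerset, (-1) ^ (t.card + finrank ℝ (span ℝ (η '' t)))

theorem finrank_span_insert_eq_finrank_span_starProjection_add_one [FiniteDimensional ℝ V]
    {v : V} (hv : v ≠ 0) (X : Set V) :
    finrank ℝ (span ℝ (insert v X))
      = finrank ℝ (span ℝ ((ℝ ∙ v)ᗮ.starProjection '' X)) + 1 := by
  set K := ℝ ∙ v
  have hspan : span ℝ (insert v X) = span ℝ (Kᗮ.starProjection '' X) ⊔ K := by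
    rw [Submodule.span_insert, sup_comm]
    apply le_antisymm <;> refine sup_le (Submodule.span_le.2 ?_) le_sup_right
    · intro x hx
      rw [SetLike.mem_coe, ← K.starProjection_add_starProjection_orthogonal x, add_comm]
      exact Submodule.add_mem_sup (Submodule.subset_span ⟨x, hx, rfl⟩)
        (K.starProjection_apply_mem x)
    · rintro _ ⟨x, hx, rfl⟩
      rw [SetLike.mem_coe, Submodule.starProjection_orthogonal_val]
      exact Submodule.sub_mem _ (Submodule.mem_sup_left (Submodule.subset_span hx))
        (Submodule.mem_sup_right (K.starProjection_apply_mem x))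
  have hvX : v ∉ span ℝ (Kᗮ.starProjection '' X) := fun h => hv <| by
    have hvK : v ∈ Kᗮ := Submodule.span_le.2
      (by rintro _ ⟨x, -, rfl⟩; exact Kᗮ.starProjection_apply_mem x) h
    exact inner_self_eq_zero.1 (Submodule.mem_orthogonal_singleton_iff_inner_right.1 hvK)
  rw [hspan, Submodule.finrank_sup_span_singleton hvX]

theorem rankSignSum_empty (η : ι → V) : rankSignSum ∅ η = 1 := by
  rw [rankSignSum, Finset.powerset_empty, Finset.sum_singleton, Finset.card_empty,
    Finset.coe_empty, Set.image_empty, Submodule.span_empty, finrank_bot, pow_zero]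

theorem rankSignSum_insert_of_eq_zero {a : ι} {s : Finset ι} (ha : a ∉ s) {η : ι → V}
    (hv : η a = 0) : rankSignSum (insert a s) η = 0 := by
  rw [rankSignSum, Finset.sum_powerset_insert ha, ← Finset.sum_add_distrib]
  refine Finset.sum_eq_zero fun t ht => ?_
  have hat : a ∉ t := fun h => ha (Finset.mem_powerset.1 ht h)
  rw [Finset.card_insert_of_notMem hat, Finset.coe_insert, Set.image_insert_eq, hv,
    Submodule.span_insert_zero, add_right_comm, pow_succ]
  ring

theorem rankSignSum_insert [FiniteDimensional ℝ V] {a : ι} {s : Finset ι} (ha : a ∉ s)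
    {η : ι → V} (hv : η a ≠ 0) :
    rankSignSum (insert a s) η
      = rankSignSum s η + rankSignSum s ((ℝ ∙ η a)ᗮ.starProjection ∘ η) := by
  rw [rankSignSum, Finset.sum_powerset_insert ha]
  congr 1
  refine Finset.sum_congr rfl fun t ht => ?_
  have hat : a ∉ t := fun h => ha (Finset.mem_powerset.1 ht h)
  rw [Finset.card_insert_of_notMem hat, Finset.coe_insert, Set.image_insert_eq,
    finrank_span_insert_eq_finrank_span_starProjection_add_one hv, ← Set.image_comp,
    show ∀ m n : ℕ, m + 1 + (n + 1) = m + n + 2 by omega, pow_add]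
  norm_num

theorem ncard_signVectorsOn_univ [FiniteDimensional ℝ V] (s : Finset ι) (η : ι → V) :
    ((signVectorsOn s η Set.univ).ncard : ℤ) = rankSignSum s η := by
  induction s using Finset.induction_on generalizing η with
  | empty => simp [signVectorsOn_empty, rankSignSum_empty]
  | insert a s ha ih =>
    by_cases hv : η a = 0
    · simp [signVectorsOn_insert_of_eq_zero s hv, rankSignSum_insert_of_eq_zero ha hv]
    · rw [ncard_signVectorsOn_insert ha, ← Set.ncard_union_add_ncard_inter _ _
        (finite_signVectorsOn _ _ _) (finite_signVectorsOn _ _ _),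
        signVectorsOn_pos_union_neg s η hv, signVectorsOn_pos_inter_neg s η hv,
        signVectorsOn_submodule, rankSignSum_insert ha hv]
      push_cast
      rw [ih, ih]

theorem Finset.inf_orthogonal_span_singleton (S : Finset ι) (η : ι → V) :
    S.inf (fun i => (ℝ ∙ η i)ᗮ) = (span ℝ (η '' S))ᗮ := by
  induction S using Finset.induction_on with
  | empty => simp [Submodule.bot_orthogonal_eq_top]
  | insert a S _ ih =>
    rw [Finset.inf_insert, ih, Finset.coe_insert, Set.image_insert_eq, Submodule.span_insert,
      Submodule.inf_orthogonal]

theorem IsLinearHyperplane.ne_top {H : Submodule ℝ V} (h : IsLinearHyperplane H) : H ≠ ⊤ := by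
  obtain ⟨η, hη, rfl⟩ := h
  intro htop
  exact hη (inner_self_eq_zero.1
    (Submodule.mem_orthogonal_singleton_iff_inner_right.1 (htop ▸ Submodule.mem_top)))

theorem ncard_setOf_isRegion {A : Finset (Submodule ℝ V)} {η : Submodule ℝ V → V}
    (hη : ∀ H ∈ A, H = (ℝ ∙ η H)ᗮ) :
    {C | IsRegion A C}.ncard = (signVectorsOn A η Set.univ).ncard := by
  have hcompl : hypComplement A = offHyperplanes A η := by
    ext z
    refine forall₂_congr fun H hH => not_congr ?_
    exact (SetLike.ext_iff.1 (hη H hH) z).trans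
      Submodule.mem_orthogonal_singleton_iff_inner_right
  have hregions : {C | IsRegion A C}
      = connectedComponentIn (offHyperplanes A η) '' offHyperplanes A η := by
    ext C
    simp [IsRegion, hcompl, eq_comm]
  rw [hregions, ncard_connectedComponentIn_offHyperplanes]

theorem neg_one_pow_mul_sum_powerset_eq_rankSignSum [FiniteDimensional ℝ V]
    {A : Finset (Submodule ℝ V)} {η : Submodule ℝ V → V} (hη : ∀ H ∈ A, H = (ℝ ∙ η H)ᗮ)
    {r : ℕ} (hr : r = finrank ℝ (A.inf id)ᗮ) :
    (-1 : ℤ) ^ r * ∑ S ∈ A.powerset,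
        (-1) ^ S.card * (-1) ^ (r - (finrank ℝ V - finrank ℝ (S.inf id : Submodule ℝ V)))
      = rankSignSum A η := by
  have hinf : ∀ S ∈ A.powerset, (S.inf id : Submodule ℝ V) = (span ℝ (η '' S))ᗮ := fun S hS => by
    rw [← Finset.inf_orthogonal_span_singleton]
    exact Finset.inf_congr rfl fun H hH => hη H (Finset.mem_powerset.1 hS hH)
  rw [Finset.mul_sum]
  refine Finset.sum_congr rfl fun S hS => ?_
  have hcodim :
      finrank ℝ V - finrank ℝ (S.inf id : Submodule ℝ V) = finrank ℝ (span ℝ (η '' S)) := by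
    have := (span ℝ (η '' S)).finrank_add_finrank_orthogonal
    rw [hinf S hS]
    omega
  have hrank : finrank ℝ (span ℝ (η '' S)) ≤ r := by
    rw [hr, hinf A (Finset.mem_powerset_self A), Submodule.orthogonal_orthogonal]
    exact Submodule.finrank_mono (Submodule.span_mono (Set.image_mono (Finset.mem_powerset.1 hS)))
  rw [hcodim, mul_left_comm, neg_one_pow_mul_neg_one_pow_sub hrank, pow_add]

end Arrangement

/-- Zaslavsky's theorem, equation (1) of the paper.  For a central
arrangement `𝒜` of rank `r` in `ℝ^d`, `(-1)^r χ_𝒜(-1) = #regions`, where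
`χ_𝒜(t) = ∑_{x ∈ L(𝒜)} μ(x) t^(r-(d-dim x))`.  (The rank is the dimension of the span
of the normals, i.e. of the orthogonal complement of `⋂_{H ∈ 𝒜} H`.) -/
theorem zaslavsky_number_of_regions {d : ℕ}
    (A : Finset (Submodule ℝ (Euc d))) (hA : ∀ H ∈ A, IsLinearHyperplane H)
    (r : ℕ) (hr : r = Module.finrank ℝ (((A.inf id : Submodule ℝ (Euc d)))ᗮ : Submodule ℝ (Euc d)))
    (mu : Submodule ℝ (Euc d) → ℤ)
    -- `mu` is the one-variable Möbius function `μ(x) = μ(ℝ^d, x)` of `L(𝒜)`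
    -- (ordered by reverse inclusion, with minimal element `⊤ = ℝ^d`),
    -- characterized by the defining recursion `∑_{⊤ ⊒ z ⊒ x} μ(z) = δ_{x,⊤}`:
    (hmu : ∀ x ∈ interPoset A,
      ∑ z ∈ (interPoset A).filter (fun z : Submodule ℝ (Euc d) => x ≤ z), mu z
        = if x = (⊤ : Submodule ℝ (Euc d)) then 1 else 0)
 :
    (-1 : ℤ) ^ r *
        ∑ x ∈ interPoset A, mu x * (-1) ^ (r - (d - Module.finrank ℝ x))
      = ({C : Set (Euc d) | IsRegion A C}.ncard : ℤ) := by
  have htop : ⊤ ∉ A := fun h => (hA ⊤ h).ne_top rfl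
  choose! η _ hη using hA
  have hmobius : Set.EqOn mu (whitneyMobius A) (interPoset A) :=
    Finset.eqOn_of_sum_filter_le_eq _ hmu fun x hx => sum_filter_le_whitneyMobius htop hx
  calc (-1 : ℤ) ^ r * ∑ x ∈ interPoset A, mu x * (-1) ^ (r - (d - finrank ℝ x))
      = (-1) ^ r * ∑ S ∈ A.powerset,
          (-1) ^ S.card * (-1) ^ (r - (d - finrank ℝ (S.inf id : Submodule ℝ (Euc d)))) := by
        rw [Finset.sum_congr rfl fun x hx => by rw [hmobius hx]]
        exact congrArg _ (sum_whitneyMobius_mul A _)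
    _ = rankSignSum A η := by
        simpa only [finrank_euclideanSpace_fin]
          using neg_one_pow_mul_sum_powerset_eq_rankSignSum hη hr
    _ = _ := by rw [← ncard_signVectorsOn_univ, ncard_setOf_isRegion hη]
end
end

section
/- (Shephard) Every zonotope is equiprojective: if Z = Σ_{i=1}^m [−η_i, η_i] ⊆ ℝ^d is a Minkowski sum of segments whose generators η_1, …, η_m span ℝ^d, then for all unit vectors u, u′ not parallel to any proper face of Z, the orthogonal projections of Z onto u^⊥ and (u′)^⊥ have the same number of k-dimensional faces for every k. -/
/-!
Formalization of statements from "Projection Volumes of Hyperplane Arrangements"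
by Klivans and Swartz.
-/

open scoped RealInnerProductSpace Pointwise
open MeasureTheory Metric Set

noncomputable section

attribute [local instance] Classical.decEq Classical.propDecidable

variable {E : Type*} [NormedAddCommGroup E] [InnerProductSpace ℝ E] [FiniteDimensional ℝ E]
  [MeasurableSpace E] [BorelSpace E]

/-- The orthogonal projection of `ℝ^d` onto the hyperplane `u^⊥` (for a unit vector `u`). -/
def projPerp (u x : E) : E := x - ⟪u, x⟫ • u

/-- A `d`-dimensional polytope `P ⊆ ℝ^d` is equiprojective if for all unit vectors
`u, u'` not parallel to any proper face of `P` (i.e. not lying in the direction space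
of the affine span of any proper face), the orthogonal projections of `P` onto `u^⊥`
and `(u')^⊥` have the same number of `k`-dimensional faces for every `k`. -/
def Equiprojective (P : Set E) : Prop :=
  ∀ u u' : E, ‖u‖ = 1 → ‖u'‖ = 1 →
    (∀ F, IsFaceOf P F → F ≠ P → u ∉ vectorSpan ℝ F) →
    (∀ F, IsFaceOf P F → F ≠ P → u' ∉ vectorSpan ℝ F) →
    ∀ k : ℕ,
      {F | IsFaceOf (projPerp u '' P) F ∧ sdim F = k}.ncard
        = {F | IsFaceOf (projPerp u' '' P) F ∧ sdim F = k}.ncard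

/-!
A face of the zonotope `∑ᵢ [-wᵢ, wᵢ]` is the set where some `⟪c, ·⟫` is maximal, namely
`∑ᵢ (face of [-wᵢ, wᵢ] selected by sign ⟪c, wᵢ⟫)`; so faces correspond bijectively to the
covectors `i ↦ sign ⟪c, wᵢ⟫` of the generators, and the dimension of a face is the rank of the
generators on the zero set of its covector. Projecting along `u` gives the zonotope of the
projected generators. If `u` is parallel to no proper face, a set of generators whose span
contains `u` spans everything, so the rank function of the projected family is the same for every
such `u`. Finally the number of covectors of each rank depends only on the rank function: the
covectors with zero set `S` are the topes of the contraction by `S`, and the number of topes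
satisfies deletion–contraction.
-/

namespace Zonotope

open Module Submodule Topology

section LinearAlgebra

theorem finrank_map_add_finrank_ker_of_le {𝕜 V V₂ : Type*} [DivisionRing 𝕜] [AddCommGroup V]
    [Module 𝕜 V] [AddCommGroup V₂] [Module 𝕜 V₂] [FiniteDimensional 𝕜 V] {f : V →ₗ[𝕜] V₂}
    {Q : Submodule 𝕜 V} (h : LinearMap.ker f ≤ Q) :
    finrank 𝕜 (Q.map f) + finrank 𝕜 (LinearMap.ker f) = finrank 𝕜 Q := by
  have := (f.domRestrict Q).finrank_range_add_finrank_ker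
  rwa [LinearMap.range_domRestrict, LinearMap.ker_domRestrict,
    (comapSubtypeEquivOfLe h).finrank_eq] at this

variable {E : Type*} [NormedAddCommGroup E] [InnerProductSpace ℝ E]

theorem starProjection_orthogonal_eq_zero_iff (K : Submodule ℝ E) [K.HasOrthogonalProjection]
    {v : E} : Kᗮ.starProjection v = 0 ↔ v ∈ K := by
  rw [starProjection_apply_eq_zero_iff, orthogonal_orthogonal]

theorem finrank_span_image_starProjection_add [FiniteDimensional ℝ E] (K : Submodule ℝ E)
    (A : Set E) :
    finrank ℝ (span ℝ (Kᗮ.starProjection '' A)) + finrank ℝ K = finrank ℝ ↥(span ℝ A ⊔ K) := by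
  have hker : LinearMap.ker (Kᗮ.starProjection : E →ₗ[ℝ] E) = K := by
    ext v
    exact starProjection_orthogonal_eq_zero_iff K
  have hK : K.map (Kᗮ.starProjection : E →ₗ[ℝ] E) = ⊥ := LinearMap.le_ker_iff_map.1 hker.ge
  have := finrank_map_add_finrank_ker_of_le (hker.trans_le (le_sup_right (a := span ℝ A)))
  rwa [Submodule.map_sup, hK, sup_bot_eq, ← span_image, hker] at this

end LinearAlgebra

section MinkowskiSum

variable {k V : Type*} [Ring k] [AddCommGroup V] [Module k V]

theorem vectorSpan_add {A B : Set V} (hA : A.Nonempty) (hB : B.Nonempty) :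
    vectorSpan k (A + B) = vectorSpan k A ⊔ vectorSpan k B := by
  obtain ⟨a, ha⟩ := hA
  obtain ⟨b, hb⟩ := hB
  refine le_antisymm ?_ (sup_le ?_ ?_) <;> rw [vectorSpan_def, span_le]
  · rintro _ ⟨_, ⟨x, hx, y, hy, rfl⟩, _, ⟨x', hx', y', hy', rfl⟩, rfl⟩
    change x + y - (x' + y') ∈ _
    rw [add_sub_add_comm]
    exact add_mem_sup (vsub_mem_vectorSpan k hx hx') (vsub_mem_vectorSpan k hy hy')
  · rintro _ ⟨x, hx, x', hx', rfl⟩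
    simpa using vsub_mem_vectorSpan k (Set.add_mem_add hx hb) (Set.add_mem_add hx' hb)
  · rintro _ ⟨y, hy, y', hy', rfl⟩
    simpa using vsub_mem_vectorSpan k (Set.add_mem_add ha hy) (Set.add_mem_add ha hy')

theorem vectorSpan_finsetSum {ι : Type*} (t : Finset ι) {A : ι → Set V}
    (hA : ∀ i, (A i).Nonempty) :
    vectorSpan k (∑ i ∈ t, A i) = t.sup fun i => vectorSpan k (A i) := by
  classical
  induction t using Finset.induction_on with
  | empty => exact vectorSpan_singleton k (0 : V)
  | insert i t hi ih =>
    rw [Finset.sum_insert hi, Finset.sup_insert, vectorSpan_add (hA i)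
      ⟨_, Set.finsetSum_mem_finsetSum t A _ fun j _ => (hA j).some_mem⟩, ih]

end MinkowskiSum

section SignVectors

variable {ι E : Type*} [NormedAddCommGroup E] [InnerProductSpace ℝ E]

def spanRank (W : ι → E) (S : Set ι) : ℕ := finrank ℝ (span ℝ (W '' S))

def signVector (W : ι → E) (c : E) : ι → SignType := fun i => SignType.sign ⟪c, W i⟫

def covectors (W : ι → E) : Set (ι → SignType) := Set.range (signVector W)

def zeroSet (s : ι → SignType) : Set ι := {i | s i = 0}

def genericPoints (W : ι → E) : Set E := {c | ∀ i, ⟪c, W i⟫ = 0 → W i = 0}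

/-- The regions of the arrangement of the hyperplanes `(W i)ᗮ`, recorded as sign vectors. -/
def topes (W : ι → E) : Set (ι → SignType) := signVector W '' genericPoints W

theorem spanRank_comp {κ : Type*} (W : ι → E) (f : κ → ι) (T : Set κ) :
    spanRank (W ∘ f) T = spanRank W (f '' T) := by
  rw [spanRank, spanRank, Set.image_comp]

theorem mem_orthogonal_span_image_iff {W : ι → E} {c : E} {S : Set ι} :
    c ∈ (span ℝ (W '' S))ᗮ ↔ S ⊆ zeroSet (signVector W c) := by
  rw [← span_singleton_le_iff_mem, ← isOrtho_iff_le, isOrtho_span]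
  simp [Set.subset_def, zeroSet, signVector]

theorem mem_genericPoints_of_signVector_eq {W : ι → E} {c c' : E}
    (h : signVector W c' = signVector W c) (hc : c ∈ genericPoints W) : c' ∈ genericPoints W :=
  fun i hi => hc i <| sign_eq_zero_iff.1 <| by simpa [signVector, hi, eq_comm] using congrFun h i

theorem signVector_smul_add_smul {W : ι → E} {x y : E} {a b : ℝ} (ha : 0 < a) (hb : 0 < b)
    (h : signVector W x = signVector W y) : signVector W (a • x + b • y) = signVector W x := by
  ext i
  have hi := congrFun h i
  simp only [signVector, inner_add_left, real_inner_smul_left] at hi ⊢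
  rcases lt_trichotomy ⟪x, W i⟫ 0 with hx | hx | hx
  · have hy : ⟪y, W i⟫ < 0 := sign_eq_neg_one_iff.1 (hi.symm.trans (sign_neg hx))
    rw [sign_neg hx, sign_neg (by nlinarith)]
  · have hy : ⟪y, W i⟫ = 0 := sign_eq_zero_iff.1 (hi.symm.trans (by rw [hx, sign_zero]))
    simp [hx, hy]
  · have hy : 0 < ⟪y, W i⟫ := sign_eq_one_iff.1 (hi.symm.trans (sign_pos hx))
    rw [sign_pos hx, sign_pos (by nlinarith)]

theorem eventually_signVector_eq [Finite ι] {W : ι → E} {c : E} (hc : c ∈ genericPoints W) :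
    ∀ᶠ c' in 𝓝 c, signVector W c' = signVector W c := by
  simp only [funext_iff]
  refine Filter.eventually_all.2 fun i => ?_
  by_cases hi : W i = 0
  · simp [signVector, hi]
  have hci : ⟪c, W i⟫ ≠ 0 := fun h => hi (hc i h)
  have hcont : Continuous fun c' : E => ⟪c', W i⟫ := by fun_prop
  have := ((continuousAt_sign_of_ne_zero hci).comp (x := c) hcont.continuousAt).tendsto
  rwa [nhds_discrete SignType, Filter.tendsto_pure] at this

theorem exists_pos_signVector_add_smul_eq [Finite ι] {W : ι → E} {c : E}
    (hc : c ∈ genericPoints W) (w : E) :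
    ∃ ε : ℝ, 0 < ε ∧ signVector W (c + ε • w) = signVector W c ∧
      signVector W (c - ε • w) = signVector W c := by
  have hcont : Continuous fun ε : ℝ => c + ε • w := by fun_prop
  have hlim : Filter.Tendsto (fun ε : ℝ => c + ε • w) (𝓝 0) (𝓝 c) := by
    simpa using hcont.tendsto 0
  obtain ⟨δ, hδ, hball⟩ :=
    Metric.eventually_nhds_iff.1 (hlim.eventually (eventually_signVector_eq hc))
  refine ⟨δ / 2, by positivity, hball ?_, ?_⟩
  · rw [Real.dist_eq, sub_zero, abs_of_pos (by positivity)]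
    linarith
  · rw [sub_eq_add_neg, ← neg_smul]
    exact hball (by rw [Real.dist_eq, sub_zero, abs_neg, abs_of_pos (by positivity)]; linarith)

theorem signVector_starProjection_comp (K : Submodule ℝ E) [K.HasOrthogonalProjection]
    (W : ι → E) (c : E) :
    signVector (Kᗮ.starProjection ∘ W) c = signVector W (Kᗮ.starProjection c) := by
  ext i
  simp only [signVector, Function.comp_apply, inner_starProjection_left_eq_right]

theorem mem_genericPoints_starProjection_comp_iff (K : Submodule ℝ E) [K.HasOrthogonalProjection]
    (W : ι → E) (c : E) :
    c ∈ genericPoints (Kᗮ.starProjection ∘ W) ↔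
      ∀ i, ⟪Kᗮ.starProjection c, W i⟫ = 0 → W i ∈ K := by
  simp only [genericPoints, Set.mem_ofPred_eq, Function.comp_apply,
    ← inner_starProjection_left_eq_right, starProjection_orthogonal_eq_zero_iff]

theorem topes_eq_univ_of_isEmpty [IsEmpty ι] (W : ι → E) : topes W = Set.univ :=
  Set.eq_univ_of_forall fun _ => ⟨0, fun i => isEmptyElim i, Subsingleton.elim _ _⟩

theorem ncard_covectors_eq_finsum [Finite ι] (W : ι → E) (k : ℕ) :
    {s ∈ covectors W | spanRank W (zeroSet s) = k}.ncard =
      ∑ᶠ S ∈ {S | spanRank W S = k}, {s ∈ covectors W | zeroSet s = S}.ncard := by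
  have : {s ∈ covectors W | spanRank W (zeroSet s) = k} =
      ⋃ S ∈ {S | spanRank W S = k}, {s ∈ covectors W | zeroSet s = S} := by
    ext s
    simp
  rw [this, Set.Finite.ncard_biUnion (Set.toFinite _) (fun _ _ => Set.toFinite _)]
  intro S _ S' _ hSS'
  exact Set.disjoint_left.2 fun s hs hs' => hSS' (hs.2.symm.trans hs'.2)

theorem covectors_zeroSet_eq_empty {W : ι → E} {S : Set ι} {j : ι} (hj : j ∉ S)
    (hmem : W j ∈ span ℝ (W '' S)) : {s ∈ covectors W | zeroSet s = S} = ∅ := by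
  refine Set.eq_empty_of_forall_notMem ?_
  rintro _ ⟨⟨c, rfl⟩, hS⟩
  have hc := mem_orthogonal_span_image_iff.2 hS.ge
  exact hj (hS ▸ sign_eq_zero_iff.2 (inner_left_of_mem_orthogonal hmem hc))

end SignVectors

section SpanRank

variable {ι E F : Type*} [NormedAddCommGroup E] [InnerProductSpace ℝ E] [FiniteDimensional ℝ E]
  [NormedAddCommGroup F] [InnerProductSpace ℝ F] [FiniteDimensional ℝ F]

theorem mem_span_image_iff_spanRank_eq (W : ι → E) (S : Set ι) (j : ι) :
    W j ∈ span ℝ (W '' S) ↔ spanRank W (insert j S) = spanRank W S := by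
  rw [spanRank, spanRank, Set.image_insert_eq]
  refine ⟨fun h => by rw [span_insert_eq_span h], fun h => ?_⟩
  rw [eq_of_le_of_finrank_eq (span_mono (Set.subset_insert _ _)) h.symm]
  exact subset_span (Set.mem_insert _ _)

theorem mem_span_image_iff_of_spanRank_eq {W₁ : ι → E} {W₂ : ι → F}
    (h : ∀ S, spanRank W₁ S = spanRank W₂ S) (S : Set ι) (j : ι) :
    W₁ j ∈ span ℝ (W₁ '' S) ↔ W₂ j ∈ span ℝ (W₂ '' S) := by
  rw [mem_span_image_iff_spanRank_eq, mem_span_image_iff_spanRank_eq, h, h]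

theorem eq_zero_iff_of_spanRank_eq {W₁ : ι → E} {W₂ : ι → F}
    (h : ∀ S, spanRank W₁ S = spanRank W₂ S) (j : ι) : W₁ j = 0 ↔ W₂ j = 0 := by
  simpa using mem_span_image_iff_of_spanRank_eq h ∅ j

theorem mem_span_singleton_iff_of_spanRank_eq {W₁ : ι → E} {W₂ : ι → F}
    (h : ∀ S, spanRank W₁ S = spanRank W₂ S) (i j : ι) :
    W₁ i ∈ ℝ ∙ W₁ j ↔ W₂ i ∈ ℝ ∙ W₂ j := by
  simpa using mem_span_image_iff_of_spanRank_eq h {j} i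

theorem spanRank_starProjection_comp_add (K : Submodule ℝ E) (W : ι → E) (T : Set ι) :
    spanRank (Kᗮ.starProjection ∘ W) T + finrank ℝ K = finrank ℝ ↥(span ℝ (W '' T) ⊔ K) := by
  rw [spanRank, Set.image_comp, finrank_span_image_starProjection_add]

theorem spanRank_contract_add (W : ι → E) (S T : Set ι) :
    spanRank ((span ℝ (W '' S))ᗮ.starProjection ∘ W) T + spanRank W S = spanRank W (T ∪ S) := by
  have := spanRank_starProjection_comp_add (span ℝ (W '' S)) W T
  rwa [← span_union, ← Set.image_union] at this

end SpanRank

section Topes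

variable {E : Type*} [NormedAddCommGroup E] [InnerProductSpace ℝ E] {n : ℕ}

theorem injOn_comp_castSucc {α : Type*} {X : Set (Fin (n + 1) → α)} (φ : (Fin n → α) → α)
    (h : ∀ s ∈ X, s (Fin.last n) = φ (s ∘ Fin.castSucc)) :
    Set.InjOn (· ∘ Fin.castSucc) X := by
  intro s hs t ht hst
  have hinit : Fin.init s = Fin.init t := hst
  rw [← Fin.snoc_init_self s, ← Fin.snoc_init_self t, h s hs, h t ht,
    show s ∘ Fin.castSucc = t ∘ Fin.castSucc from hst, hinit]

theorem ncard_topes_eq_of_last_determined {W : Fin (n + 1) → E}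
    (hG : genericPoints (W ∘ Fin.castSucc) ⊆ genericPoints W)
    (φ : (Fin n → SignType) → SignType)
    (hφ : ∀ c, signVector W c (Fin.last n) = φ (signVector (W ∘ Fin.castSucc) c)) :
    (topes W).ncard = (topes (W ∘ Fin.castSucc)).ncard := by
  have hG' : genericPoints W = genericPoints (W ∘ Fin.castSucc) :=
    hG.antisymm' fun c hc j => hc j.castSucc
  have himage : topes (W ∘ Fin.castSucc) = (· ∘ Fin.castSucc) '' topes W := by
    rw [topes, topes, Set.image_image, hG']
    rfl
  rw [himage, (injOn_comp_castSucc φ ?_).ncard_image]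
  rintro _ ⟨c, -, rfl⟩
  exact hφ c

theorem ncard_topes_of_last_eq_zero {W : Fin (n + 1) → E} (h : W (Fin.last n) = 0) :
    (topes W).ncard = (topes (W ∘ Fin.castSucc)).ncard :=
  ncard_topes_eq_of_last_determined
    (fun c hc i => Fin.lastCases (fun _ => h) (fun j hj => hc j hj) i) (fun _ => 0)
    (fun c => by simp [signVector, h])

theorem ncard_topes_of_parallel {W : Fin (n + 1) → E} {j : Fin n} (hj : W j.castSucc ≠ 0)
    (hpar : W j.castSucc ∈ ℝ ∙ W (Fin.last n)) :
    (topes W).ncard = (topes (W ∘ Fin.castSucc)).ncard := by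
  obtain ⟨μ, hμ⟩ := mem_span_singleton.1 hpar
  have hμ0 : μ ≠ 0 := by
    rintro rfl
    exact hj (by rw [← hμ, zero_smul])
  have hsign : ∀ c, SignType.sign ⟪c, W j.castSucc⟫ =
      SignType.sign μ * SignType.sign ⟪c, W (Fin.last n)⟫ := fun c => by
    rw [← hμ, real_inner_smul_right, sign_mul]
  refine ncard_topes_eq_of_last_determined (fun c hc i hi => ?_)
    (fun t => SignType.sign μ * t j) (fun c => ?_)
  · induction i using Fin.lastCases with
    | last => exact absurd (hc j (by rw [Function.comp_apply, ← hμ, real_inner_smul_right, hi,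
        mul_zero])) hj
    | cast i => exact hc i hi
  · change SignType.sign _ = SignType.sign μ * SignType.sign ⟪c, W j.castSucc⟫
    rw [hsign, ← mul_assoc, ← sign_mul, sign_pos (mul_self_pos.2 hμ0), one_mul]

variable (W : Fin (n + 1) → E)

def sideTopes (σ : SignType) : Set (Fin n → SignType) :=
  signVector (W ∘ Fin.castSucc) ''
    {c ∈ genericPoints (W ∘ Fin.castSucc) | SignType.sign ⟪c, W (Fin.last n)⟫ = σ}

theorem ncard_topes_eq_sideTopes_add (hw : W (Fin.last n) ≠ 0) :
    (topes W).ncard = (sideTopes W 1).ncard + (sideTopes W (-1)).ncard := by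
  set X : SignType → Set E := fun σ =>
    {c ∈ genericPoints (W ∘ Fin.castSucc) | SignType.sign ⟪c, W (Fin.last n)⟫ = σ}
  have hG : genericPoints W = X 1 ∪ X (-1) := by
    ext c
    simp only [genericPoints, X, Fin.forall_fin_succ', hw, imp_false, Set.mem_union,
      Set.mem_ofPred_eq, Function.comp_apply, ← and_or_left]
    rcases lt_trichotomy ⟪c, W (Fin.last n)⟫ 0 with h | h | h
    · simp [h, h.ne]
    · simp [h]
    · simp [h, h.ne']
  have hcard : ∀ σ, (signVector W '' X σ).ncard = (sideTopes W σ).ncard := fun σ => by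
    rw [sideTopes, show signVector (W ∘ Fin.castSucc) = (· ∘ Fin.castSucc) ∘ signVector W from rfl,
      Set.image_comp, (injOn_comp_castSucc (fun _ => σ) _).ncard_image]
    rintro _ ⟨c, hc, rfl⟩
    exact hc.2
  have hdisj : Disjoint (signVector W '' X 1) (signVector W '' X (-1)) := by
    rw [Set.disjoint_left]
    rintro _ ⟨c, hc, rfl⟩ ⟨c', hc', h⟩
    have := congrFun h (Fin.last n)
    simp only [signVector] at this
    rw [hc.2, hc'.2] at this
    exact absurd this (by decide)
  rw [topes, hG, Set.image_union, Set.ncard_union_eq hdisj, hcard, hcard]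

theorem sideTopes_union (hw : W (Fin.last n) ≠ 0) :
    sideTopes W 1 ∪ sideTopes W (-1) = topes (W ∘ Fin.castSucc) := by
  refine Set.union_subset (Set.image_mono (Set.sep_subset _ _))
    (Set.image_mono (Set.sep_subset _ _)) |>.antisymm ?_
  rintro _ ⟨c, hc, rfl⟩
  by_cases hneg : ⟪c, W (Fin.last n)⟫ < 0
  · exact Or.inr ⟨c, ⟨hc, sign_neg hneg⟩, rfl⟩
  obtain ⟨ε, hε, hplus, -⟩ := exists_pos_signVector_add_smul_eq hc (W (Fin.last n))
  refine Or.inl ⟨_, ⟨mem_genericPoints_of_signVector_eq hplus hc, sign_pos ?_⟩, hplus⟩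
  rw [inner_add_left, real_inner_smul_left]
  have := real_inner_self_pos.2 hw
  nlinarith

/-- A region of the deletion meets both sides of `(W (Fin.last n))ᗮ` exactly when it meets the
hyperplane itself, i.e. when it contains a region of the contraction. -/
theorem sideTopes_inter [FiniteDimensional ℝ E] (hw : W (Fin.last n) ≠ 0)
    (hpar : ∀ j : Fin n, W j.castSucc ∈ ℝ ∙ W (Fin.last n) → W j.castSucc = 0) :
    sideTopes W 1 ∩ sideTopes W (-1) =
      topes ((ℝ ∙ W (Fin.last n))ᗮ.starProjection ∘ W ∘ Fin.castSucc) := by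
  set w := W (Fin.last n)
  set K := ℝ ∙ w
  apply Set.Subset.antisymm
  · rintro _ ⟨⟨p, ⟨hp, hpw⟩, rfl⟩, ⟨q, ⟨-, hqw⟩, hqp⟩⟩
    set c := (-⟪q, w⟫) • p + ⟪p, w⟫ • q
    have hc : signVector (W ∘ Fin.castSucc) c = signVector (W ∘ Fin.castSucc) p :=
      signVector_smul_add_smul (by simpa using sign_eq_neg_one_iff.1 hqw)
        (sign_eq_one_iff.1 hpw) hqp.symm
    have hcK : Kᗮ.starProjection c = c := by
      rw [starProjection_eq_self_iff, mem_orthogonal_singleton_iff_inner_right]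
      simp only [c, inner_add_right, real_inner_smul_right, real_inner_comm w]
      ring
    refine ⟨c, (mem_genericPoints_starProjection_comp_iff _ _ _).2 fun j hj => ?_, ?_⟩
    · rw [hcK] at hj
      rw [mem_genericPoints_of_signVector_eq hc hp j hj]
      exact zero_mem _
    · rw [signVector_starProjection_comp, hcK, hc]
  · rintro _ ⟨c, hc, rfl⟩
    rw [mem_genericPoints_starProjection_comp_iff] at hc
    set c₀ := Kᗮ.starProjection c
    have hc₀ : c₀ ∈ genericPoints (W ∘ Fin.castSucc) := fun j hj => hpar j (hc j hj)
    have hc₀w : ⟪c₀, w⟫ = 0 :=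
      mem_orthogonal_singleton_iff_inner_left.1 (starProjection_apply_mem Kᗮ c)
    have hww := real_inner_self_pos.2 hw
    obtain ⟨ε, hε, hplus, hminus⟩ := exists_pos_signVector_add_smul_eq hc₀ w
    rw [signVector_starProjection_comp]
    refine ⟨⟨_, ⟨mem_genericPoints_of_signVector_eq hplus hc₀, sign_pos ?_⟩, hplus⟩,
      ⟨_, ⟨mem_genericPoints_of_signVector_eq hminus hc₀, sign_neg ?_⟩, hminus⟩⟩
    · rw [inner_add_left, real_inner_smul_left, hc₀w]
      positivity
    · rw [inner_sub_left, real_inner_smul_left, hc₀w]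
      nlinarith

theorem ncard_topes_eq_add [FiniteDimensional ℝ E] (hw : W (Fin.last n) ≠ 0)
    (hpar : ∀ j : Fin n, W j.castSucc ∈ ℝ ∙ W (Fin.last n) → W j.castSucc = 0) :
    (topes W).ncard = (topes (W ∘ Fin.castSucc)).ncard +
      (topes ((ℝ ∙ W (Fin.last n))ᗮ.starProjection ∘ W ∘ Fin.castSucc)).ncard := by
  rw [ncard_topes_eq_sideTopes_add W hw, ← Set.ncard_union_add_ncard_inter _ _ (Set.toFinite _)
    (Set.toFinite _), sideTopes_union W hw, sideTopes_inter W hw hpar]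

theorem spanRank_contract_last_add_one [FiniteDimensional ℝ E] (hw : W (Fin.last n) ≠ 0)
    (T : Set (Fin n)) :
    spanRank ((ℝ ∙ W (Fin.last n))ᗮ.starProjection ∘ W ∘ Fin.castSucc) T + 1 =
      spanRank W (insert (Fin.last n) (Fin.castSucc '' T)) := by
  have := spanRank_starProjection_comp_add (ℝ ∙ W (Fin.last n)) (W ∘ Fin.castSucc) T
  rw [finrank_span_singleton hw] at this
  rw [this, spanRank, Set.image_insert_eq, span_insert, sup_comm, Set.image_comp]

end Topes

section MatroidInvariance

variable {E F : Type*} [NormedAddCommGroup E] [InnerProductSpace ℝ E] [FiniteDimensional ℝ E]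
  [NormedAddCommGroup F] [InnerProductSpace ℝ F] [FiniteDimensional ℝ F]

theorem ncard_topes_eq_of_spanRank_eq : ∀ {m : ℕ} {W₁ : Fin m → E} {W₂ : Fin m → F},
    (∀ S, spanRank W₁ S = spanRank W₂ S) → (topes W₁).ncard = (topes W₂).ncard
  | 0, W₁, W₂, _ => by rw [topes_eq_univ_of_isEmpty, topes_eq_univ_of_isEmpty]
  | n + 1, W₁, W₂, h => by
    have hdel : (topes (W₁ ∘ Fin.castSucc)).ncard = (topes (W₂ ∘ Fin.castSucc)).ncard :=
      ncard_topes_eq_of_spanRank_eq fun T => by rw [spanRank_comp, spanRank_comp, h]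
    by_cases hloop : W₁ (Fin.last n) = 0
    · rw [ncard_topes_of_last_eq_zero hloop,
        ncard_topes_of_last_eq_zero ((eq_zero_iff_of_spanRank_eq h _).1 hloop), hdel]
    by_cases hpar : ∃ j : Fin n, W₁ j.castSucc ∈ ℝ ∙ W₁ (Fin.last n) ∧ W₁ j.castSucc ≠ 0
    · obtain ⟨j, hjw, hj⟩ := hpar
      rw [ncard_topes_of_parallel hj hjw, ncard_topes_of_parallel
        ((eq_zero_iff_of_spanRank_eq h _).not.1 hj)
        ((mem_span_singleton_iff_of_spanRank_eq h _ _).1 hjw), hdel]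
    push Not at hpar
    have hw₂ := (eq_zero_iff_of_spanRank_eq h _).not.1 hloop
    have hpar₂ : ∀ j : Fin n, W₂ j.castSucc ∈ ℝ ∙ W₂ (Fin.last n) → W₂ j.castSucc = 0 :=
      fun j hj => (eq_zero_iff_of_spanRank_eq h _).1
        (hpar j ((mem_span_singleton_iff_of_spanRank_eq h _ _).2 hj))
    rw [ncard_topes_eq_add W₁ hloop hpar, ncard_topes_eq_add W₂ hw₂ hpar₂, hdel,
      ncard_topes_eq_of_spanRank_eq fun T => ?_]
    have h₁ := spanRank_contract_last_add_one W₁ hloop T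
    have h₂ := spanRank_contract_last_add_one W₂ hw₂ T
    rw [h] at h₁
    omega

theorem covectors_zeroSet_eq_topes {ι : Type*} {W : ι → E} {S : Set ι}
    (hS : ∀ j, W j ∈ span ℝ (W '' S) → j ∈ S) :
    {s ∈ covectors W | zeroSet s = S} = topes ((span ℝ (W '' S))ᗮ.starProjection ∘ W) := by
  set K := span ℝ (W '' S)
  apply Set.Subset.antisymm
  · rintro _ ⟨⟨c, rfl⟩, hcS⟩
    have hc : Kᗮ.starProjection c = c :=
      starProjection_eq_self_iff.2 (mem_orthogonal_span_image_iff.2 hcS.ge)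
    refine ⟨c, (mem_genericPoints_starProjection_comp_iff _ _ _).2 fun i hi => ?_, ?_⟩
    · rw [hc] at hi
      exact subset_span ⟨i, hcS.le (sign_eq_zero_iff.2 hi), rfl⟩
    · rw [signVector_starProjection_comp, hc]
  · rintro _ ⟨c, hc, rfl⟩
    rw [mem_genericPoints_starProjection_comp_iff] at hc
    refine ⟨⟨Kᗮ.starProjection c, (signVector_starProjection_comp _ _ _).symm⟩, ?_⟩
    ext i
    rw [signVector_starProjection_comp]
    simp only [zeroSet, Set.mem_ofPred_eq, signVector, sign_eq_zero_iff]
    exact ⟨fun hi => hS i (hc i hi), fun hi => inner_left_of_mem_orthogonal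
      (subset_span (Set.mem_image_of_mem W hi)) (starProjection_apply_mem _ c)⟩

theorem ncard_covectors_zeroSet_eq_of_spanRank_eq {m : ℕ} {W₁ : Fin m → E} {W₂ : Fin m → F}
    (h : ∀ S, spanRank W₁ S = spanRank W₂ S) (S : Set (Fin m)) :
    {s ∈ covectors W₁ | zeroSet s = S}.ncard = {s ∈ covectors W₂ | zeroSet s = S}.ncard := by
  by_cases hflat : ∀ j, W₁ j ∈ span ℝ (W₁ '' S) → j ∈ S
  · have hflat₂ : ∀ j, W₂ j ∈ span ℝ (W₂ '' S) → j ∈ S :=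
      fun j hj => hflat j ((mem_span_image_iff_of_spanRank_eq h S j).2 hj)
    rw [covectors_zeroSet_eq_topes hflat, covectors_zeroSet_eq_topes hflat₂]
    refine ncard_topes_eq_of_spanRank_eq fun T => ?_
    have h₁ := spanRank_contract_add W₁ S T
    have h₂ := spanRank_contract_add W₂ S T
    rw [h, h] at h₁
    omega
  · push Not at hflat
    obtain ⟨j, hj, hjS⟩ := hflat
    rw [covectors_zeroSet_eq_empty hjS hj,
      covectors_zeroSet_eq_empty hjS ((mem_span_image_iff_of_spanRank_eq h S j).1 hj)]

theorem ncard_covectors_eq_of_spanRank_eq {m : ℕ} {W₁ : Fin m → E} {W₂ : Fin m → F}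
    (h : ∀ S, spanRank W₁ S = spanRank W₂ S) (k : ℕ) :
    {s ∈ covectors W₁ | spanRank W₁ (zeroSet s) = k}.ncard =
      {s ∈ covectors W₂ | spanRank W₂ (zeroSet s) = k}.ncard := by
  rw [ncard_covectors_eq_finsum, ncard_covectors_eq_finsum, funext h]
  exact finsum_mem_congr rfl fun S _ => ncard_covectors_zeroSet_eq_of_spanRank_eq h S

end MatroidInvariance

theorem sign_eq_sign_of_mul_eq_abs {a b : ℝ} (h₁ : (SignType.sign b : ℝ) * a = |a|)
    (h₂ : (SignType.sign a : ℝ) * b = |b|) : SignType.sign a = SignType.sign b := by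
  rcases lt_trichotomy a 0 with ha | ha | ha <;> rcases lt_trichotomy b 0 with hb | hb | hb <;>
    simp [ha, hb, sign_neg, sign_pos, abs_of_neg, abs_of_pos] at h₁ h₂ ⊢ <;> linarith

section Segments

variable {E : Type*} [NormedAddCommGroup E] [InnerProductSpace ℝ E]

/-- The face of `[-w, w]` on which `⟪c, ·⟫` is maximal, for any `c` with `sign ⟪c, w⟫ = σ`. -/
def segmentFace (w : E) (σ : SignType) : Set E :=
  if σ = 0 then segment ℝ (-w) w else {(σ : ℝ) • w}

theorem mem_segment_neg_iff {w y : E} : y ∈ segment ℝ (-w) w ↔ ∃ t : ℝ, |t| ≤ 1 ∧ y = t • w := by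
  constructor
  · rintro ⟨a, b, ha, hb, hab, rfl⟩
    refine ⟨b - a, abs_le.2 ⟨by linarith, by linarith⟩, ?_⟩
    rw [smul_neg, sub_smul]
    abel
  · rintro ⟨t, ht, rfl⟩
    obtain ⟨ht₁, ht₂⟩ := abs_le.1 ht
    refine ⟨(1 - t) / 2, (1 + t) / 2, by linarith, by linarith, by ring, ?_⟩
    rw [smul_neg, ← neg_smul, ← add_smul]
    congr 1
    ring

theorem inner_le_abs_of_mem_segment {c w y : E} (hy : y ∈ segment ℝ (-w) w) :
    ⟪c, y⟫ ≤ |⟪c, w⟫| := by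
  obtain ⟨t, ht, rfl⟩ := mem_segment_neg_iff.1 hy
  rw [real_inner_smul_right]
  calc t * ⟪c, w⟫ ≤ |t| * |⟪c, w⟫| := by rw [← abs_mul]; exact le_abs_self _
    _ ≤ |⟪c, w⟫| := mul_le_of_le_one_left (abs_nonneg _) ht

theorem segmentFace_subset (w : E) (σ : SignType) : segmentFace w σ ⊆ segment ℝ (-w) w := by
  unfold segmentFace
  split_ifs
  · exact le_rfl
  · rw [Set.singleton_subset_iff, mem_segment_neg_iff]
    exact ⟨σ, by cases σ <;> simp, rfl⟩

theorem smul_mem_segmentFace (w : E) (σ : SignType) : (σ : ℝ) • w ∈ segmentFace w σ := by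
  unfold segmentFace
  split_ifs with h
  · exact mem_segment_neg_iff.2 ⟨σ, by simp [h], rfl⟩
  · rfl

theorem mem_segmentFace_iff {c w y : E} (hy : y ∈ segment ℝ (-w) w) :
    y ∈ segmentFace w (SignType.sign ⟪c, w⟫) ↔ ⟪c, y⟫ = |⟪c, w⟫| := by
  obtain ⟨t, -, rfl⟩ := mem_segment_neg_iff.1 hy
  unfold segmentFace
  split_ifs with h
  · simp [sign_eq_zero_iff.1 h, hy, real_inner_smul_right]
  · have ha : ⟪c, w⟫ ≠ 0 := fun h' => h (by rw [h', sign_zero])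
    rw [Set.mem_singleton_iff, real_inner_smul_right, ← sign_mul_self]
    refine ⟨fun h' => ?_, fun h' => by rw [mul_right_cancel₀ ha h']⟩
    simpa [real_inner_smul_right] using congrArg (inner ℝ c) h'

theorem vectorSpan_segmentFace (w : E) (σ : SignType) :
    vectorSpan ℝ (segmentFace w σ) = if σ = 0 then ℝ ∙ w else ⊥ := by
  unfold segmentFace
  split_ifs
  · rw [vectorSpan_segment, vsub_eq_sub, sub_neg_eq_add, ← two_smul ℝ,
      span_singleton_smul_eq (isUnit_iff_ne_zero.2 two_ne_zero)]
  · exact vectorSpan_singleton _ _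

end Segments

section Faces

variable {ι E : Type*} [Fintype ι] [NormedAddCommGroup E] [InnerProductSpace ℝ E]

def zonotope (W : ι → E) : Set E := ∑ i, segment ℝ (-W i) (W i)

def face (W : ι → E) (s : ι → SignType) : Set E := ∑ i, segmentFace (W i) (s i)

theorem sum_smul_mem_face (W : ι → E) (s : ι → SignType) : ∑ i, (s i : ℝ) • W i ∈ face W s :=
  Set.finsetSum_mem_finsetSum _ _ _ fun i _ => smul_mem_segmentFace (W i) (s i)

theorem face_subset_zonotope (W : ι → E) (s : ι → SignType) : face W s ⊆ zonotope W :=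
  Set.finsetSum_subset_finsetSum _ _ _ fun _ _ => segmentFace_subset _ _

theorem inner_le_of_mem_zonotope {W : ι → E} {x : E} (hx : x ∈ zonotope W) (c : E) :
    ⟪c, x⟫ ≤ ∑ i, |⟪c, W i⟫| := by
  obtain ⟨g, hg, rfl⟩ := (Set.mem_fintype_sum _ _).1 hx
  rw [inner_sum]
  exact Finset.sum_le_sum fun i _ => inner_le_abs_of_mem_segment (hg i)

theorem mem_face_signVector_iff {W : ι → E} {c x : E} :
    x ∈ face W (signVector W c) ↔ x ∈ zonotope W ∧ ⟪c, x⟫ = ∑ i, |⟪c, W i⟫| := by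
  refine ⟨fun hx => ⟨face_subset_zonotope W _ hx, ?_⟩, fun ⟨hx, hxc⟩ => ?_⟩
  · obtain ⟨g, hg, rfl⟩ := (Set.mem_fintype_sum _ _).1 hx
    rw [inner_sum]
    exact Finset.sum_congr rfl fun i _ =>
      (mem_segmentFace_iff (segmentFace_subset _ _ (hg i))).1 (hg i)
  · obtain ⟨g, hg, rfl⟩ := (Set.mem_fintype_sum _ _).1 hx
    rw [inner_sum] at hxc
    have hmax := (Finset.sum_eq_sum_iff_of_le fun i _ => inner_le_abs_of_mem_segment (hg i)).1 hxc
    exact (Set.mem_fintype_sum _ _).2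
      ⟨g, fun i => (mem_segmentFace_iff (hg i)).2 (hmax i (Finset.mem_univ i)), rfl⟩

theorem toExposed_zonotope (W : ι → E) (c : E) :
    (innerSL ℝ c).toExposed (zonotope W) = face W (signVector W c) := by
  ext x
  simp only [ContinuousLinearMap.toExposed, innerSL_apply_apply, Set.mem_ofPred_eq,
    mem_face_signVector_iff]
  refine and_congr_right fun hx => ⟨fun h => (inner_le_of_mem_zonotope hx c).antisymm ?_,
    fun h y hy => h ▸ inner_le_of_mem_zonotope hy c⟩
  have hp := mem_face_signVector_iff.1 (sum_smul_mem_face W (signVector W c))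
  exact hp.2 ▸ h _ hp.1

theorem isFaceOf_zonotope_iff [CompleteSpace E] {W : ι → E} {G : Set E} :
    IsFaceOf (zonotope W) G ↔ ∃ c, G = face W (signVector W c) := by
  refine ⟨fun ⟨hne, hexp⟩ => ?_, ?_⟩
  · obtain ⟨l, rfl⟩ := hexp hne
    refine ⟨(InnerProductSpace.toDual ℝ E).symm l, ?_⟩
    have hl : innerSL ℝ ((InnerProductSpace.toDual ℝ E).symm l) = l := by
      ext x
      simp [InnerProductSpace.toDual_symm_apply]
    rw [← toExposed_zonotope, hl]
    rfl
  · rintro ⟨c, rfl⟩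
    exact ⟨⟨_, sum_smul_mem_face W _⟩,
      toExposed_zonotope W c ▸ ContinuousLinearMap.toExposed.isExposed⟩

/-- The point `∑ i, s' i • W i` lies in both faces, so each of its summands maximises `⟪c, ·⟫`
on its segment. -/
theorem coe_signVector_mul_eq_abs_of_face_eq {W : ι → E} {c c' : E}
    (h : face W (signVector W c') = face W (signVector W c)) (i : ι) :
    (signVector W c' i : ℝ) * ⟪c, W i⟫ = |⟪c, W i⟫| := by
  have hp := (mem_face_signVector_iff.1 (h ▸ sum_smul_mem_face W (signVector W c'))).2
  simp only [inner_sum, real_inner_smul_right] at hp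
  refine (Finset.sum_eq_sum_iff_of_le fun j _ => ?_).1 hp i (Finset.mem_univ i)
  rw [← real_inner_smul_right]
  exact inner_le_abs_of_mem_segment (segmentFace_subset _ _ (smul_mem_segmentFace _ _))

theorem signVector_eq_of_face_eq {W : ι → E} {c c' : E}
    (h : face W (signVector W c) = face W (signVector W c')) : signVector W c = signVector W c' :=
  funext fun i => sign_eq_sign_of_mul_eq_abs (coe_signVector_mul_eq_abs_of_face_eq h.symm i)
    (coe_signVector_mul_eq_abs_of_face_eq h i)

theorem vectorSpan_face (W : ι → E) (s : ι → SignType) :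
    vectorSpan ℝ (face W s) = span ℝ (W '' zeroSet s) := by
  rw [face, vectorSpan_finsetSum _ fun i => ⟨_, smul_mem_segmentFace (W i) (s i)⟩]
  simp_rw [vectorSpan_segmentFace]
  refine le_antisymm (Finset.sup_le fun i _ => ?_) (span_le.2 ?_)
  · split_ifs with h
    · exact (span_singleton_le_iff_mem _ _).2 (subset_span ⟨i, h, rfl⟩)
    · exact bot_le
  · rintro _ ⟨i, hi, rfl⟩
    refine Finset.le_sup (f := fun i => if s i = 0 then ℝ ∙ W i else ⊥) (Finset.mem_univ i) ?_
    simp only [if_pos (show s i = 0 from hi), mem_span_singleton_self]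

theorem ncard_faces_zonotope [CompleteSpace E] (W : ι → E) (k : ℕ) :
    {G | IsFaceOf (zonotope W) G ∧ sdim G = k}.ncard =
      {s ∈ covectors W | spanRank W (zeroSet s) = k}.ncard := by
  have hsdim : ∀ s, sdim (face W s) = spanRank W (zeroSet s) := fun s => by
    rw [sdim, vectorSpan_face, spanRank]
  have himage : {G | IsFaceOf (zonotope W) G ∧ sdim G = k} =
      face W '' {s ∈ covectors W | spanRank W (zeroSet s) = k} := by
    ext G
    simp only [isFaceOf_zonotope_iff, Set.mem_ofPred_eq, Set.mem_image]
    constructor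
    · rintro ⟨⟨c, rfl⟩, hk⟩
      exact ⟨_, ⟨⟨c, rfl⟩, hsdim _ ▸ hk⟩, rfl⟩
    · rintro ⟨_, ⟨⟨c, rfl⟩, hk⟩, rfl⟩
      exact ⟨⟨c, rfl⟩, hsdim _ ▸ hk⟩
  rw [himage, Set.InjOn.ncard_image]
  rintro _ ⟨⟨c, rfl⟩, -⟩ _ ⟨⟨c', rfl⟩, -⟩ h
  exact signVector_eq_of_face_eq h

theorem image_zonotope {F : Type*} [NormedAddCommGroup F] [InnerProductSpace ℝ F]
    (f : E →ₗ[ℝ] F) (W : ι → E) : f '' zonotope W = zonotope (f ∘ W) := by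
  simp only [zonotope, Set.image_finsetSum]
  refine Finset.sum_congr rfl fun i _ => ?_
  rw [← f.coe_toAffineMap, image_segment, f.coe_toAffineMap, map_neg, Function.comp_apply]

end Faces

section Projection

variable {ι E : Type*} [NormedAddCommGroup E] [InnerProductSpace ℝ E]

theorem projPerp_eq_starProjection {u : E} (hu : ‖u‖ = 1) :
    projPerp u = (ℝ ∙ u)ᗮ.starProjection := by
  ext x
  rw [projPerp, starProjection_orthogonal_val, starProjection_unit_singleton ℝ hu]

theorem image_projPerp_zonotope [Fintype ι] {u : E} (hu : ‖u‖ = 1) (W : ι → E) :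
    projPerp u '' zonotope W = zonotope (projPerp u ∘ W) := by
  rw [projPerp_eq_starProjection hu]
  exact image_zonotope (ℝ ∙ u)ᗮ.starProjection.toLinearMap W

variable [FiniteDimensional ℝ E]

theorem span_image_eq_top_of_mem [Fintype ι] {W : ι → E} (hspan : span ℝ (Set.range W) = ⊤)
    {u : E} (hu : ∀ G, IsFaceOf (zonotope W) G → G ≠ zonotope W → u ∉ vectorSpan ℝ G)
    {S : Set ι} (huS : u ∈ span ℝ (W '' S)) : span ℝ (W '' S) = ⊤ := by
  by_contra hne
  obtain ⟨c, hcS, hc0⟩ := exists_mem_ne_zero_of_ne_bot ((orthogonal_eq_bot_iff).not.2 hne)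
  refine hu _ (isFaceOf_zonotope_iff.2 ⟨c, rfl⟩) (fun h => hc0 ?_) ?_
  · have hZ : zonotope W = face W (signVector W 0) := by
      simp [zonotope, face, signVector, segmentFace]
    have h0 := signVector_eq_of_face_eq (h.trans hZ)
    have : c ∈ (span ℝ (W '' Set.univ))ᗮ :=
      mem_orthogonal_span_image_iff.2 fun i _ => by
        change signVector W c i = 0
        rw [h0]
        simp [signVector]
    rwa [Set.image_univ, hspan, top_orthogonal_eq_bot, mem_bot] at this
  · rw [vectorSpan_face]
    exact span_mono (Set.image_mono (mem_orthogonal_span_image_iff.1 hcS)) huS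

theorem spanRank_projPerp_comp {W : ι → E} {u : E} (hu : ‖u‖ = 1)
    (hgen : ∀ S, u ∈ span ℝ (W '' S) → span ℝ (W '' S) = ⊤) (S : Set ι) :
    spanRank (projPerp u ∘ W) S =
      if span ℝ (W '' S) = ⊤ then finrank ℝ E - 1 else spanRank W S := by
  have h := spanRank_starProjection_comp_add (ℝ ∙ u) W S
  rw [finrank_span_singleton (norm_ne_zero_iff.1 (hu ▸ one_ne_zero)),
    ← projPerp_eq_starProjection hu] at h
  split_ifs with htop
  · rw [htop, top_sup_eq, finrank_top] at h
    omega
  · rw [finrank_sup_span_singleton fun hmem => htop (hgen S hmem)] at h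
    exact Nat.add_right_cancel h

end Projection

end Zonotope

/-- Shephard.  Every zonotope (here: whose generators span `ℝ^d`)
is equiprojective. -/
theorem zonotopes_are_equiprojective {d m : ℕ} (eta : Fin m → Euc d)
    (hspan : Submodule.span ℝ (Set.range eta) = (⊤ : Submodule ℝ (Euc d)))
    (Z : Set (Euc d)) (hZ : Z = ∑ i : Fin m, segment ℝ (-eta i) (eta i)) :
    Equiprojective Z := by
  change Z = Zonotope.zonotope eta at hZ
  subst hZ
  intro u u' hu hu' hgen hgen' k
  rw [Zonotope.image_projPerp_zonotope hu, Zonotope.image_projPerp_zonotope hu',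
    Zonotope.ncard_faces_zonotope, Zonotope.ncard_faces_zonotope]
  refine Zonotope.ncard_covectors_eq_of_spanRank_eq (fun S => ?_) k
  rw [Zonotope.spanRank_projPerp_comp hu fun _ => Zonotope.span_image_eq_top_of_mem hspan hgen,
    Zonotope.spanRank_projPerp_comp hu' fun _ => Zonotope.span_image_eq_top_of_mem hspan hgen']
end
end

section
/- Let 𝒜 = {H_1,…,H_m} be an essential central hyperplane arrangement in ℝ^d (d ≥ 2) with nonzero normal vectors η_1,…,η_m, and let u be a unit vector such that for every subset S ⊆ {η_1,…,η_m} with dim span(S) ≤ d−1, the orthogonal projections of the vectors of S onto u^⊥ span a subspace of the same dimension as span(S). Let 𝒜′ be the arrangement in u^⊥ whose hyperplanes have normals the projections of η_1,…,η_m. Then the intersection poset L(𝒜′) is isomorphic, as a partially ordered set, to L(𝒜) with its coatoms (the elements of dimension 1, i.e., codimension d−1) removed. -/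
/-!
Formalization of statements from "Projection Volumes of Hyperplane Arrangements"
by Klivans and Swartz.
-/

open scoped RealInnerProductSpace Pointwise
open MeasureTheory Metric Set

noncomputable section

attribute [local instance] Classical.decEq Classical.propDecidable

variable {E : Type*} [NormedAddCommGroup E] [InnerProductSpace ℝ E] [FiniteDimensional ℝ E]
  [MeasurableSpace E] [BorelSpace E]

/-!
Intersections of hyperplanes are orthogonal complements of spans of normals, so it is enough to
compare the flats `span (η '' S)` of `𝒜` with the flats `span (insert u (η '' S))` of `𝒜'`:
projecting the normals onto `u^⊥` does not change `span (insert u ·)`. Genericity means that `u`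
lies in no proper flat of `𝒜`. Hence adding `u` to a hyperplane flat gives the whole space (so the
coatoms of `L(𝒜)` all collapse to `{0}`), while adding `u` to any other flat creates no new
normal `η_j`, by Steinitz exchange. Thus `x ↦ x ∩ u^⊥` is an order embedding of `L(𝒜)` minus its
coatoms onto `L(𝒜')`.
-/

open Submodule

section Projection

variable {V : Type*} [NormedAddCommGroup V] [InnerProductSpace ℝ V]

lemma span_insert_image_projPerp (u : V) (A : Set V) :
    span ℝ (insert u (projPerp u '' A)) = span ℝ (insert u A) := by
  have key : ∀ x, x - projPerp u x = ⟪u, x⟫ • u := fun x => by simp [projPerp]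
  refine le_antisymm (span_le.2 ?_) (span_le.2 ?_) <;>
    refine Set.insert_subset (subset_span (mem_insert _ _)) ?_
  · rintro _ ⟨x, hx, rfl⟩
    have := sub_mem (subset_span (mem_insert_of_mem u hx))
      (smul_mem _ ⟪u, x⟫ (subset_span (mem_insert u A)))
    rwa [← key, sub_sub_cancel] at this
  · intro x hx
    have := add_mem (subset_span (mem_insert_of_mem u (mem_image_of_mem (projPerp u) hx)))
      (smul_mem _ ⟪u, x⟫ (subset_span (mem_insert u (projPerp u '' A))))
    rwa [← key, add_sub_cancel] at this

lemma finset_inf_orthogonal_span_singleton {ι : Type*} (v : ι → V) (s : Finset ι) :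
    s.inf (fun i => (span ℝ {v i})ᗮ) = (span ℝ (v '' s))ᗮ := by
  induction s using Finset.induction_on with
  | empty => simp
  | insert i s _ ih =>
    rw [Finset.inf_insert, ih, inf_orthogonal, Finset.coe_insert, Set.image_insert_eq, span_insert]

lemma orthogonal_inf_orthogonal_span_singleton (A : Set V) (u : V) :
    (span ℝ A)ᗮ ⊓ (span ℝ {u})ᗮ = (span ℝ (insert u A))ᗮ := by
  rw [inf_orthogonal, sup_comm, span_insert]

lemma projPerp_mem_orthogonal {u : V} (hu : ‖u‖ = 1) (x : V) :
    projPerp u x ∈ (span ℝ {u})ᗮ := by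
  rw [mem_orthogonal_singleton_iff_inner_right, projPerp, inner_sub_right, inner_smul_right,
    real_inner_self_eq_norm_sq, hu]
  ring

variable [FiniteDimensional ℝ V]

lemma finrank_orthogonal_eq_one_iff (K : Submodule ℝ V) :
    Module.finrank ℝ Kᗮ = 1 ↔ Module.finrank ℝ K + 1 = Module.finrank ℝ V := by
  have := K.finrank_add_finrank_orthogonal
  omega

/-- Otherwise `span A = span (projPerp u '' A) ⊔ ℝ ∙ u`, with `u` outside the first summand. -/
lemma notMem_span_of_finrank_span_image_projPerp {u : V} (hu : ‖u‖ = 1) {A : Set V}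
    (h : Module.finrank ℝ (span ℝ (projPerp u '' A)) = Module.finrank ℝ (span ℝ A)) :
    u ∉ span ℝ A := by
  intro huA
  have hu' : u ∉ span ℝ (projPerp u '' A) := fun hmem => by
    have := span_le.2 (by rintro _ ⟨x, -, rfl⟩; exact projPerp_mem_orthogonal hu x) hmem
    rw [mem_orthogonal_singleton_iff_inner_right, real_inner_self_eq_norm_sq, hu] at this
    norm_num at this
  have hspan : span ℝ A = span ℝ (projPerp u '' A) ⊔ span ℝ {u} := by
    rw [sup_comm, ← span_insert, span_insert_image_projPerp, span_insert,
      sup_eq_right.2 ((span_singleton_le_iff_mem _ _).2 huA)]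
  have := finrank_sup_span_singleton hu'
  rw [← hspan] at this
  omega

end Projection

section Flats

variable {V : Type*} [NormedAddCommGroup V] [InnerProductSpace ℝ V] {ι : Type*}

def AvoidsProperSpans (v : ι → V) (u : V) : Prop :=
  ∀ s : Set ι, span ℝ (v '' s) ≠ ⊤ → u ∉ span ℝ (v '' s)

variable [FiniteDimensional ℝ V]

namespace AvoidsProperSpans

variable {v : ι → V} {u : V}

/-- Steinitz exchange: if `v j` were a new vector of `span (insert u (v '' s))`, then `u` would
lie in `span (v '' insert j s)`, a proper subspace because `s` does not span a hyperplane. -/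
lemma mem_span_of_mem_span_insert (hgen : AvoidsProperSpans v u) {s : Set ι}
    (hs : Module.finrank ℝ (span ℝ (v '' s)) + 1 ≠ Module.finrank ℝ V) {j : ι}
    (hj : v j ∈ span ℝ (insert u (v '' s))) : v j ∈ span ℝ (v '' s) := by
  by_cases htop : span ℝ (v '' s) = ⊤
  · rw [htop]; exact mem_top
  by_contra hjs
  have hlt := finrank_lt htop
  have hne : span ℝ (v '' insert j s) ≠ ⊤ := by
    intro h
    have := finrank_sup_span_singleton hjs
    rw [sup_comm, ← span_insert, ← Set.image_insert_eq, h, finrank_top] at this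
    omega
  exact hgen _ hne (by rw [Set.image_insert_eq]; exact mem_span_insert_exchange hj hjs)

lemma span_le_span_of_le_span_insert (hgen : AvoidsProperSpans v u) {s t : Set ι}
    (hs : Module.finrank ℝ (span ℝ (v '' s)) + 1 ≠ Module.finrank ℝ V)
    (h : span ℝ (v '' t) ≤ span ℝ (insert u (v '' s))) : span ℝ (v '' t) ≤ span ℝ (v '' s) :=
  span_le.2 <| by
    rintro _ ⟨j, hj, rfl⟩
    exact hgen.mem_span_of_mem_span_insert hs (h (subset_span (mem_image_of_mem v hj)))

lemma span_insert_eq_top (hgen : AvoidsProperSpans v u) {s : Set ι}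
    (hs : Module.finrank ℝ (span ℝ (v '' s)) + 1 = Module.finrank ℝ V) :
    span ℝ (insert u (v '' s)) = ⊤ := by
  have hne : span ℝ (v '' s) ≠ ⊤ := fun h => by rw [h, finrank_top] at hs; omega
  apply eq_top_of_finrank_eq
  rw [span_insert, sup_comm, finrank_sup_span_singleton (hgen s hne), hs]

lemma orthogonal_le_of_inf_le (hgen : AvoidsProperSpans v u) {s t : Set ι}
    (hs : Module.finrank ℝ (span ℝ (v '' s))ᗮ ≠ 1)
    (h : (span ℝ (v '' s))ᗮ ⊓ (span ℝ {u})ᗮ ≤ (span ℝ (v '' t))ᗮ ⊓ (span ℝ {u})ᗮ) :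
    (span ℝ (v '' s))ᗮ ≤ (span ℝ (v '' t))ᗮ := by
  rw [orthogonal_inf_orthogonal_span_singleton, orthogonal_inf_orthogonal_span_singleton,
    orthogonal_le_orthogonal_iff] at h
  rw [ne_eq, finrank_orthogonal_eq_one_iff] at hs
  exact orthogonal_le <|
    hgen.span_le_span_of_le_span_insert hs ((span_mono (subset_insert _ _)).trans h)

lemma exists_orthogonal_inf_eq [Fintype ι] (hgen : AvoidsProperSpans v u)
    (hess : span ℝ (range v) = ⊤) (s : Finset ι) :
    ∃ t : Finset ι, Module.finrank ℝ (span ℝ (v '' t))ᗮ ≠ 1 ∧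
      (span ℝ (v '' t))ᗮ ⊓ (span ℝ {u})ᗮ = (span ℝ (insert u (v '' s)))ᗮ := by
  by_cases hs : Module.finrank ℝ (span ℝ (v '' s)) + 1 = Module.finrank ℝ V
  · refine ⟨Finset.univ, ?_, ?_⟩ <;>
      rw [Finset.coe_univ, image_univ, hess, top_orthogonal_eq_bot]
    · simp
    · rw [hgen.span_insert_eq_top hs, top_orthogonal_eq_bot, bot_inf_eq]
  · rw [← finrank_orthogonal_eq_one_iff] at hs
    exact ⟨s, hs, orthogonal_inf_orthogonal_span_singleton _ _⟩

end AvoidsProperSpans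

end Flats

lemma exists_equiv_subtype_le_iff {α : Type*} [PartialOrder α] {p q : α → Prop} (f : α → α)
    (hf : ∀ x y, p x → p y → (f x ≤ f y ↔ x ≤ y)) (hmaps : ∀ x, p x → q (f x))
    (hsurj : ∀ y, q y → ∃ x, p x ∧ f x = y) :
    ∃ e : {y // q y} ≃ {x // p x}, ∀ a b, a.1 ≤ b.1 ↔ (e a).1 ≤ (e b).1 := by
  let g : {x // p x} ↪o {y // q y} :=
    OrderEmbedding.ofMapLEIff (fun x => ⟨f x, hmaps x x.2⟩) fun x y => hf x y x.2 y.2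
  have hg : Function.Surjective g := fun y => by
    obtain ⟨x, hx, hxy⟩ := hsurj y.1 y.2
    exact ⟨⟨x, hx⟩, Subtype.ext hxy⟩
  exact ⟨(OrderIso.ofSurjective g hg).symm.toEquiv,
    fun a b => ((OrderIso.ofSurjective g hg).symm.le_iff_le).symm⟩

section Posets

variable {V : Type*} [NormedAddCommGroup V] [InnerProductSpace ℝ V] {ι : Type*} [Fintype ι]

lemma mem_image_finset_inf_orthogonal_iff (v : ι → V) {x : Submodule ℝ V} :
    x ∈ (Finset.univ : Finset ι).powerset.image
      (fun S => S.inf (fun i => (span ℝ {v i})ᗮ)) ↔ ∃ s : Finset ι, (span ℝ (v '' s))ᗮ = x := by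
  simp [finset_inf_orthogonal_span_singleton]

lemma mem_image_orthogonal_inf_projPerp_iff (v : ι → V) (u : V) {x : Submodule ℝ V} :
    x ∈ (Finset.univ : Finset ι).powerset.image
      (fun S => (span ℝ {u})ᗮ ⊓ S.inf (fun i => (span ℝ {projPerp u (v i)})ᗮ)) ↔
      ∃ s : Finset ι, (span ℝ (insert u (v '' s)))ᗮ = x := by
  have hS (s : Finset ι) : (span ℝ {u})ᗮ ⊓ s.inf (fun i => (span ℝ {projPerp u (v i)})ᗮ) =
      (span ℝ (insert u (v '' s)))ᗮ := by
    rw [finset_inf_orthogonal_span_singleton, inf_comm, orthogonal_inf_orthogonal_span_singleton,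
      ← Set.image_image, span_insert_image_projPerp]
  simp [hS]

end Posets

theorem projected_poset_is_truncation_general {d m : ℕ}
    (eta : Fin m → Euc d)
    -- `𝒜` is essential: the normals span `ℝ^d`:
    (hess : Submodule.span ℝ (Set.range eta) = (⊤ : Submodule ℝ (Euc d)))
    (u : Euc d) (hu : ‖u‖ = 1)
    -- genericity of `u`: projecting onto `u^⊥` preserves the dimension of the span of
    -- every subset of the normals of rank at most `d - 1`:
    (hgeneric : ∀ S : Set (Fin m),
      Module.finrank ℝ (Submodule.span ℝ (eta '' S)) ≤ d - 1 →
        Module.finrank ℝ (Submodule.span ℝ (projPerp u '' (eta '' S)))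
          = Module.finrank ℝ (Submodule.span ℝ (eta '' S)))
    -- `L(𝒜)`: all intersections of subsets of the hyperplanes `η_i^⊥`:
    (L : Finset (Submodule ℝ (Euc d)))
    (hL : L = (Finset.univ : Finset (Fin m)).powerset.image
      (fun S => S.inf (fun i => (Submodule.span ℝ {eta i})ᗮ)))
    -- `L(𝒜')`: all intersections, inside `u^⊥`, of subsets of the hyperplanes of `u^⊥`
    -- with normals the projections of the `η_i`:
    (L' : Finset (Submodule ℝ (Euc d)))
    (hL' : L' = (Finset.univ : Finset (Fin m)).powerset.image
      (fun S => (Submodule.span ℝ {u})ᗮ ⊓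
        S.inf (fun i => (Submodule.span ℝ {projPerp u (eta i)})ᗮ))) :
    ∃ e : {x : Submodule ℝ (Euc d) // x ∈ L'} ≃
        {x : Submodule ℝ (Euc d) // x ∈ L.filter
          (fun x : Submodule ℝ (Euc d) => Module.finrank ℝ x ≠ 1)},
      ∀ a b, a.1 ≤ b.1 ↔ (e a).1 ≤ (e b).1 := by
  subst hL hL'
  have hgen : AvoidsProperSpans eta u := fun s hs =>
    notMem_span_of_finrank_span_image_projPerp hu <| hgeneric s <| by
      have := finrank_lt hs
      rw [finrank_euclideanSpace_fin] at this
      omega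
  refine exists_equiv_subtype_le_iff (· ⊓ (span ℝ {u})ᗮ) ?_ ?_ ?_
  · intro x y hx hy
    simp only [Finset.mem_filter, mem_image_finset_inf_orthogonal_iff] at hx hy
    obtain ⟨⟨s, rfl⟩, hs⟩ := hx
    obtain ⟨⟨t, rfl⟩, -⟩ := hy
    exact ⟨hgen.orthogonal_le_of_inf_le hs, inf_le_inf_right _⟩
  · intro x hx
    obtain ⟨s, rfl⟩ := (mem_image_finset_inf_orthogonal_iff eta).1 (Finset.mem_filter.1 hx).1
    exact (mem_image_orthogonal_inf_projPerp_iff eta u).2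
      ⟨s, (orthogonal_inf_orthogonal_span_singleton _ _).symm⟩
  · intro y hy
    obtain ⟨s, rfl⟩ := (mem_image_orthogonal_inf_projPerp_iff eta u).1 hy
    obtain ⟨t, ht, heq⟩ := hgen.exists_orthogonal_inf_eq hess s
    exact ⟨_, Finset.mem_filter.2 ⟨(mem_image_finset_inf_orthogonal_iff eta).2 ⟨t, rfl⟩, ht⟩, heq⟩

/-- from the proof of Lemma 6 of the paper.  Let `𝒜` be an essential
central arrangement in `ℝ^d` (`d ≥ 2`) with normals `η_1, …, η_m` and let `u` be a
generic unit vector (projection onto `u^⊥` preserves the rank of every subset of the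
normals of rank `≤ d-1`).  Then the intersection poset of the projected arrangement
`𝒜'` in `u^⊥` is isomorphic, as a poset (ordered by reverse inclusion, equivalently by
inclusion), to `L(𝒜)` with its coatoms (the one-dimensional elements) removed. -/
theorem projected_poset_is_truncation {d m : ℕ} (hd : 2 ≤ d)
    (eta : Fin m → Euc d) (heta : ∀ i, eta i ≠ 0)
    -- `𝒜` is essential: the normals span `ℝ^d`:
    (hess : Submodule.span ℝ (Set.range eta) = (⊤ : Submodule ℝ (Euc d)))
    (u : Euc d) (hu : ‖u‖ = 1)
    -- genericity of `u`: projecting onto `u^⊥` preserves the dimension of the span of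
    -- every subset of the normals of rank at most `d - 1`:
    (hgeneric : ∀ S : Set (Fin m),
      Module.finrank ℝ (Submodule.span ℝ (eta '' S)) ≤ d - 1 →
        Module.finrank ℝ (Submodule.span ℝ (projPerp u '' (eta '' S)))
          = Module.finrank ℝ (Submodule.span ℝ (eta '' S)))
    -- `L(𝒜)`: all intersections of subsets of the hyperplanes `η_i^⊥`:
    (L : Finset (Submodule ℝ (Euc d)))
    (hL : L = (Finset.univ : Finset (Fin m)).powerset.image
      (fun S => S.inf (fun i => (Submodule.span ℝ {eta i})ᗮ)))
    -- `L(𝒜')`: all intersections, inside `u^⊥`, of subsets of the hyperplanes of `u^⊥`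
    -- with normals the projections of the `η_i`:
    (L' : Finset (Submodule ℝ (Euc d)))
    (hL' : L' = (Finset.univ : Finset (Fin m)).powerset.image
      (fun S => (Submodule.span ℝ {u})ᗮ ⊓
        S.inf (fun i => (Submodule.span ℝ {projPerp u (eta i)})ᗮ))) :
    ∃ e : {x : Submodule ℝ (Euc d) // x ∈ L'} ≃
        {x : Submodule ℝ (Euc d) // x ∈ L.filter
          (fun x : Submodule ℝ (Euc d) => Module.finrank ℝ x ≠ 1)},
      ∀ a b, a.1 ≤ b.1 ↔ (e a).1 ≤ (e b).1 :=
  projected_poset_is_truncation_general eta hess u hu hgeneric L hL L' hL'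
end
end

section
/- Let C ⊆ ℝ^d be a closed polyhedral cone and let F be a face of C. Define the normal cone N_F := {v ∈ ℝ^d : ⟨v, c⟩ ≤ 0 for all c ∈ C, and ⟨v, f⟩ = 0 for all f ∈ F}. Then N_F is contained in the orthogonal complement of the linear span of F, and X_F = relint(F) + N_F; that is, a point z ∈ ℝ^d satisfies π_C(z) ∈ relint(F) if and only if z = f + v with f ∈ relint(F) and v ∈ N_F. -/
/-!
Formalization of statements from "Projection Volumes of Hyperplane Arrangements"
by Klivans and Swartz.
-/

open scoped RealInnerProductSpace Pointwise
open MeasureTheory Metric Set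

noncomputable section

attribute [local instance] Classical.decEq Classical.propDecidable

variable {E : Type*} [NormedAddCommGroup E] [InnerProductSpace ℝ E] [FiniteDimensional ℝ E]
  [MeasurableSpace E] [BorelSpace E]

/-- From a point in the relative interior of `F`, one can move slightly beyond it
away from any point of `F` and stay in `F`. -/
lemma relint_beyond {E : Type*} [NormedAddCommGroup E] [NormedSpace ℝ E]
    {F : Set E} {p f : E} (hp : p ∈ intrinsicInterior ℝ F) (hf : f ∈ F) :
    ∃ ε : ℝ, 0 < ε ∧ p + ε • (p - f) ∈ F := by
  rw [mem_intrinsicInterior] at hp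
  obtain ⟨q, hq, rfl⟩ := hp
  rw [mem_interior_iff_mem_nhds, Metric.mem_nhds_iff] at hq
  obtain ⟨δ, hδ, hball⟩ := hq
  set n : ℝ := ‖(q : E) - f‖ with hn
  have hn0 : 0 ≤ n := norm_nonneg _
  set ε : ℝ := δ / (2 * (n + 1)) with hε
  have hεpos : 0 < ε := by positivity
  refine ⟨ε, hεpos, ?_⟩
  have hfa : f ∈ affineSpan ℝ F := subset_affineSpan ℝ F hf
  have hmem : (q : E) + ε • ((q : E) - f) ∈ affineSpan ℝ F := by
    have h := AffineSubspace.smul_vsub_vadd_mem (affineSpan ℝ F) ε q.2 hfa q.2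
    simpa [vsub_eq_sub, vadd_eq_add, add_comm] using h
  have hb : (⟨(q : E) + ε • ((q : E) - f), hmem⟩ : affineSpan ℝ F) ∈ Metric.ball q δ := by
    rw [Metric.mem_ball, Subtype.dist_eq, dist_eq_norm]
    have h1 : (q : E) + ε • ((q : E) - f) - q = ε • ((q : E) - f) := by abel
    rw [h1, norm_smul, Real.norm_eq_abs, abs_of_pos hεpos, ← hn, hε,
      div_mul_eq_mul_div, div_lt_iff₀ (by positivity)]
    nlinarith
  exact hball hb

/-- A closed polyhedral cone: a finite intersection of closed linear halfspaces. -/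

def IsPolyhedralCone (C : Set E) : Prop :=
  ∃ (m : ℕ) (η : Fin m → E), C = {z | ∀ i, ⟪η i, z⟫ ≤ 0}

/-- structure of the projection regions.  For a closed polyhedral
cone `C` and a face `F` of `C`, with
`N_F = {v : ⟪v,c⟫ ≤ 0 ∀ c ∈ C, ⟪v,f⟫ = 0 ∀ f ∈ F}` the normal cone of `F`:
`N_F ⊆ (span F)^⊥` and `X_F = relint F + N_F`, i.e. `π_C(z) ∈ relint F` iff
`z = f + v` with `f ∈ relint F` and `v ∈ N_F`. -/
theorem projRegion_eq_relint_add_normalCone {d : ℕ} (C : Set (Euc d))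
    (hC : IsPolyhedralCone C)
    (F : Set (Euc d)) (hF : IsFaceOf C F)
    (N : Set (Euc d))
    (hN : N = {v | (∀ c ∈ C, ⟪v, c⟫ ≤ 0) ∧ ∀ f ∈ F, ⟪v, f⟫ = 0}) :
    (∀ v ∈ N, v ∈ (Submodule.span ℝ F)ᗮ)
    ∧ projRegion C F = intrinsicInterior ℝ F + N
    ∧ (∀ z : Euc d,
        (∃ p, IsNearestPt C z p ∧ p ∈ intrinsicInterior ℝ F) ↔
          ∃ f ∈ intrinsicInterior ℝ F, ∃ v ∈ N, z = f + v)  := by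
  obtain ⟨m, η, hCeq⟩ := hC
  have hCconv : Convex ℝ C := by
    intro x hx y hy a b ha hb hab
    rw [hCeq] at hx hy ⊢
    intro i
    have hx' := hx i; have hy' := hy i
    rw [inner_add_right, inner_smul_right, inner_smul_right]
    nlinarith
  have h0C : (0 : Euc d) ∈ C := by
    rw [hCeq]; intro i; simp
  have hsmul : ∀ t : ℝ, 0 ≤ t → ∀ c ∈ C, t • c ∈ C := by
    intro t ht c hc
    rw [hCeq] at hc ⊢
    intro i
    have := hc i
    rw [inner_smul_right]
    exact mul_nonpos_of_nonneg_of_nonpos ht this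
  have hFC : F ⊆ C := hF.2.subset
  have part1 : ∀ v ∈ N, v ∈ (Submodule.span ℝ F)ᗮ := by
    intro v hv
    rw [hN, Set.mem_setOf_eq] at hv
    rw [Submodule.mem_orthogonal]
    intro u hu
    induction hu using Submodule.span_induction with
    | mem x hx => rw [real_inner_comm]; exact hv.2 x hx
    | zero => simp
    | add x y _ _ hx hy => rw [inner_add_left, hx, hy]; ring
    | smul a x _ hx => rw [real_inner_smul_left, hx]; ring
  have key : ∀ z : Euc d,
      (∃ p, IsNearestPt C z p ∧ p ∈ intrinsicInterior ℝ F) ↔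
        ∃ f ∈ intrinsicInterior ℝ F, ∃ v ∈ N, z = f + v := by
    intro z
    constructor
    · rintro ⟨p, ⟨hpC, hmin⟩, hpint⟩
      haveI : Nonempty C := ⟨⟨p, hpC⟩⟩
      have hinf : ‖z - p‖ = ⨅ w : C, ‖z - w‖ := by
        refine le_antisymm (le_ciInf fun w => ?_)
          (ciInf_le ⟨0, fun x ⟨w, hw⟩ => hw ▸ norm_nonneg _⟩ (⟨p, hpC⟩ : C))
        simpa [dist_eq_norm] using hmin w w.2
      have hvar := (norm_eq_iInf_iff_real_inner_le_zero hCconv hpC).mp hinf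
      have hvp : ⟪z - p, p⟫ = 0 := by
        have h1 := hvar _ (hsmul 2 (by norm_num) p hpC)
        have h2 := hvar _ h0C
        have e1 : (2 : ℝ) • p - p = p := by
          rw [two_smul]; abel
        rw [e1] at h1
        rw [zero_sub, inner_neg_right] at h2
        linarith
      have hvC : ∀ c ∈ C, ⟪z - p, c⟫ ≤ 0 := by
        intro c hc
        have := hvar c hc
        rw [inner_sub_right, hvp] at this
        linarith
      have hvF : ∀ f ∈ F, ⟪z - p, f⟫ = 0 := by
        intro f hf
        obtain ⟨ε, hε, hmem⟩ := relint_beyond hpint hf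
        have h1 : ⟪z - p, p + ε • (p - f)⟫ ≤ 0 := hvC _ (hFC hmem)
        rw [inner_add_right, hvp, real_inner_smul_right, inner_sub_right, hvp] at h1
        have h2 := hvC f (hFC hf)
        nlinarith
      refine ⟨p, hpint, z - p, ?_, by abel⟩
      rw [hN, Set.mem_setOf_eq]
      exact ⟨hvC, hvF⟩
    · rintro ⟨f, hfint, v, hvN, rfl⟩
      rw [hN, Set.mem_setOf_eq] at hvN
      have hfF : f ∈ F := intrinsicInterior_subset hfint
      refine ⟨f, ⟨hFC hfF, ?_⟩, hfint⟩
      intro q hq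
      have h1 : ⟪v, q⟫ ≤ 0 := hvN.1 q hq
      have h2 : ⟪v, f⟫ = 0 := hvN.2 f hfF
      rw [dist_eq_norm, dist_eq_norm]
      have e1 : f + v - f = v := by abel
      have e2 : f + v - q = v - (q - f) := by abel
      rw [e1, e2]
      have hexp : ‖v - (q - f)‖ ^ 2 = ‖v‖ ^ 2 - 2 * ⟪v, q - f⟫ + ‖q - f‖ ^ 2 :=
        norm_sub_sq_real v (q - f)
      have hin : ⟪v, q - f⟫ ≤ 0 := by rw [inner_sub_right, h2]; linarith
      nlinarith [norm_nonneg (v - (q - f)), norm_nonneg v, sq_nonneg (‖q - f‖)]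
  refine ⟨part1, ?_, key⟩
  ext z
  rw [projRegion, Set.mem_setOf_eq, key z, Set.mem_add]
  constructor
  · rintro ⟨f, hf, v, hv, h⟩; exact ⟨f, hf, v, hv, h.symm⟩
  · rintro ⟨f, hf, v, hv, h⟩; exact ⟨f, hf, v, hv, h.symm⟩
end
end

section
/- Let C ⊆ ℝ^d be a nonempty closed polyhedral cone. Then the sets X_F, as F ranges over the faces of C, are pairwise disjoint and their union is all of ℝ^d. Consequently Σ_{k=0}^{d} ν_k(C) = 1. -/
/-!
Formalization of statements from "Projection Volumes of Hyperplane Arrangements"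
by Klivans and Swartz.
-/

open scoped RealInnerProductSpace Pointwise
open MeasureTheory Metric Set

noncomputable section

attribute [local instance] Classical.decEq Classical.propDecidable

variable {E : Type*} [NormedAddCommGroup E] [InnerProductSpace ℝ E] [FiniteDimensional ℝ E]
  [MeasurableSpace E] [BorelSpace E]

/-!
The nearest-point map `π_C` of a closed convex set is `1`-Lipschitz, so each
`X_F = π_C⁻¹(ri F)` is a Borel set. Two faces whose relative interiors share a point `p`
coincide: for `x ∈ F`, moving slightly from `p` away from `x` stays in `F`, so `p` lies in an
open segment from `x`, and extremality of the other face puts `x` into it. Hence the `X_F` are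
pairwise disjoint. For the cone `{z | ∀ i, ⟪η i, z⟫ ≤ 0}`, a point `p` of the cone lies in the
relative interior of the exposed face on which the constraints active at `p` are tight, so the
`X_F` cover the space; every face is of this form, so there are finitely many. The volume
identity is then additivity of Lebesgue measure, with the faces grouped by dimension.
-/

open Filter Topology

section NearestPoint

variable {E : Type*} [NormedAddCommGroup E] {C : Set E} {z w p q : E}

theorem isNearestPt_iff_norm_eq_iInf (hp : p ∈ C) :
    IsNearestPt C z p ↔ ‖z - p‖ = ⨅ x : C, ‖z - x‖ := by
  have : Nonempty C := ⟨⟨p, hp⟩⟩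
  have hbdd : BddBelow (range fun x : C => ‖z - x‖) :=
    ⟨0, forall_mem_range.2 fun _ => norm_nonneg _⟩
  simp only [IsNearestPt, hp, true_and, dist_eq_norm]
  exact ⟨fun h => le_antisymm (le_ciInf fun x => h x x.2) (ciInf_le hbdd ⟨p, hp⟩),
    fun h x hx => h ▸ ciInf_le hbdd ⟨x, hx⟩⟩

variable [InnerProductSpace ℝ E]

theorem isNearestPt_iff_inner_le (hC : Convex ℝ C) (hp : p ∈ C) :
    IsNearestPt C z p ↔ ∀ x ∈ C, ⟪z - p, x - p⟫ ≤ 0 := by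
  rw [isNearestPt_iff_norm_eq_iInf hp, norm_eq_iInf_iff_real_inner_le_zero hC hp]

theorem exists_isNearestPt [CompleteSpace E] (hne : C.Nonempty) (hcl : IsClosed C)
    (hC : Convex ℝ C) (z : E) : ∃ p, IsNearestPt C z p := by
  obtain ⟨p, hp, hnorm⟩ := exists_norm_eq_iInf_of_complete_convex hne hcl.isComplete hC z
  exact ⟨p, (isNearestPt_iff_norm_eq_iInf hp).2 hnorm⟩

theorem IsNearestPt.norm_sub_sq_le_inner (hC : Convex ℝ C) (hp : IsNearestPt C z p)
    (hq : IsNearestPt C w q) : ‖p - q‖ ^ 2 ≤ ⟪z - w, p - q⟫ := by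
  have hpq := (isNearestPt_iff_inner_le hC hp.1).1 hp q hq.1
  have hqp := (isNearestPt_iff_inner_le hC hq.1).1 hq p hp.1
  have hsplit : ⟪z - w, p - q⟫ - ‖p - q‖ ^ 2 = -⟪z - p, q - p⟫ - ⟪w - q, p - q⟫ := by
    rw [← real_inner_self_eq_norm_sq]
    simp only [inner_sub_left, inner_sub_right, real_inner_comm]
    ring
  linarith

theorem IsNearestPt.unique (hC : Convex ℝ C) (hp : IsNearestPt C z p) (hq : IsNearestPt C z q) :
    p = q := by
  have h := hp.norm_sub_sq_le_inner hC hq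
  rw [sub_self, inner_zero_left, sq_nonpos_iff, norm_eq_zero] at h
  exact sub_eq_zero.1 h

/-- The nearest-point map `π_C`; a junk value at `z` unless `z` has a nearest point in `C`. -/
noncomputable def metricProj (C : Set E) (z : E) : E :=
  Classical.epsilon (IsNearestPt C z)

theorem isNearestPt_metricProj [CompleteSpace E] (hne : C.Nonempty) (hcl : IsClosed C)
    (hC : Convex ℝ C) (z : E) : IsNearestPt C z (metricProj C z) :=
  Classical.epsilon_spec (exists_isNearestPt hne hcl hC z)

theorem lipschitzWith_one_metricProj [CompleteSpace E] (hne : C.Nonempty) (hcl : IsClosed C)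
    (hC : Convex ℝ C) : LipschitzWith 1 (metricProj C) := by
  refine LipschitzWith.mk_one fun z w => ?_
  have h := (isNearestPt_metricProj hne hcl hC z).norm_sub_sq_le_inner hC
    (isNearestPt_metricProj hne hcl hC w)
  have hcs := real_inner_le_norm (z - w) (metricProj C z - metricProj C w)
  rw [dist_eq_norm, dist_eq_norm]
  nlinarith [norm_nonneg (metricProj C z - metricProj C w), norm_nonneg (z - w)]

theorem projRegion_eq_preimage_metricProj [CompleteSpace E] (hne : C.Nonempty)
    (hcl : IsClosed C) (hC : Convex ℝ C) (F : Set E) :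
    projRegion C F = metricProj C ⁻¹' intrinsicInterior ℝ F := by
  ext z
  refine ⟨fun ⟨p, hp, hpF⟩ => ?_, fun h => ⟨_, isNearestPt_metricProj hne hcl hC z, h⟩⟩
  rwa [mem_preimage, (isNearestPt_metricProj hne hcl hC z).unique hC hp]

end NearestPoint

section IntrinsicInterior

variable {V : Type*} [NormedAddCommGroup V] [NormedSpace ℝ V]

theorem measurableSet_intrinsicInterior [FiniteDimensional ℝ V] [MeasurableSpace V]
    [BorelSpace V] (s : Set V) : MeasurableSet (intrinsicInterior ℝ s) := by
  have hs : IsClosed (affineSpan ℝ s : Set V) := (affineSpan ℝ s).closed_of_finiteDimensional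
  rw [← intrinsicClosure_sdiff_intrinsicFrontier]
  exact (isClosed_intrinsicClosure hs).measurableSet.diff
    (isClosed_intrinsicFrontier hs).measurableSet

theorem eventually_lineMap_mem_of_mem_intrinsicInterior {s : Set V} {p x : V}
    (hp : p ∈ intrinsicInterior ℝ s) (hx : x ∈ affineSpan ℝ s) :
    ∀ᶠ t in 𝓝 (0 : ℝ), AffineMap.lineMap p x t ∈ s := by
  obtain ⟨q, hq, rfl⟩ := mem_intrinsicInterior.1 hp
  let γ : ℝ → affineSpan ℝ s := fun t =>
    ⟨AffineMap.lineMap (q : V) x t, AffineMap.lineMap_mem t q.2 hx⟩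
  have hγ : Continuous γ := (AffineMap.lineMap_continuous (p := (q : V)) (q := x)).subtype_mk _
  have hγ0 : γ 0 = q := Subtype.ext (AffineMap.lineMap_apply_zero _ _)
  exact (hγ.tendsto 0).eventually (hγ0 ▸ mem_interior_iff_mem_nhds.1 hq)

theorem IsExtreme.subset_of_mem_intrinsicInterior {A F G : Set V} (hG : IsExtreme ℝ A G)
    (hFA : F ⊆ A) {p : V} (hpF : p ∈ intrinsicInterior ℝ F) (hpG : p ∈ G) : F ⊆ G := by
  intro x hx
  obtain ⟨t, hyF, ht : t < 0⟩ :=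
    ((eventually_lineMap_mem_of_mem_intrinsicInterior hpF (subset_affineSpan ℝ F hx)).filter_mono
      (nhdsWithin_le_nhds (s := Iio 0)) |>.and self_mem_nhdsWithin).exists
  have ht' : 1 - t ≠ 0 := by linarith
  refine hG.left_mem_of_mem_openSegment (hFA hx) (hFA hyF) hpG
    ⟨-t / (1 - t), 1 / (1 - t), by bound, by bound, by field_simp; ring, ?_⟩
  rw [AffineMap.lineMap_apply_module]
  match_scalars
  · ring
  · field_simp

theorem IsExtreme.eq_of_mem_intrinsicInterior {A F G : Set V} (hF : IsExtreme ℝ A F)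
    (hG : IsExtreme ℝ A G) {p : V} (hpF : p ∈ intrinsicInterior ℝ F)
    (hpG : p ∈ intrinsicInterior ℝ G) : F = G :=
  (hG.subset_of_mem_intrinsicInterior hF.subset hpF (intrinsicInterior_subset hpG)).antisymm
    (hF.subset_of_mem_intrinsicInterior hG.subset hpG (intrinsicInterior_subset hpF))

end IntrinsicInterior

theorem disjoint_projRegion {E : Type*} [NormedAddCommGroup E] [InnerProductSpace ℝ E]
    {C F G : Set E} (hC : Convex ℝ C) (hF : IsExtreme ℝ C F) (hG : IsExtreme ℝ C G)
    (hFG : F ≠ G) : Disjoint (projRegion C F) (projRegion C G) :=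
  disjoint_left.2 fun _ ⟨_, hp, hpF⟩ ⟨_, hq, hqG⟩ =>
    hFG (hF.eq_of_mem_intrinsicInterior hG hpF (hp.unique hC hq ▸ hqG))

section PolyhedralCone

variable {E : Type*} [NormedAddCommGroup E] [InnerProductSpace ℝ E] {ι : Type*} (η : ι → E)

def polyCone : Set E := {z | ∀ i, ⟪η i, z⟫ ≤ 0}

def coneFace (s : Finset ι) : Set E := {x ∈ polyCone η | ∀ i ∈ s, ⟪η i, x⟫ = 0}

theorem polyCone_eq_iInter : polyCone η = ⋂ i, innerSL ℝ (η i) ⁻¹' Iic 0 := by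
  ext; simp [polyCone]

theorem convex_polyCone : Convex ℝ (polyCone η) := by
  rw [polyCone_eq_iInter]
  exact convex_iInter fun i => (convex_Iic 0).linear_preimage (innerSL ℝ (η i)).toLinearMap

theorem isClosed_polyCone : IsClosed (polyCone η) := by
  rw [polyCone_eq_iInter]
  exact isClosed_iInter fun i => isClosed_Iic.preimage (innerSL ℝ (η i)).continuous

theorem zero_mem_polyCone : (0 : E) ∈ polyCone η := fun _ => (inner_zero_right _).le

/-- Exposed by `⟪∑ i ∈ s, η i, ·⟫`, which is `≤ 0` on the cone, vanishes exactly on the face,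
and attains `0` at the apex. -/
theorem isExposed_coneFace (s : Finset ι) : IsExposed ℝ (polyCone η) (coneFace η s) := by
  intro _
  refine ⟨innerSL ℝ (∑ i ∈ s, η i), ?_⟩
  have hsum : ∀ x, innerSL ℝ (∑ i ∈ s, η i) x = ∑ i ∈ s, ⟪η i, x⟫ := fun x => by simp
  have hnonpos : ∀ x ∈ polyCone η, ∑ i ∈ s, ⟪η i, x⟫ ≤ 0 := fun x hx =>
    Finset.sum_nonpos fun i _ => hx i
  ext x
  simp only [coneFace, mem_ofPred_eq, hsum, and_congr_right_iff]
  intro hx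
  rw [← Finset.sum_eq_zero_iff_of_nonpos fun i _ => hx i]
  refine ⟨fun h y hy => h ▸ hnonpos y hy, fun h => le_antisymm (hnonpos x hx) ?_⟩
  simpa using h 0 (zero_mem_polyCone η)

variable [Fintype ι]

def activeSet (p : E) : Finset ι := {i | ⟪η i, p⟫ = 0}

variable {η}

theorem mem_coneFace_activeSet {p : E} (hp : p ∈ polyCone η) : p ∈ coneFace η (activeSet η p) :=
  ⟨hp, fun _ hi => (Finset.mem_filter.1 hi).2⟩

/-- Near `p` the inactive constraints stay strict, while the affine span of the face keeps the
active ones tight. -/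
theorem mem_intrinsicInterior_coneFace_activeSet {p : E} (hp : p ∈ polyCone η) :
    p ∈ intrinsicInterior ℝ (coneFace η (activeSet η p)) := by
  set F := coneFace η (activeSet η p)
  have hstrict : ∀ᶠ x in 𝓝 p, ∀ i ∉ activeSet η p, ⟪η i, x⟫ < 0 := by
    refine eventually_all.2 fun i => ?_
    by_cases hi : i ∈ activeSet η p
    · exact Eventually.of_forall fun _ h => absurd hi h
    · have hlt : ⟪η i, p⟫ < 0 := (hp i).lt_of_ne (by simpa [activeSet] using hi)
      exact ((innerSL ℝ (η i)).continuous.tendsto p).eventually_lt_const hlt |>.mono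
        fun x hx _ => hx
  have htight : ∀ x ∈ affineSpan ℝ F, ∀ i ∈ activeSet η p, ⟪η i, x⟫ = 0 := by
    intro x hx
    have hle : affineSpan ℝ F ≤
        (⨅ i ∈ activeSet η p, LinearMap.ker (innerₛₗ ℝ (η i))).toAffineSubspace :=
      affineSpan_le.2 fun y hy => by simpa using hy.2
    simpa using hle hx
  refine mem_intrinsicInterior.2 ⟨⟨p, subset_affineSpan ℝ F (mem_coneFace_activeSet hp)⟩,
    mem_interior_iff_mem_nhds.2 ?_, rfl⟩
  filter_upwards [continuous_subtype_val.continuousAt.eventually hstrict] with y hy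
  refine ⟨fun i => ?_, htight y y.2⟩
  by_cases hi : i ∈ activeSet η p
  · exact (htight y y.2 i hi).le
  · exact (hy i hi).le

theorem isFaceOf_coneFace_activeSet {p : E} (hp : p ∈ polyCone η) :
    IsFaceOf (polyCone η) (coneFace η (activeSet η p)) :=
  ⟨⟨p, mem_coneFace_activeSet hp⟩, isExposed_coneFace η _⟩

variable (η)

theorem iUnion_projRegion_polyCone [CompleteSpace E] :
    ⋃ F ∈ {F | IsFaceOf (polyCone η) F}, projRegion (polyCone η) F = univ := by
  refine eq_univ_of_forall fun z => ?_
  obtain ⟨p, hp⟩ := exists_isNearestPt ⟨0, zero_mem_polyCone η⟩ (isClosed_polyCone η)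
    (convex_polyCone η) z
  exact mem_biUnion (isFaceOf_coneFace_activeSet hp.1)
    ⟨p, hp, mem_intrinsicInterior_coneFace_activeSet hp.1⟩

theorem finite_setOf_isFaceOf_polyCone [FiniteDimensional ℝ E] :
    {F | IsFaceOf (polyCone η) F}.Finite := by
  refine (finite_range (coneFace η)).subset fun F hF => ?_
  obtain ⟨q, hq⟩ := hF.1.intrinsicInterior (hF.2.convex (convex_polyCone η))
  have hqC : q ∈ polyCone η := hF.2.subset (intrinsicInterior_subset hq)
  exact ⟨activeSet η q, (isExposed_coneFace η _).isExtreme.eq_of_mem_intrinsicInterior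
    hF.2.isExtreme (mem_intrinsicInterior_coneFace_activeSet hqC) hq⟩

end PolyhedralCone

theorem sum_measure_inter_div_eq_one {α ι : Type*} [MeasurableSpace α] (μ : Measure α)
    {S : Finset ι} {X : ι → Set α} (hX : ∀ i ∈ S, MeasurableSet (X i))
    (hdisj : (S : Set ι).PairwiseDisjoint X) (hcover : ⋃ i ∈ S, X i = univ) {B : Set α}
    (hB : MeasurableSet B) (hB0 : μ B ≠ 0) (hBtop : μ B ≠ ⊤) :
    ∑ i ∈ S, (μ (X i ∩ B)).toReal / (μ B).toReal = 1 := by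
  have hsum : ∑ i ∈ S, μ (X i ∩ B) = μ B := by
    rw [← measure_biUnion_finset (hdisj.mono fun _ => inter_subset_left)
      fun i hi => (hX i hi).inter hB, ← iUnion₂_inter, hcover, univ_inter]
  have hfin : ∀ i ∈ S, μ (X i ∩ B) ≠ ⊤ := fun _ _ =>
    ((measure_mono inter_subset_right).trans_lt hBtop.lt_top).ne
  rw [← Finset.sum_div, ← ENNReal.toReal_sum hfin, hsum,
    div_self (ENNReal.toReal_ne_zero.2 ⟨hB0, hBtop⟩)]

section Volume

variable {E : Type*} [NormedAddCommGroup E] [InnerProductSpace ℝ E] [FiniteDimensional ℝ E]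
  [MeasurableSpace E] [BorelSpace E] {C : Set E}

theorem measurableSet_projRegion (hne : C.Nonempty) (hcl : IsClosed C) (hC : Convex ℝ C)
    (F : Set E) : MeasurableSet (projRegion C F) := by
  rw [projRegion_eq_preimage_metricProj hne hcl hC]
  exact (lipschitzWith_one_metricProj hne hcl hC).continuous.measurable
    (measurableSet_intrinsicInterior F)

theorem sum_nuK_eq_sum_nuF (hfin : {F | IsFaceOf C F}.Finite) {n : ℕ}
    (hn : Module.finrank ℝ E < n) :
    ∑ k ∈ Finset.range n, nuK C k = ∑ F ∈ hfin.toFinset, nuF C F := by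
  have hnuK : ∀ k, nuK C k = ∑ F ∈ hfin.toFinset with sdim F = k, nuF C F := fun k => by
    rw [nuK, ← finsum_mem_coe_finset]
    congr
    ext F
    simp
  simp_rw [hnuK]
  exact Finset.sum_fiberwise_of_maps_to
    (fun F _ => Finset.mem_range.2 ((Submodule.finrank_le _).trans_lt hn)) _

theorem sum_nuF_eq_one (hne : C.Nonempty) (hcl : IsClosed C) (hC : Convex ℝ C)
    (hfin : {F | IsFaceOf C F}.Finite)
    (hcover : ⋃ F ∈ {F | IsFaceOf C F}, projRegion C F = univ) :
    ∑ F ∈ hfin.toFinset, nuF C F = 1 :=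
  sum_measure_inter_div_eq_one volume (fun F _ => measurableSet_projRegion hne hcl hC F)
    (fun F hF G hG hFG => disjoint_projRegion hC (hfin.mem_toFinset.1 hF).2.isExtreme
      (hfin.mem_toFinset.1 hG).2.isExtreme hFG)
    (by simpa using hcover) measurableSet_closedBall
    (measure_closedBall_pos volume 0 one_pos).ne' measure_closedBall_lt_top.ne

end Volume

theorem projRegions_partition_general {d : ℕ} (C : Set (Euc d))
    (hC : IsPolyhedralCone C) :
    (∀ F G : Set (Euc d), IsFaceOf C F → IsFaceOf C G → F ≠ G →
      projRegion C F ∩ projRegion C G = ∅)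
    ∧ (⋃ F ∈ {F : Set (Euc d) | IsFaceOf C F}, projRegion C F) = Set.univ
    ∧ ∑ k ∈ Finset.range (d + 1), nuK C k = 1 := by
  obtain ⟨m, η, hCη⟩ := hC
  obtain rfl : C = polyCone η := hCη
  have hcover := iUnion_projRegion_polyCone η
  refine ⟨fun F G hF hG hFG => (disjoint_projRegion (convex_polyCone η) hF.2.isExtreme
    hG.2.isExtreme hFG).inter_eq, hcover, ?_⟩
  rw [sum_nuK_eq_sum_nuF (finite_setOf_isFaceOf_polyCone η) (by simp)]
  exact sum_nuF_eq_one ⟨0, zero_mem_polyCone η⟩ (isClosed_polyCone η) (convex_polyCone η) _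
    hcover

/-- For a nonempty closed polyhedral cone `C ⊆ ℝ^d`, the sets `X_F`,
as `F` ranges over the faces of `C`, are pairwise disjoint with union `ℝ^d`;
consequently `∑_{k=0}^{d} ν_k(C) = 1`. -/
theorem projRegions_partition {d : ℕ} (C : Set (Euc d))
    (hne : C.Nonempty) (hC : IsPolyhedralCone C) :
    (∀ F G : Set (Euc d), IsFaceOf C F → IsFaceOf C G → F ≠ G →
      projRegion C F ∩ projRegion C G = ∅)
    ∧ (⋃ F ∈ {F : Set (Euc d) | IsFaceOf C F}, projRegion C F) = Set.univ
    ∧ ∑ k ∈ Finset.range (d + 1), nuK C k = 1 :=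
  projRegions_partition_general C hC
end
end

section
/- Let V be a linear subspace of ℝ^d with 1 ≤ dim V ≤ d−1 and let W = V^⊥. Let A ⊆ V and B ⊆ W be Lebesgue-measurable cones (sets closed under multiplication by positive scalars). Then λ((A + B) ∩ B^d)/λ(B^d) = [λ_V(A ∩ B_V)/λ_V(B_V)] · [λ_W(B ∩ B_W)/λ_W(B_W)], where A + B = {a + b : a ∈ A, b ∈ B}, λ is Lebesgue measure on ℝ^d, λ_V and λ_W are Lebesgue measures on V and W, and B^d, B_V, B_W are the unit balls of ℝ^d, V, W respectively. -/
/-!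
Formalization of statements from "Projection Volumes of Hyperplane Arrangements"
by Klivans and Swartz.
-/

open scoped RealInnerProductSpace Pointwise
open MeasureTheory Metric Set

noncomputable section

attribute [local instance] Classical.decEq Classical.propDecidable

variable {E : Type*} [NormedAddCommGroup E] [InnerProductSpace ℝ E] [FiniteDimensional ℝ E]
  [MeasurableSpace E] [BorelSpace E]

/-!
In polar coordinates a measurable cone `K` is the product of its trace on the unit sphere with
`(0, ∞)`, so for every radial function `f` one has `∫_K f = ν(K) ∫ f`, where `ν(K)` is the volume
fraction of `K`. Identify `ℝ^d` isometrically with `V × W`; the unit ball becomes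
`{‖x‖² + ‖y‖² ≤ 1}`. By Fubini, the volume of `(A + B) ∩ B^d = (A × B) ∩ B^d` is
`∫_{x ∈ A} λ_W(B ∩ {y | ‖x‖² + ‖y‖² ≤ 1}) dx`. The integrand is `ν(B)` times a radial function
of `x`, so the integral is `ν(A) ν(B) ∫_V λ_W{y | ‖x‖² + ‖y‖² ≤ 1} dx = ν(A) ν(B) λ(B^d)`.
-/

open scoped ENNReal

def IsCone {F : Type*} [AddCommGroup F] [Module ℝ F] (K : Set F) : Prop :=
  ∀ c : ℝ, 0 < c → c • K ⊆ K

def volFraction {F : Type*} [NormedAddCommGroup F] [MeasurableSpace F] (μ : Measure F)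
    (K : Set F) : ℝ≥0∞ :=
  μ (K ∩ closedBall 0 1) / μ (closedBall 0 1)

theorem setLIntegral_indicator_one_comp_norm {F : Type*} [NormedAddCommGroup F]
    [MeasurableSpace F] [OpensMeasurableSpace F] (μ : Measure F) (K : Set F) {s : Set ℝ}
    (hs : MeasurableSet s) :
    ∫⁻ x in K, s.indicator 1 ‖x‖ ∂μ = μ (K ∩ norm ⁻¹' s) := by
  change ∫⁻ x in K, (norm ⁻¹' s).indicator 1 x ∂μ = _
  rw [lintegral_indicator_one (hs.preimage measurable_norm),
    Measure.restrict_apply (hs.preimage measurable_norm), Set.inter_comm]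

namespace IsCone

section Module

variable {F G : Type*} [AddCommGroup F] [Module ℝ F] [AddCommGroup G] [Module ℝ G] {K : Set G}

theorem preimage (hK : IsCone K) (f : F →ₗ[ℝ] G) : IsCone (f ⁻¹' K) := by
  rintro c hc _ ⟨x, hx, rfl⟩
  simpa [Set.mem_preimage] using hK c hc ⟨f x, hx, rfl⟩

end Module

variable {F : Type*} [NormedAddCommGroup F] [NormedSpace ℝ F] {K : Set F}

theorem mem_iff_inv_norm_smul_mem (hK : IsCone K) {x : F} (hx : x ≠ 0) :
    x ∈ K ↔ ‖x‖⁻¹ • x ∈ K := by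
  have hpos : 0 < ‖x‖ := norm_pos_iff.2 hx
  refine ⟨fun h => hK _ (inv_pos.2 hpos) ⟨x, h, rfl⟩, fun h => ?_⟩
  simpa [smul_inv_smul₀ hpos.ne'] using hK _ hpos ⟨_, h, rfl⟩

variable [MeasurableSpace F] [BorelSpace F] [FiniteDimensional ℝ F]
  (μ : Measure F) [μ.IsAddHaarMeasure]

theorem setLIntegral_comp_norm [Nontrivial F] (hK : IsCone K) (hKm : MeasurableSet K)
    {g : ℝ → ℝ≥0∞} (hg : Measurable g) :
    ∫⁻ x in K, g ‖x‖ ∂μ = μ.toSphere (Subtype.val ⁻¹' K)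
      * ∫⁻ r, g r ∂(Measure.volumeIoiPow (Module.finrank ℝ F - 1)) := by
  set e := homeomorphUnitSphereProd F
  have hKm' : MeasurableSet (Subtype.val ⁻¹' K : Set (sphere (0 : F) 1)) :=
    hKm.preimage measurable_subtype_coe
  have polar (x : ({0}ᶜ : Set F)) :
      K.indicator (fun x => g ‖x‖) x
        = (Subtype.val ⁻¹' K).indicator 1 (e x).1 * g (e x).2 := by
    have hx := hK.mem_iff_inv_norm_smul_mem x.2
    by_cases hxK : (x : F) ∈ K
    · simp [e, hxK, hx.1 hxK]
    · simp [e, hxK, mt hx.2 hxK]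
  calc ∫⁻ x in K, g ‖x‖ ∂μ = ∫⁻ x, K.indicator (fun x => g ‖x‖) x ∂μ :=
        (lintegral_indicator hKm _).symm
    _ = ∫⁻ x : ({0}ᶜ : Set F), K.indicator (fun x => g ‖x‖) x
          ∂μ.comap Subtype.val := by
        rw [lintegral_subtype_comap (measurableSet_singleton 0).compl, restrict_compl_singleton]
    _ = ∫⁻ y, (Subtype.val ⁻¹' K).indicator 1 y.1 * g y.2
          ∂(μ.toSphere.prod (Measure.volumeIoiPow (Module.finrank ℝ F - 1))) := by
        simp_rw [polar]
        exact (μ.measurePreserving_homeomorphUnitSphereProd.lintegral_comp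
          (((measurable_one.indicator hKm').comp measurable_fst).mul
            ((hg.comp measurable_subtype_coe).comp measurable_snd)))
    _ = _ := by
        rw [lintegral_prod_mul (g := fun r : Ioi (0 : ℝ) => g r)
          (measurable_one.indicator hKm').aemeasurable
          (hg.comp measurable_subtype_coe).aemeasurable, lintegral_indicator_one hKm']

theorem setLIntegral_comp_norm_eq_volFraction_mul (hK : IsCone K) (hKm : MeasurableSet K)
    {g : ℝ → ℝ≥0∞} (hg : Measurable g) :
    ∫⁻ x in K, g ‖x‖ ∂μ = volFraction μ K * ∫⁻ x, g ‖x‖ ∂μ := by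
  have hball_ne_zero : μ (closedBall 0 1) ≠ 0 := (measure_closedBall_pos μ 0 one_pos).ne'
  have hball_ne_top : μ (closedBall 0 1) ≠ ⊤ := measure_closedBall_lt_top.ne
  rcases subsingleton_or_nontrivial F with hF | hF
  -- Polar coordinates need a nonempty sphere; in the zero space `K` is `∅` or `univ`.
  · by_cases h0 : (0 : F) ∈ K
    · obtain rfl : K = univ := eq_univ_of_forall fun x => Subsingleton.elim 0 x ▸ h0
      rw [volFraction, univ_inter, ENNReal.div_self hball_ne_zero hball_ne_top, one_mul,
        Measure.restrict_univ]
    · obtain rfl : K = ∅ := eq_empty_of_forall_notMem fun x => Subsingleton.elim x 0 ▸ h0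
      simp [volFraction]
  · have hunit : MeasurableSet (Iic (1 : ℝ)) := measurableSet_Iic
    have hball_eq (L : Set F) (hL : IsCone L) (hLm : MeasurableSet L) :
        μ (L ∩ closedBall 0 1) = μ.toSphere (Subtype.val ⁻¹' L) *
          ∫⁻ r, (Iic (1 : ℝ)).indicator 1 r
            ∂(Measure.volumeIoiPow (Module.finrank ℝ F - 1)) := by
      rw [← hL.setLIntegral_comp_norm μ hLm (measurable_one.indicator hunit),
        setLIntegral_indicator_one_comp_norm μ L hunit]
      congr 2
      ext x
      simp
    have huniv : IsCone (univ : Set F) := fun _ _ => subset_univ _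
    have hvol := hball_eq univ huniv MeasurableSet.univ
    have hfull := huniv.setLIntegral_comp_norm μ MeasurableSet.univ hg
    rw [univ_inter] at hvol
    rw [Measure.restrict_univ] at hfull
    rw [hvol] at hball_ne_zero hball_ne_top
    set σ := μ.toSphere (Subtype.val ⁻¹' univ)
    set R :=
      ∫⁻ r, (Iic (1 : ℝ)).indicator 1 r ∂(Measure.volumeIoiPow (Module.finrank ℝ F - 1))
    have hσ_ne_zero : σ ≠ 0 := left_ne_zero_of_mul hball_ne_zero
    have hR_ne_top : R ≠ ⊤ := fun h => hball_ne_top (by rw [h, ENNReal.mul_top hσ_ne_zero])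
    -- Every term factors as (sphere part) * (radial part); the radial part `R` of the ball cancels.
    rw [volFraction, hball_eq K hK hKm, hvol, hfull, hK.setLIntegral_comp_norm μ hKm hg,
      ENNReal.mul_div_mul_right _ _ (right_ne_zero_of_mul hball_ne_zero) hR_ne_top, ← mul_assoc,
      ENNReal.div_mul_cancel hσ_ne_zero (measure_ne_top _ _)]

theorem measure_inter_preimage_norm (hK : IsCone K) (hKm : MeasurableSet K) {s : Set ℝ}
    (hs : MeasurableSet s) :
    μ (K ∩ norm ⁻¹' s) = volFraction μ K * μ (norm ⁻¹' s) := by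
  rw [← setLIntegral_indicator_one_comp_norm μ K hs,
    hK.setLIntegral_comp_norm_eq_volFraction_mul μ hKm (measurable_one.indicator hs),
    ← setLIntegral_univ, setLIntegral_indicator_one_comp_norm μ univ hs, univ_inter]

end IsCone

theorem MeasureTheory.Measure.prod_apply_prod_inter {α β : Type*} [MeasurableSpace α]
    [MeasurableSpace β] (μ : Measure α) (ν : Measure β) [SFinite μ] [SFinite ν] {s : Set α}
    {t : Set β} {S : Set (α × β)} (hS : MeasurableSet S) :
    μ.prod ν (s ×ˢ t ∩ S) = ∫⁻ x in s, ν (t ∩ Prod.mk x ⁻¹' S) ∂μ := by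
  rw [inter_comm, ← Measure.restrict_apply hS, ← Measure.prod_restrict, Measure.prod_apply hS]
  simp_rw [Measure.restrict_apply (measurable_prodMk_left hS), inter_comm]

namespace Submodule

theorem measurePreserving_add_orthogonal (V : Submodule ℝ E) :
    MeasurePreserving (fun p : V × Vᗮ => (p.1 : E) + p.2) := by
  convert V.orthogonalDecomposition.symm.measurePreserving.comp
    (WithLp.volume_preserving_toLp V Vᗮ)
  simp

theorem measurableEmbedding_add_orthogonal (V : Submodule ℝ E) :
    MeasurableEmbedding (fun p : V × Vᗮ => (p.1 : E) + p.2) := by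
  convert V.orthogonalDecomposition.symm.toHomeomorph.measurableEmbedding.comp
    (MeasurableEquiv.toLp 2 (V × Vᗮ)).measurableEmbedding
  simp

variable {F : Type*} [NormedAddCommGroup F] [InnerProductSpace ℝ F] (V : Submodule ℝ F)

theorem preimage_add_orthogonal_add {A B : Set F} (hA : A ⊆ V) (hB : B ⊆ Vᗮ) :
    (fun p : V × Vᗮ => (p.1 : F) + p.2) ⁻¹' (A + B)
      = (Subtype.val ⁻¹' A) ×ˢ (Subtype.val ⁻¹' B) := by
  ext ⟨x, y⟩
  refine ⟨fun ⟨a, ha, b, hb, hab⟩ => ?_, fun ⟨hx, hy⟩ => ⟨x, hx, y, hy, rfl⟩⟩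
  have hdiff : a - x = (y : F) - b := by
    rw [sub_eq_sub_iff_add_eq_add, add_comm (y : F)]
    exact hab
  have hax : a - x = 0 := V.inf_orthogonal_eq_bot.le
    ⟨V.sub_mem (hA ha) x.2, hdiff ▸ Vᗮ.sub_mem y.2 (hB hb)⟩
  obtain rfl : a = x := sub_eq_zero.1 hax
  obtain rfl : b = y := (sub_eq_zero.1 (hdiff ▸ hax)).symm
  exact ⟨ha, hb⟩

theorem preimage_add_orthogonal_closedBall :
    (fun p : V × Vᗮ => (p.1 : F) + p.2) ⁻¹' closedBall 0 1
      = {p | ‖p.1‖ ^ 2 + ‖p.2‖ ^ 2 ≤ 1} := by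
  ext ⟨x, y⟩
  rw [mem_preimage, mem_closedBall_zero_iff, ← sq_le_one_iff₀ (norm_nonneg _),
    norm_add_sq_real, V.inner_right_of_mem_orthogonal x.2 y.2, mul_zero, add_zero]
  rfl

end Submodule

theorem IsCone.volume_add_inter_closedBall {V : Submodule ℝ E} {A B : Set E}
    (hAV : A ⊆ V) (hBW : B ⊆ Vᗮ) (hAm : MeasurableSet A) (hBm : MeasurableSet B)
    (hA : IsCone A) (hB : IsCone B) :
    volume ((A + B) ∩ closedBall 0 1)
      = volFraction volume (Subtype.val ⁻¹' A : Set V)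
        * volFraction volume (Subtype.val ⁻¹' B : Set Vᗮ) * volume (closedBall (0 : E) 1) := by
  set A' : Set V := Subtype.val ⁻¹' A
  set B' : Set Vᗮ := Subtype.val ⁻¹' B
  have hA' : IsCone A' := hA.preimage V.subtype
  have hB' : IsCone B' := hB.preimage Vᗮ.subtype
  have hA'm : MeasurableSet A' := hAm.preimage measurable_subtype_coe
  have hB'm : MeasurableSet B' := hBm.preimage measurable_subtype_coe
  set S : Set (V × Vᗮ) := {p | ‖p.1‖ ^ 2 + ‖p.2‖ ^ 2 ≤ 1}
  have hS : MeasurableSet S := measurableSet_le (by fun_prop) measurable_const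
  set g : ℝ → ℝ≥0∞ := fun r => volume {y : Vᗮ | r ^ 2 + ‖y‖ ^ 2 ≤ 1}
  have hg : Measurable g := measurable_measure_prodMk_left
    (measurableSet_le (by fun_prop) measurable_const :
      MeasurableSet {q : ℝ × Vᗮ | q.1 ^ 2 + ‖q.2‖ ^ 2 ≤ 1})
  have hΦ := V.measurePreserving_add_orthogonal
  have hΦe := V.measurableEmbedding_add_orthogonal
  have hball := V.preimage_add_orthogonal_closedBall
  calc volume ((A + B) ∩ closedBall 0 1) = volume (A' ×ˢ B' ∩ S) := by
        rw [← hΦ.measure_preimage_emb hΦe, preimage_inter,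
          V.preimage_add_orthogonal_add hAV hBW, hball]
    _ = ∫⁻ x in A', volume (B' ∩ Prod.mk x ⁻¹' S) :=
        Measure.prod_apply_prod_inter _ _ hS
    _ = ∫⁻ x in A', volFraction volume B' * g ‖x‖ :=
        lintegral_congr fun x => hB'.measure_inter_preimage_norm volume hB'm
          (s := {t | ‖x‖ ^ 2 + t ^ 2 ≤ 1}) (measurableSet_le (by fun_prop) measurable_const)
    _ = volFraction volume B' * (volFraction volume A' * ∫⁻ x : V, g ‖x‖) := by
        rw [lintegral_const_mul (f := fun x : V => g ‖x‖) _ (hg.comp measurable_norm),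
          hA'.setLIntegral_comp_norm_eq_volFraction_mul volume hA'm hg]
    _ = volFraction volume A' * volFraction volume B' * volume S := by
        rw [Measure.volume_eq_prod, Measure.prod_apply hS, mul_left_comm, ← mul_assoc]
        rfl
    _ = _ := by rw [← hΦ.measure_preimage_emb hΦe, hball]

theorem cone_product_volume_general {d : ℕ} (V : Submodule ℝ (Euc d))
    (A B : Set (Euc d))
    (hAV : A ⊆ (V : Set (Euc d))) (hBW : B ⊆ (Vᗮ : Set (Euc d)))
    (hAm : MeasurableSet A) (hBm : MeasurableSet B)
    -- `A` and `B` are cones (closed under multiplication by positive scalars):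
    (hAcone : ∀ c : ℝ, 0 < c → c • A ⊆ A) (hBcone : ∀ c : ℝ, 0 < c → c • B ⊆ B) :
    (volume ((A + B) ∩ closedBall (0 : Euc d) 1)).toReal /
        (volume (closedBall (0 : Euc d) 1)).toReal
      = ((volume ((Subtype.val ⁻¹' A : Set ↥V) ∩ closedBall (0 : ↥V) 1)).toReal /
            (volume (closedBall (0 : ↥V) 1)).toReal)
        * ((volume ((Subtype.val ⁻¹' B : Set ↥Vᗮ) ∩ closedBall (0 : ↥Vᗮ) 1)).toReal /
            (volume (closedBall (0 : ↥Vᗮ) 1)).toReal) := by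
  have hball : (volume (closedBall (0 : Euc d) 1)).toReal ≠ 0 :=
    ENNReal.toReal_ne_zero.2
      ⟨(measure_closedBall_pos _ _ one_pos).ne', measure_closedBall_lt_top.ne⟩
  rw [IsCone.volume_add_inter_closedBall hAV hBW hAm hBm hAcone hBcone, ENNReal.toReal_mul,
    mul_div_cancel_right₀ _ hball, ENNReal.toReal_mul, volFraction, volFraction,
    ENNReal.toReal_div, ENNReal.toReal_div]

/-- product cones.  Let `V ≤ ℝ^d` with `1 ≤ dim V ≤ d-1`,
`W = V^⊥`, and let `A ⊆ V`, `B ⊆ W` be measurable cones.  Then the volume fraction of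
`A + B` in `ℝ^d` is the product of the volume fraction of `A` in `V` and that of `B`
in `W`. -/
theorem cone_product_volume {d : ℕ} (V : Submodule ℝ (Euc d))
    (h1 : 1 ≤ Module.finrank ℝ V) (h2 : Module.finrank ℝ V ≤ d - 1)
    (A B : Set (Euc d))
    (hAV : A ⊆ (V : Set (Euc d))) (hBW : B ⊆ (Vᗮ : Set (Euc d)))
    (hAm : MeasurableSet A) (hBm : MeasurableSet B)
    -- `A` and `B` are cones (closed under multiplication by positive scalars):
    (hAcone : ∀ c : ℝ, 0 < c → c • A ⊆ A) (hBcone : ∀ c : ℝ, 0 < c → c • B ⊆ B) :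
    (volume ((A + B) ∩ closedBall (0 : Euc d) 1)).toReal /
        (volume (closedBall (0 : Euc d) 1)).toReal
      = ((volume ((Subtype.val ⁻¹' A : Set ↥V) ∩ closedBall (0 : ↥V) 1)).toReal /
            (volume (closedBall (0 : ↥V) 1)).toReal)
        * ((volume ((Subtype.val ⁻¹' B : Set ↥Vᗮ) ∩ closedBall (0 : ↥Vᗮ) 1)).toReal /
            (volume (closedBall (0 : ↥Vᗮ) 1)).toReal) :=
  cone_product_volume_general V A B hAV hBW hAm hBm hAcone hBcone
end
end

section
/- (Rota) Let 𝒜 be a central hyperplane arrangement in ℝ^d. Then for every x ∈ L(𝒜), (−1)^{d − dim x} μ(x) > 0; in particular, the nonzero coefficients of the characteristic polynomial χ_𝒜(t) strictly alternate in sign. -/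
/-!
Formalization of statements from "Projection Volumes of Hyperplane Arrangements"
by Klivans and Swartz.
-/

open scoped RealInnerProductSpace Pointwise
open MeasureTheory Metric Set

noncomputable section

attribute [local instance] Classical.decEq Classical.propDecidable

variable {E : Type*} [NormedAddCommGroup E] [InnerProductSpace ℝ E] [FiniteDimensional ℝ E]
  [MeasurableSpace E] [BorelSpace E]

/-!
`μ(x)` equals the crosscut sum `ν_𝒜(x) = ∑_{S ⊆ 𝒜, ⋂S = x} (-1)^|S|` (Whitney's formula), because
the defining recursion determines `μ` and `ν_𝒜` satisfies it: the sets `S` with `x ⊆ ⋂S` are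
exactly the subsets of `𝒜_x = {H ∈ 𝒜 | x ⊆ H}`, and `∑_{S ⊆ 𝒜_x} (-1)^|S|` is `1` if `𝒜_x = ∅`,
i.e. `x = ℝ^d`, and `0` otherwise.

For the sign, take `H` in a smallest `S` with `⋂S = x`. Splitting the subsets of `𝒜` according to
whether they contain `H` gives `ν_𝒜(x) = -∑ ν_{𝒜∖H}(y)` over the flats `y ≠ x` of `𝒜 ∖ H` with
`y ∩ H = x`. Each such `y` has dimension `dim x + 1`, and `⋂(S ∖ H)` is one of them by minimality
of `S`, so induction on `𝒜` shows that the sign of `ν_𝒜(x)` is `(-1)^(d - dim x)`.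
-/

namespace Finset

theorem eqOn_of_sum_filter_le_eq_s15 {α M : Type*} [PartialOrder α] [AddCommGroup M]
    {s : Finset α} {f g : α → M}
    (h : ∀ x ∈ s, ∑ z ∈ s with x ≤ z, f z = ∑ z ∈ s with x ≤ z, g z) :
    Set.EqOn f g s := by
  refine fun x hx ↦ (s.wellFoundedOn (r := (· > ·))).induction (P := fun x ↦ f x = g x) hx
    fun x hx ih ↦ ?_
  have hsplit (φ : α → M) : ∑ z ∈ s with x ≤ z, φ z = φ x + ∑ z ∈ s with x < z, φ z := by
    rw [← sum_filter_add_sum_filter_not _ (x = ·), filter_filter, filter_filter]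
    congr 1
    · rw [sum_eq_single_of_mem x (by simpa using hx)]
      grind
    · congr 1
      ext z
      simp [lt_iff_le_and_ne]
  have hrest : ∑ z ∈ s with x < z, f z = ∑ z ∈ s with x < z, g z :=
    sum_congr rfl fun z hz ↦ ih z (mem_filter.1 hz).1 (mem_filter.1 hz).2
  have := h x hx
  rw [hsplit f, hsplit g, hrest] at this
  exact add_right_cancel this

section Crosscut

variable {α : Type*} [SemilatticeInf α] [OrderTop α] [DecidableEq α] {A : Finset α} {x H : α}

def flats (A : Finset α) : Finset α := A.powerset.image fun S : Finset α ↦ S.inf id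

def crosscutSum (A : Finset α) (x : α) : ℤ := ∑ S ∈ A.powerset with S.inf id = x, (-1) ^ #S

theorem mem_flats : x ∈ A.flats ↔ ∃ S ⊆ A, S.inf id = x := by
  simp [flats]

theorem sum_flats_filter_crosscutSum (p : α → Prop) [DecidablePred p] :
    ∑ y ∈ A.flats with p y, A.crosscutSum y = ∑ S ∈ A.powerset with p (S.inf id), (-1 : ℤ) ^ #S := by
  rw [sum_filter, sum_filter, ← sum_fiberwise_of_maps_to (g := fun S : Finset α ↦ S.inf id)
    (t := A.flats) fun S hS ↦ mem_image_of_mem _ hS]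
  refine sum_congr rfl fun y _ ↦ ?_
  rw [crosscutSum]
  split_ifs with hy
  · exact sum_congr rfl fun S hS ↦ by rw [(mem_filter.1 hS).2, if_pos hy]
  · exact (sum_eq_zero fun S hS ↦ by rw [(mem_filter.1 hS).2, if_neg hy]).symm

theorem sum_crosscutSum_filter_le (hA : ⊤ ∉ A) (hx : x ∈ A.flats) :
    ∑ y ∈ A.flats with x ≤ y, A.crosscutSum y = if x = ⊤ then 1 else 0 := by
  have hpow : {S ∈ A.powerset | x ≤ S.inf id} = {H ∈ A | x ≤ H}.powerset := by
    ext S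
    simp only [mem_filter, mem_powerset, Finset.le_inf_iff, id, subset_iff]
    grind
  have htop : {H ∈ A | x ≤ H} = ∅ ↔ x = ⊤ := by
    obtain ⟨S, hSA, rfl⟩ := mem_flats.1 hx
    rw [filter_eq_empty_iff]
    refine ⟨fun h ↦ (Finset.inf_eq_top_iff _ _).2 fun H hH ↦ ?_, fun h H hH hle ↦ ?_⟩
    · exact absurd (Finset.inf_le hH) (h (hSA hH))
    · exact hA (top_le_iff.1 (h ▸ hle) ▸ hH)
  rw [sum_flats_filter_crosscutSum, hpow, sum_powerset_neg_one_pow_card, if_congr htop rfl rfl]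

theorem crosscutSum_top (hA : ⊤ ∉ A) : A.crosscutSum ⊤ = 1 := by
  have : {S ∈ A.powerset | S.inf id = ⊤} = {∅} := by
    ext S
    simp only [mem_filter, mem_powerset, Finset.inf_eq_top_iff, id, mem_singleton,
      eq_empty_iff_forall_notMem]
    grind
  rw [crosscutSum, this, sum_singleton, card_empty, pow_zero]

theorem crosscutSum_insert (hH : H ∉ A) (hxH : x ≤ H) :
    (insert H A).crosscutSum x = -∑ y ∈ A.flats with y ⊓ H = x ∧ y ≠ x, A.crosscutSum y := by
  have hwith : ∑ S ∈ A.powerset with (insert H S).inf id = x, (-1 : ℤ) ^ #(insert H S)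
      = -∑ S ∈ A.powerset with S.inf id ⊓ H = x, (-1) ^ #S := by
    rw [sum_filter, sum_filter, ← sum_neg_distrib]
    refine sum_congr rfl fun S hS ↦ ?_
    rw [Finset.inf_insert, id, inf_comm, card_insert_of_notMem fun h ↦ hH (mem_powerset.1 hS h),
      pow_succ]
    split_ifs <;> ring
  have hsplit : ∑ S ∈ A.powerset with S.inf id ⊓ H = x, (-1 : ℤ) ^ #S
      = A.crosscutSum x + ∑ S ∈ A.powerset with S.inf id ⊓ H = x ∧ S.inf id ≠ x, (-1) ^ #S := by
    rw [crosscutSum, ← sum_filter_add_sum_filter_not _ fun S ↦ S.inf id = x, filter_filter,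
      filter_filter]
    congr 2
    ext S
    simp only [mem_filter]
    grind [inf_eq_left]
  rw [crosscutSum, sum_filter, sum_powerset_insert hH, ← sum_filter, ← sum_filter, hwith, hsplit,
    sum_flats_filter_crosscutSum (p := fun y ↦ y ⊓ H = x ∧ y ≠ x), crosscutSum]
  ring

theorem exists_mem_flats_erase_inf_eq (hx : x ∈ A.flats) (hxt : x ≠ ⊤) :
    ∃ H ∈ A, x ≤ H ∧ ∃ y ∈ (A.erase H).flats, y ⊓ H = x ∧ y ≠ x := by
  obtain ⟨S, hS, hSmin⟩ := exists_min_image {S ∈ A.powerset | S.inf id = x} card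
    (by simpa [Finset.Nonempty, mem_flats] using hx)
  obtain ⟨hSA, hSx⟩ : S ⊆ A ∧ S.inf id = x := by simpa using hS
  obtain ⟨H, hHS⟩ : S.Nonempty := nonempty_iff_ne_empty.2 fun h ↦ hxt (by simp [← hSx, h])
  have hinf : (S.erase H).inf id ⊓ H = x := by
    conv_rhs => rw [← hSx, ← insert_erase hHS]
    rw [Finset.inf_insert, id, inf_comm]
  refine ⟨H, hSA hHS, hSx ▸ Finset.inf_le hHS, (S.erase H).inf id,
    mem_flats.2 ⟨_, erase_subset_erase H hSA, rfl⟩, hinf, fun h ↦ ?_⟩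
  have := hSmin (S.erase H) (by simpa [h] using (erase_subset H S).trans hSA)
  have := card_erase_lt_of_mem hHS
  omega

end Crosscut

end Finset

section Hyperplanes

open Module

variable {K V : Type*} [Field K] [AddCommGroup V] [Module K V] [FiniteDimensional K V]

theorem Submodule.finrank_inf_add_one_of_isCoatom {H y : Submodule K V} (hH : IsCoatom H)
    (hy : ¬y ≤ H) : finrank K ↥(y ⊓ H) + 1 = finrank K y := by
  obtain ⟨v, hvy, hvH⟩ := SetLike.not_le_iff_exists.1 hy
  have hcompl := isCompl_span_singleton_of_isCoatom_of_notMem hH hvH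
  have hsup : (K ∙ v) ⊔ y ⊓ H = y := by
    rw [inf_comm, ← sup_inf_assoc_of_le _ ((span_singleton_le_iff_mem v y).2 hvy), sup_comm,
      hcompl.sup_eq_top, top_inf_eq]
  have hinf : (K ∙ v) ⊓ (y ⊓ H) = ⊥ :=
    eq_bot_iff.2 fun w hw ↦ hcompl.inf_eq_bot ▸ ⟨hw.2.2, hw.1⟩
  have hv : v ≠ 0 := fun h ↦ hvH (h ▸ H.zero_mem)
  have := finrank_sup_add_finrank_inf_eq (K ∙ v) (y ⊓ H)
  rw [hsup, hinf, finrank_bot, finrank_span_singleton hv] at this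
  omega

theorem neg_one_pow_mul_crosscutSum_pos {A : Finset (Submodule K V)} (hA : ∀ H ∈ A, IsCoatom H)
    {x : Submodule K V} (hx : x ∈ A.flats) :
    0 < (-1 : ℤ) ^ (finrank K V - finrank K x) * A.crosscutSum x := by
  induction A using Finset.strongInduction generalizing x with
  | H A ih =>
  by_cases hxt : x = ⊤
  · rw [hxt, Finset.crosscutSum_top fun h ↦ (hA ⊤ h).ne_top rfl, finrank_top, Nat.sub_self]
    norm_num
  obtain ⟨H, hHA, hxH, y₀, hy₀, hy₀H, hy₀x⟩ := Finset.exists_mem_flats_erase_inf_eq hx hxt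
  have hdel := Finset.crosscutSum_insert (Finset.notMem_erase H A) hxH
  rw [Finset.insert_erase hHA] at hdel
  have hcodim : finrank K V - finrank K x = finrank K V - finrank K x - 1 + 1 := by
    have := Submodule.finrank_lt hxt
    omega
  rw [hdel, hcodim, pow_succ, mul_neg_one, neg_mul_neg, Finset.mul_sum]
  refine Finset.sum_pos (fun y hy ↦ ?_) ⟨y₀, Finset.mem_filter.2 ⟨hy₀, hy₀H, hy₀x⟩⟩
  obtain ⟨hy, hyH, hyx⟩ := Finset.mem_filter.1 hy
  have hrank := Submodule.finrank_inf_add_one_of_isCoatom (hA H hHA)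
    fun hle ↦ hyx (hyH ▸ (inf_eq_left.2 hle).symm)
  rw [hyH] at hrank
  have := ih (A.erase H) (Finset.erase_ssubset hHA) (fun G hG ↦ hA G (Finset.mem_of_mem_erase hG))
    hy
  rwa [← hrank, Nat.sub_add_eq] at this

end Hyperplanes

theorem IsLinearHyperplane.isCoatom {F : Type*} [NormedAddCommGroup F] [InnerProductSpace ℝ F]
    {H : Submodule ℝ F} (hH : IsLinearHyperplane H) : IsCoatom H := by
  obtain ⟨η, hη, rfl⟩ := hH
  have hker : (ℝ ∙ η)ᗮ = LinearMap.ker (innerₛₗ ℝ η) := by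
    ext v
    simp [Submodule.mem_orthogonal_singleton_iff_inner_right]
  have hne : innerₛₗ ℝ η ≠ 0 := fun h ↦ hη (inner_self_eq_zero.1 (LinearMap.congr_fun h η))
  rw [hker]
  exact LinearMap.isCoatom_ker_of_surjective (LinearMap.surjective_of_ne_zero hne)

/-- Rota.  For a central arrangement `𝒜` in `ℝ^d`,
`(-1)^(d - dim x) μ(x) > 0` for every `x ∈ L(𝒜)`; in particular the nonzero
coefficients of the characteristic polynomial (the coefficient of `t^(r-d+k)` being
`a_k = ∑_{x ∈ L(𝒜), dim x = k} μ(x)`) strictly alternate in sign: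
`(-1)^(d-k) a_k > 0` whenever `a_k ≠ 0`. -/
theorem moebius_alternates_in_sign {d : ℕ}
    (A : Finset (Submodule ℝ (Euc d))) (hA : ∀ H ∈ A, IsLinearHyperplane H)
    (mu : Submodule ℝ (Euc d) → ℤ)
    -- `mu` is the one-variable Möbius function `μ(x) = μ(ℝ^d, x)` of `L(𝒜)`
    -- (ordered by reverse inclusion, with minimal element `⊤ = ℝ^d`),
    -- characterized by the defining recursion `∑_{⊤ ⊒ z ⊒ x} μ(z) = δ_{x,⊤}`:
    (hmu : ∀ x ∈ interPoset A,
      ∑ z ∈ (interPoset A).filter (fun z : Submodule ℝ (Euc d) => x ≤ z), mu z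
        = if x = (⊤ : Submodule ℝ (Euc d)) then 1 else 0)
 :
    (∀ x ∈ interPoset A, 0 < (-1 : ℤ) ^ (d - Module.finrank ℝ x) * mu x)
    ∧ ∀ k : ℕ,
        (∑ x ∈ (interPoset A).filter
          (fun x : Submodule ℝ (Euc d) => Module.finrank ℝ x = k), mu x) ≠ 0 →
        0 < (-1 : ℤ) ^ (d - k) *
          ∑ x ∈ (interPoset A).filter
            (fun x : Submodule ℝ (Euc d) => Module.finrank ℝ x = k), mu x := by
  have hcoatom : ∀ H ∈ A, IsCoatom H := fun H hH ↦ (hA H hH).isCoatom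
  have hflats : interPoset A = A.flats := rfl
  have hmu_eq : Set.EqOn mu A.crosscutSum (interPoset A) :=
    Finset.eqOn_of_sum_filter_le_eq_s15 fun x hx ↦ (hmu x hx).trans
      (Finset.sum_crosscutSum_filter_le (fun h ↦ (hcoatom ⊤ h).ne_top rfl) (hflats ▸ hx)).symm
  have hsign : ∀ x ∈ interPoset A, 0 < (-1 : ℤ) ^ (d - Module.finrank ℝ x) * mu x := by
    intro x hx
    have := neg_one_pow_mul_crosscutSum_pos hcoatom (hflats ▸ hx)
    rwa [finrank_euclideanSpace_fin, ← hmu_eq hx] at this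
  refine ⟨hsign, fun k hk ↦ ?_⟩
  rw [Finset.mul_sum]
  refine Finset.sum_pos (fun x hx ↦ ?_) (Finset.nonempty_of_sum_ne_zero hk)
  obtain ⟨hxA, rfl⟩ := Finset.mem_filter.1 hx
  exact hsign x hxA
end
end

section
/- Let C ⊆ ℝ^d be a nonempty closed polyhedral set (a finite intersection of closed affine halfspaces) and let F be a face of C. Then for every a ∈ ℝ^d the limit lim_{r→∞} λ(B_r(a) ∩ X_F)/λ(B_r(a)) exists, and its value is independent of the choice of a, where B_r(a) is the closed ball of radius r centered at a and λ is Lebesgue measure. -/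
/-!
Formalization of statements from "Projection Volumes of Hyperplane Arrangements"
by Klivans and Swartz.
-/

open scoped RealInnerProductSpace Pointwise
open MeasureTheory Metric Set

noncomputable section

attribute [local instance] Classical.decEq Classical.propDecidable

variable {E : Type*} [NormedAddCommGroup E] [InnerProductSpace ℝ E] [FiniteDimensional ℝ E]
  [MeasurableSpace E] [BorelSpace E]

/-- A (closed) polyhedral set: a finite intersection of closed affine halfspaces. -/
def IsPolyhedralSet (C : Set E) : Prop :=
  ∃ (m : ℕ) (η : Fin m → E) (b : Fin m → ℝ), C = {z | ∀ i, ⟪η i, z⟫ ≤ b i}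

/-!
If `p = π_C(z)` lies in the relative interior of the face `F`, then `z - p` is normal to `C` at
`p`, and since `F` extends beyond `p` in every direction of its affine span, `z - p` is normal
to `C` at every point of `F`. Hence a convex combination of `z₁, z₂ ∈ X_F` projects to the same
convex combination of their projections, which again lies in the relative interior of `F`:
`X_F` is convex.

For a convex set `X` containing `x`, star-convexity about `x` makes the density
`λ(B_r(x) ∩ X) / λ(B_r(x))` nonincreasing in `r`, so it converges. For another centre `a`, with
`c = |a - x|`, we have `B_{r-c}(x) ⊆ B_r(a) ⊆ B_{r+c}(x)`, and the volume ratios `((r ± c)/r)^d`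
tend to `1`.
-/

open Module Filter Topology

theorem IsPolyhedralSet.convex {V : Type*} [NormedAddCommGroup V] [InnerProductSpace ℝ V]
    {C : Set V} (hC : IsPolyhedralSet C) : Convex ℝ C := by
  obtain ⟨m, η, b, rfl⟩ := hC
  simp only [ofPred_forall]
  exact convex_iInter fun i => convex_halfSpace_le (innerₛₗ ℝ (η i)).isLinear (b i)

section IntrinsicInterior

variable {V : Type*} [NormedAddCommGroup V] [NormedSpace ℝ V] {s : Set V} {x y : V}

theorem mem_intrinsicInterior_iff_ball :
    x ∈ intrinsicInterior ℝ s ↔ x ∈ affineSpan ℝ s ∧ ∃ ε > 0, ball x ε ∩ affineSpan ℝ s ⊆ s := by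
  simp only [mem_intrinsicInterior, mem_interior_iff_mem_nhds, Metric.mem_nhds_iff]
  constructor
  · rintro ⟨y, ⟨ε, hε, hball⟩, rfl⟩
    exact ⟨y.2, ε, hε, fun z ⟨hz, hzs⟩ =>
      hball (show (⟨z, hzs⟩ : affineSpan ℝ s) ∈ ball y ε from hz)⟩
  · rintro ⟨hx, ε, hε, hball⟩
    exact ⟨⟨x, hx⟩, ⟨ε, hε, fun z hz => hball ⟨hz, z.2⟩⟩, rfl⟩

theorem exists_add_smul_sub_mem_of_mem_intrinsicInterior (hx : x ∈ intrinsicInterior ℝ s)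
    (hy : y ∈ affineSpan ℝ s) : ∃ ε : ℝ, 0 < ε ∧ x + ε • (x - y) ∈ s := by
  obtain ⟨hxs, δ, hδ, hball⟩ := mem_intrinsicInterior_iff_ball.1 hx
  set ε := δ / (‖x - y‖ + 1)
  have hε : 0 < ε := by positivity
  refine ⟨ε, hε, hball ⟨?_, ?_⟩⟩
  · rw [mem_ball, dist_eq_norm, add_sub_cancel_left, norm_smul, Real.norm_of_nonneg hε.le]
    calc ε * ‖x - y‖ < ε * (‖x - y‖ + 1) := by gcongr; linarith
      _ = δ := div_mul_cancel₀ _ (by positivity)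
  · simpa [vsub_eq_sub, vadd_eq_add, add_comm] using
      (affineSpan ℝ s).smul_vsub_vadd_mem ε hxs hy hxs

theorem Convex.combo_intrinsicInterior_self_mem_intrinsicInterior (hs : Convex ℝ s)
    (hx : x ∈ intrinsicInterior ℝ s) (hy : y ∈ s) {a b : ℝ} (ha : 0 < a) (hb : 0 ≤ b)
    (hab : a + b = 1) : a • x + b • y ∈ intrinsicInterior ℝ s := by
  obtain ⟨hxs, δ, hδ, hball⟩ := mem_intrinsicInterior_iff_ball.1 hx
  have hys : y ∈ affineSpan ℝ s := subset_affineSpan ℝ s hy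
  obtain rfl : b = 1 - a := by linarith
  have hcombo : a • x + (1 - a) • y = a • (x - y) + y := by module
  rw [hcombo]
  refine mem_intrinsicInterior_iff_ball.2
    ⟨(affineSpan ℝ s).smul_vsub_vadd_mem a hxs hys hys, a * δ, by positivity, ?_⟩
  rintro w ⟨hw, hws⟩
  -- `w` is the image under the homothety of ratio `a` about `y` of a point `w'` near `x`
  set w' := a⁻¹ • (w - y) + y
  have hw' : w' ∈ s := by
    refine hball ⟨?_, (affineSpan ℝ s).smul_vsub_vadd_mem a⁻¹ hws hys hys⟩
    have : w' - x = a⁻¹ • (w - (a • (x - y) + y)) := by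
      simp only [w', smul_sub, smul_add, smul_smul, inv_mul_cancel₀ ha.ne', one_smul]
      abel
    rw [mem_ball, dist_eq_norm, this, norm_smul, Real.norm_of_nonneg (inv_nonneg.2 ha.le),
      inv_mul_lt_iff₀ ha, ← dist_eq_norm]
    exact hw
  have hw_eq : w = a • w' + (1 - a) • y := by
    simp only [w', smul_add, smul_smul, mul_inv_cancel₀ ha.ne', one_smul]
    module
  rw [hw_eq]
  exact hs hw' hy ha.le (by linarith) (by ring)

end IntrinsicInterior

section NearestPoint

variable {V : Type*} [NormedAddCommGroup V] [InnerProductSpace ℝ V] {C F : Set V} {z p : V}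

theorem isNearestPt_iff_inner_le_zero (hC : Convex ℝ C) :
    IsNearestPt C z p ↔ p ∈ C ∧ ∀ q ∈ C, ⟪z - p, q - p⟫ ≤ 0 := by
  refine and_congr_right fun hp => ?_
  rw [← norm_eq_iInf_iff_real_inner_le_zero hC hp]
  have : Nonempty C := ⟨⟨p, hp⟩⟩
  have hbdd : BddBelow (range fun w : C => ‖z - w‖) := ⟨0, by rintro _ ⟨w, rfl⟩; positivity⟩
  simp only [dist_eq_norm]
  exact ⟨fun h => le_antisymm (le_ciInf fun w => h w w.2) (ciInf_le hbdd ⟨p, hp⟩),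
    fun h q hq => h ▸ ciInf_le hbdd ⟨q, hq⟩⟩

theorem inner_le_zero_of_isNearestPt_of_mem_intrinsicInterior (hC : Convex ℝ C) (hFC : F ⊆ C)
    (hz : IsNearestPt C z p) (hp : p ∈ intrinsicInterior ℝ F) {p' q : V} (hp' : p' ∈ F)
    (hq : q ∈ C) : ⟪z - p, q - p'⟫ ≤ 0 := by
  have hnormal := ((isNearestPt_iff_inner_le_zero hC).1 hz).2
  obtain ⟨ε, hε, hray⟩ :=
    exists_add_smul_sub_mem_of_mem_intrinsicInterior hp (subset_affineSpan ℝ F hp')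
  -- `F` extends beyond `p` in the direction `p - p'`, so the normal inequality at `p` applies
  -- to that direction as well
  have hp'p : ⟪z - p, p - p'⟫ ≤ 0 := by
    have := hnormal _ (hFC hray)
    rw [add_sub_cancel_left, real_inner_smul_right] at this
    exact nonpos_of_mul_nonpos_right this hε
  calc ⟪z - p, q - p'⟫ = ⟪z - p, q - p⟫ + ⟪z - p, p - p'⟫ := by
        rw [← inner_add_right, sub_add_sub_cancel]
    _ ≤ 0 := add_nonpos (hnormal q hq) hp'p

theorem convex_projRegion (hC : Convex ℝ C) (hFC : F ⊆ C) (hF : Convex ℝ F) :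
    Convex ℝ (projRegion C F) := by
  refine convex_iff_openSegment_subset.2 ?_
  rintro z₁ ⟨p₁, hz₁, hp₁⟩ z₂ ⟨p₂, hz₂, hp₂⟩ _ ⟨a, b, ha, hb, hab, rfl⟩
  have hp : a • p₁ + b • p₂ ∈ intrinsicInterior ℝ F :=
    hF.combo_intrinsicInterior_self_mem_intrinsicInterior hp₁ (intrinsicInterior_subset hp₂)
      ha hb.le hab
  have hpF := intrinsicInterior_subset hp
  refine ⟨_, (isNearestPt_iff_inner_le_zero hC).2 ⟨hFC hpF, fun q hq => ?_⟩, hp⟩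
  have h₁ := inner_le_zero_of_isNearestPt_of_mem_intrinsicInterior hC hFC hz₁ hp₁ hpF hq
  have h₂ := inner_le_zero_of_isNearestPt_of_mem_intrinsicInterior hC hFC hz₂ hp₂ hpF hq
  have hsplit : a • z₁ + b • z₂ - (a • p₁ + b • p₂) = a • (z₁ - p₁) + b • (z₂ - p₂) := by module
  rw [hsplit, inner_add_left, real_inner_smul_left, real_inner_smul_left]
  exact add_nonpos (mul_nonpos_of_nonneg_of_nonpos ha.le h₁)
    (mul_nonpos_of_nonneg_of_nonpos hb.le h₂)

theorem projRegion_nonempty [FiniteDimensional ℝ V] (hFC : F ⊆ C) (hF : Convex ℝ F)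
    (hne : F.Nonempty) :
    (projRegion C F).Nonempty := by
  obtain ⟨p, hp⟩ := hne.intrinsicInterior hF
  exact ⟨p, p, ⟨hFC (intrinsicInterior_subset hp), fun q _ => by simp⟩, hp⟩

end NearestPoint

def ballDensity {V : Type*} [PseudoMetricSpace V] [MeasurableSpace V] (μ : Measure V)
    (X : Set V) (a : V) (r : ℝ) : ℝ :=
  (μ (closedBall a r ∩ X)).toReal / (μ (closedBall a r)).toReal

theorem ballDensity_nonneg {V : Type*} [PseudoMetricSpace V] [MeasurableSpace V]
    (μ : Measure V) (X : Set V) (a : V) (r : ℝ) : 0 ≤ ballDensity μ X a r :=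
  div_nonneg ENNReal.toReal_nonneg ENNReal.toReal_nonneg

theorem exists_tendsto_atTop_of_antitoneOn_Ioi {f : ℝ → ℝ} (hf : AntitoneOn f (Ioi 0))
    (hbdd : BddBelow (range f)) : ∃ L, Tendsto f atTop (𝓝 L) := by
  have hanti : Antitone fun r => f (max r 1) := fun r s hrs =>
    hf (one_pos.trans_le (le_max_right r 1)) (one_pos.trans_le (le_max_right s 1))
      (max_le_max hrs le_rfl)
  have hbdd' := hbdd.mono (range_comp_subset_range (fun r => max r 1) f)
  refine ⟨_, (tendsto_atTop_ciInf hanti hbdd').congr' ?_⟩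
  filter_upwards [eventually_ge_atTop 1] with r hr
  rw [max_eq_left hr]

theorem tendsto_add_const_div_self_pow (e : ℝ) (n : ℕ) :
    Tendsto (fun r : ℝ => ((r + e) / r) ^ n) atTop (𝓝 1) := by
  have h : Tendsto (fun r : ℝ => (1 + e / r) ^ n) atTop (𝓝 1) := by
    simpa using ((tendsto_const_nhds (x := (1 : ℝ))).add
      ((tendsto_const_nhds (x := e)).div_atTop tendsto_id)).pow n
  refine h.congr' ?_
  filter_upwards [eventually_gt_atTop 0] with r hr
  rw [add_div, div_self hr.ne']

section Density

variable {V : Type*} [NormedAddCommGroup V] [NormedSpace ℝ V] [FiniteDimensional ℝ V]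
  [MeasurableSpace V] (μ : Measure V) [μ.IsAddHaarMeasure]

theorem measure_unitClosedBall_toReal_pos : 0 < (μ (closedBall (0 : V) 1)).toReal :=
  ENNReal.toReal_pos (measure_closedBall_pos μ 0 one_pos).ne' measure_closedBall_lt_top.ne

variable [BorelSpace V] (X : Set V)

theorem measure_closedBall_inter_toReal (a : V) {r : ℝ} (hr : 0 < r) :
    (μ (closedBall a r ∩ X)).toReal
      = ballDensity μ X a r * (r ^ finrank ℝ V * (μ (closedBall (0 : V) 1)).toReal) := by
  have hball : (μ (closedBall a r)).toReal
      = r ^ finrank ℝ V * (μ (closedBall (0 : V) 1)).toReal := by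
    rw [Measure.addHaar_closedBall' μ a hr.le, ENNReal.toReal_mul,
      ENNReal.toReal_ofReal (by positivity)]
  have hpos := measure_unitClosedBall_toReal_pos μ
  rw [ballDensity, hball, div_mul_cancel₀ _ (by positivity)]

theorem ballDensity_mul_pow_le_of_closedBall_subset {a b : V} {r s : ℝ} (hr : 0 < r)
    (hs : 0 < s) (h : closedBall a r ⊆ closedBall b s) :
    ballDensity μ X a r * r ^ finrank ℝ V ≤ ballDensity μ X b s * s ^ finrank ℝ V := by
  have hm : (μ (closedBall a r ∩ X)).toReal ≤ (μ (closedBall b s ∩ X)).toReal :=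
    ENNReal.toReal_mono ((measure_mono inter_subset_left).trans_lt measure_closedBall_lt_top).ne
      (measure_mono (inter_subset_inter_left X h))
  rw [measure_closedBall_inter_toReal μ X a hr, measure_closedBall_inter_toReal μ X b hs,
    ← mul_assoc, ← mul_assoc] at hm
  exact le_of_mul_le_mul_right hm (measure_unitClosedBall_toReal_pos μ)

variable {X}

theorem Convex.ballDensity_antitoneOn (hX : Convex ℝ X) {x : V} (hx : x ∈ X) :
    AntitoneOn (ballDensity μ X x) (Ioi 0) := by
  intro r (hr : 0 < r) s (hs : 0 < s) hrs
  set t := r / s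
  have ht : t ∈ Icc (0 : ℝ) 1 := ⟨by positivity, div_le_one_of_le₀ hrs hs.le⟩
  have hsub : AffineMap.homothety x t '' (closedBall x s ∩ X) ⊆ closedBall x r ∩ X := by
    rintro _ ⟨y, ⟨hys, hyX⟩, rfl⟩
    refine ⟨?_, AffineMap.homothety_eq_lineMap x t y ▸ hX.lineMap_mem hx hyX ht⟩
    rw [mem_closedBall, dist_homothety_center, Real.norm_of_nonneg ht.1, dist_comm]
    calc t * dist y x ≤ t * s := by gcongr; exact hys
      _ = r := div_mul_cancel₀ r hs.ne'
  have hm := ENNReal.toReal_mono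
    ((measure_mono inter_subset_left).trans_lt (measure_closedBall_lt_top (μ := μ))).ne
    (measure_mono hsub)
  rw [Measure.addHaar_image_homothety, ENNReal.toReal_mul, ENNReal.toReal_ofReal (abs_nonneg _),
    abs_of_nonneg (by positivity), measure_closedBall_inter_toReal μ X x hs,
    measure_closedBall_inter_toReal μ X x hr] at hm
  have hβ := measure_unitClosedBall_toReal_pos μ
  refine le_of_mul_le_mul_left (a := r ^ finrank ℝ V * (μ (closedBall (0 : V) 1)).toReal) ?_
    (by positivity)
  calc r ^ finrank ℝ V * (μ (closedBall (0 : V) 1)).toReal * ballDensity μ X x s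
      = t ^ finrank ℝ V * (ballDensity μ X x s
          * (s ^ finrank ℝ V * (μ (closedBall (0 : V) 1)).toReal)) := by
        rw [div_pow]; field_simp
    _ ≤ _ := hm
    _ = _ := by ring

theorem Convex.exists_tendsto_ballDensity (hX : Convex ℝ X) (hne : X.Nonempty) :
    ∃ L, ∀ a, Tendsto (ballDensity μ X a) atTop (𝓝 L) := by
  obtain ⟨x, hx⟩ := hne
  obtain ⟨L, hL⟩ := exists_tendsto_atTop_of_antitoneOn_Ioi (hX.ballDensity_antitoneOn μ hx)
    ⟨0, by rintro _ ⟨r, rfl⟩; exact ballDensity_nonneg μ X x r⟩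
  refine ⟨L, fun a => ?_⟩
  set n := finrank ℝ V
  set c := dist a x
  -- balls about `a` are squeezed between balls about `x` of radii `r ∓ c`
  have hshift : ∀ e : ℝ, Tendsto (fun r => ballDensity μ X x (r + e) * (r + e) ^ n / r ^ n)
      atTop (𝓝 L) := by
    intro e
    have h := (hL.comp (tendsto_atTop_add_const_right _ e tendsto_id)).mul
      (tendsto_add_const_div_self_pow e n)
    rw [mul_one] at h
    exact h.congr fun r => by simp only [Function.comp_apply, id, div_pow, mul_div_assoc]
  refine tendsto_of_tendsto_of_tendsto_of_le_of_le' (hshift (-c)) (hshift c) ?_ ?_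
  · filter_upwards [eventually_gt_atTop c] with r hr
    have hr0 : 0 < r := dist_nonneg.trans_lt hr
    rw [div_le_iff₀ (by positivity)]
    refine ballDensity_mul_pow_le_of_closedBall_subset μ X (by linarith) hr0
      (closedBall_subset_closedBall' ?_)
    rw [dist_comm]
    linarith
  · filter_upwards [eventually_gt_atTop 0] with r hr
    rw [le_div_iff₀ (by positivity)]
    exact ballDensity_mul_pow_le_of_closedBall_subset μ X hr (by positivity)
      (closedBall_subset_closedBall' le_rfl)

end Density

theorem projRegion_density_exists_general {d : ℕ} (C : Set (Euc d))
    (hC : IsPolyhedralSet C)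
    (F : Set (Euc d)) (hF : IsFaceOf C F) :
    ∃ L : ℝ, ∀ a : Euc d,
      Filter.Tendsto
        (fun r : ℝ =>
          (volume (closedBall a r ∩ projRegion C F)).toReal /
            (volume (closedBall a r)).toReal)
        Filter.atTop (nhds L) := by
  have hFC : F ⊆ C := hF.2.subset
  have hFconv : Convex ℝ F := hF.2.convex hC.convex
  exact (convex_projRegion hC.convex hFC hFconv).exists_tendsto_ballDensity volume
    (projRegion_nonempty hFC hFconv hF.1)

/-- For a nonempty closed polyhedral set `C ⊆ ℝ^d` and a face `F`
of `C`, the limit `lim_{r→∞} λ(B_r(a) ∩ X_F)/λ(B_r(a))` exists and is independent of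
the center `a`. -/
theorem projRegion_density_exists {d : ℕ} (C : Set (Euc d))
    (hne : C.Nonempty) (hC : IsPolyhedralSet C)
    (F : Set (Euc d)) (hF : IsFaceOf C F) :
    ∃ L : ℝ, ∀ a : Euc d,
      Filter.Tendsto
        (fun r : ℝ =>
          (volume (closedBall a r ∩ projRegion C F)).toReal /
            (volume (closedBall a r)).toReal)
        Filter.atTop (nhds L) :=
  projRegion_density_exists_general C hC F hF
end
end

section
/- Let C ⊆ ℝ^d be a nonempty closed polyhedral set and let F be a bounded face of C with dim F ≥ 1. Then lim_{r→∞} λ(B_r(a) ∩ X_F)/λ(B_r(a)) = 0 for every a ∈ ℝ^d, where B_r(a) is the closed ball of radius r centered at a and λ is Lebesgue measure. -/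
/-!
Formalization of statements from "Projection Volumes of Hyperplane Arrangements"
by Klivans and Swartz.
-/

open scoped RealInnerProductSpace Pointwise
open MeasureTheory Metric Set

noncomputable section

attribute [local instance] Classical.decEq Classical.propDecidable

variable {E : Type*} [NormedAddCommGroup E] [InnerProductSpace ℝ E] [FiniteDimensional ℝ E]
  [MeasurableSpace E] [BorelSpace E]

/-!
If `z` projects onto a point `p` of the relative interior of `F`, then `p` can be moved inside
`F ⊆ C` in both senses of any direction `u` of `F`, so first-order optimality of the nearest
point forces `z - p ⟂ u`. Taking `u` a unit vector, `⟪z, u⟫ = ⟪p, u⟫` stays in a bounded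
interval since `F` is bounded: `X_F` lies in a slab of fixed width orthogonal to `u`. The part of
`B_r(a)` inside that slab has volume `O(r^(d-1))`, whereas `vol B_r(a)` grows like `r^d`.
-/

open Filter Topology Module

section NearestPoint

variable {V : Type*} [NormedAddCommGroup V] [InnerProductSpace ℝ V]

theorem eventually_add_smul_mem_of_mem_intrinsicInterior {F : Set V} {p u : V}
    (hp : p ∈ intrinsicInterior ℝ F) (hu : u ∈ vectorSpan ℝ F) :
    ∀ᶠ t : ℝ in 𝓝 0, p + t • u ∈ F := by
  obtain ⟨q, hq, rfl⟩ := hp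
  have hdir (t : ℝ) : t • u ∈ (affineSpan ℝ F).direction := by
    rw [direction_affineSpan]
    exact Submodule.smul_mem _ t hu
  let line : ℝ → affineSpan ℝ F := fun t =>
    ⟨t • u +ᵥ (q : V), AffineSubspace.vadd_mem_of_mem_direction (hdir t) q.2⟩
  have hline : Continuous line := by fun_prop
  have hline0 : line 0 ∈ interior (((↑) : affineSpan ℝ F → V) ⁻¹' F) := by
    simpa [line] using hq
  filter_upwards [hline.continuousAt.preimage_mem_nhds (isOpen_interior.mem_nhds hline0)]
    with t ht
  simpa [line, add_comm] using interior_subset ht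

theorem IsNearestPt.inner_sub_eq_zero {C : Set V} {z p u : V} (h : IsNearestPt C z p)
    (hu : ∀ᶠ t : ℝ in 𝓝 0, p + t • u ∈ C) : ⟪z - p, u⟫ = 0 := by
  let f : ℝ → ℝ := fun t => ‖z - p - t • u‖ ^ 2
  have hmin : IsLocalMin f 0 := by
    filter_upwards [hu] with t ht
    have := h.2 _ ht
    rw [dist_eq_norm, dist_eq_norm, ← sub_sub] at this
    simp only [f, zero_smul, sub_zero]
    gcongr
  have hf : HasDerivAt f (2 * ⟪z - p, -u⟫) 0 := by
    simpa using (((hasDerivAt_id (0 : ℝ)).smul_const u).const_sub (z - p)).norm_sq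
  simpa [inner_neg_right] using hmin.hasDerivAt_eq_zero hf

theorem projRegion_subset_slab {C F : Set V} {u p₀ : V} {M : ℝ} (hFC : F ⊆ C)
    (hu : u ∈ vectorSpan ℝ F) (hM : F ⊆ closedBall p₀ M) :
    projRegion C F ⊆ {z | |⟪z - p₀, u⟫| ≤ M * ‖u‖} := by
  rintro z ⟨p, hzp, hp⟩
  have hperp : ⟪z - p, u⟫ = 0 := hzp.inner_sub_eq_zero
    ((eventually_add_smul_mem_of_mem_intrinsicInterior hp hu).mono fun _ ht => hFC ht)
  have hpM : ‖p - p₀‖ ≤ M := by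
    simpa [dist_eq_norm] using hM (intrinsicInterior_subset hp)
  calc |⟪z - p₀, u⟫| = |⟪p - p₀, u⟫| := by
        rw [← sub_add_sub_cancel z p p₀, inner_add_left, hperp, zero_add]
    _ ≤ ‖p - p₀‖ * ‖u‖ := abs_real_inner_le_norm _ _
    _ ≤ M * ‖u‖ := by gcongr

theorem exists_norm_eq_one_mem_vectorSpan {F : Set V} (hF : 1 ≤ finrank ℝ (vectorSpan ℝ F)) :
    ∃ u ∈ vectorSpan ℝ F, ‖u‖ = 1 := by
  have hne : vectorSpan ℝ F ≠ ⊥ := fun h => by rw [h, finrank_bot] at hF; omega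
  obtain ⟨v, hv, hv0⟩ := Submodule.exists_mem_ne_zero_of_ne_bot hne
  exact ⟨‖v‖⁻¹ • v, Submodule.smul_mem _ _ hv, norm_smul_inv_norm hv0⟩

end NearestPoint

section Volume

variable {V : Type*} [NormedAddCommGroup V] [InnerProductSpace ℝ V] [FiniteDimensional ℝ V]

theorem exists_orthonormalBasis_apply_zero_eq {n : ℕ} (hV : finrank ℝ V = n + 1) {u : V}
    (hu : ‖u‖ = 1) : ∃ b : OrthonormalBasis (Fin (n + 1)) ℝ V, b 0 = u := by
  obtain ⟨b, hb⟩ := Orthonormal.exists_orthonormalBasis_extension_of_card_eq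
    (v := fun _ : Fin (n + 1) => u) (s := {0}) (by simpa using hV)
    ⟨fun _ => hu, fun i j hij => (hij (Subsingleton.elim i j)).elim⟩
  exact ⟨b, hb 0 rfl⟩

variable [MeasurableSpace V] [BorelSpace V]

theorem volume_closedBall_inter_slab_le {n : ℕ} (hV : finrank ℝ V = n + 1) {u : V}
    (hu : ‖u‖ = 1) (a p₀ : V) (r M : ℝ) :
    volume (closedBall a r ∩ {z | |⟪z - p₀, u⟫| ≤ M}) ≤
      ENNReal.ofReal (2 * M) * ENNReal.ofReal (2 * r) ^ n := by
  obtain ⟨b, hb⟩ := exists_orthonormalBasis_apply_zero_eq hV hu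
  let coord : V → Fin (n + 1) → ℝ := fun z => WithLp.ofLp (b.repr z)
  have hcoord : MeasurePreserving coord :=
    (PiLp.volume_preserving_ofLp _).comp b.measurePreserving_repr
  let box : Fin (n + 1) → Set ℝ := Fin.cons (Icc (b.repr p₀ 0 - M) (b.repr p₀ 0 + M))
    fun i => Icc (b.repr a i.succ - r) (b.repr a i.succ + r)
  have hbox : MeasurableSet (univ.pi box) :=
    MeasurableSet.univ_pi (Fin.cases measurableSet_Icc fun _ => measurableSet_Icc)
  have hsub : closedBall a r ∩ {z | |⟪z - p₀, u⟫| ≤ M} ⊆ coord ⁻¹' univ.pi box := by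
    rintro z ⟨hza, hzu⟩ i -
    refine Fin.cases ?_ (fun i => ?_) i
    · have : b.repr p₀ 0 - b.repr z 0 = -⟪z - p₀, u⟫ := by
        rw [b.repr_apply_apply, b.repr_apply_apply, hb, inner_sub_left, real_inner_comm u,
          real_inner_comm u]
        ring
      exact mem_Icc_iff_abs_le.1 (by rwa [this, abs_neg])
    · have : |b.repr a i.succ - b.repr z i.succ| ≤ r := by
        rw [← PiLp.sub_apply, ← map_sub]
        exact (PiLp.norm_apply_le _ _).trans
          ((b.repr.norm_map _).trans_le (mem_closedBall_iff_norm'.1 hza))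
      exact mem_Icc_iff_abs_le.1 this
  calc volume (closedBall a r ∩ {z | |⟪z - p₀, u⟫| ≤ M})
      ≤ volume (coord ⁻¹' univ.pi box) := measure_mono hsub
    _ = volume (univ.pi box) := hcoord.measure_preimage hbox.nullMeasurableSet
    _ = ENNReal.ofReal (2 * M) * ENNReal.ofReal (2 * r) ^ n := by
      have hlen (c w : ℝ) : c + w - (c - w) = 2 * w := by ring
      simp only [volume_pi_pi, Fin.prod_univ_succ, box, Fin.cons_zero, Fin.cons_succ,
        Real.volume_Icc, hlen, Finset.prod_const, Finset.card_univ, Fintype.card_fin]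

theorem tendsto_volume_closedBall_inter_div_of_subset_slab {S : Set V} {u p₀ : V} {M : ℝ}
    (hu : ‖u‖ = 1) (hS : S ⊆ {z | |⟪z - p₀, u⟫| ≤ M}) (a : V) :
    Tendsto (fun r : ℝ =>
        (volume (closedBall a r ∩ S)).toReal / (volume (closedBall a r)).toReal)
      atTop (𝓝 0) := by
  have : Nontrivial V := nontrivial_of_ne u 0 (norm_ne_zero_iff.1 (by simp [hu]))
  obtain ⟨n, hn⟩ := Nat.exists_eq_add_one_of_ne_zero (finrank_pos (R := ℝ) (M := V)).ne'
  set vb := (volume (ball (0 : V) 1)).toReal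
  have hvb : 0 < vb :=
    ENNReal.toReal_pos (measure_ball_pos _ _ one_pos).ne' measure_ball_lt_top.ne
  set K := (ENNReal.ofReal (2 * M)).toReal * 2 ^ n / vb
  refine squeeze_zero' (g := fun r => K / r) (Eventually.of_forall fun r => by positivity) ?_
    (tendsto_const_nhds.div_atTop tendsto_id)
  filter_upwards [eventually_gt_atTop 0] with r hr
  have hnum : (volume (closedBall a r ∩ S)).toReal ≤
      (ENNReal.ofReal (2 * M)).toReal * (2 * r) ^ n := by
    have := ENNReal.toReal_mono (by finiteness)
      ((measure_mono (inter_subset_inter_right _ hS)).trans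
        (volume_closedBall_inter_slab_le hn hu a p₀ r M))
    have h2r : (0 : ℝ) ≤ 2 * r := by positivity
    rwa [ENNReal.toReal_mul, ENNReal.toReal_pow, ENNReal.toReal_ofReal h2r] at this
  have hden : (volume (closedBall a r)).toReal = r ^ (n + 1) * vb := by
    rw [Measure.addHaar_closedBall volume a hr.le, ENNReal.toReal_mul,
      ENNReal.toReal_ofReal (by positivity), hn]
  calc _ ≤ (ENNReal.ofReal (2 * M)).toReal * (2 * r) ^ n / (r ^ (n + 1) * vb) := by
        rw [hden]; gcongr
    _ = K / r := by simp only [K]; field_simp; ring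

end Volume

theorem projRegion_density_of_bounded_face_general {d : ℕ} (C : Set (Euc d))
    (F : Set (Euc d)) (hF : IsFaceOf C F)
    (hFb : Bornology.IsBounded F) (hFdim : 1 ≤ sdim F) :
    ∀ a : Euc d,
      Filter.Tendsto
        (fun r : ℝ =>
          (volume (closedBall a r ∩ projRegion C F)).toReal /
            (volume (closedBall a r)).toReal)
        Filter.atTop (nhds 0) := by
  obtain ⟨M, hM⟩ := hFb.subset_closedBall 0
  obtain ⟨u, huF, hu⟩ := exists_norm_eq_one_mem_vectorSpan hFdim
  have hslab := projRegion_subset_slab hF.2.subset huF hM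
  rw [hu, mul_one] at hslab
  exact tendsto_volume_closedBall_inter_div_of_subset_slab hu hslab

/-- For a nonempty closed polyhedral set `C ⊆ ℝ^d` and a bounded
face `F` of `C` with `dim F ≥ 1`, the density of `X_F` at infinity is zero. -/
theorem projRegion_density_of_bounded_face {d : ℕ} (C : Set (Euc d))
    (hne : C.Nonempty) (hC : IsPolyhedralSet C)
    (F : Set (Euc d)) (hF : IsFaceOf C F)
    (hFb : Bornology.IsBounded F) (hFdim : 1 ≤ sdim F) :
    ∀ a : Euc d,
      Filter.Tendsto
        (fun r : ℝ =>
          (volume (closedBall a r ∩ projRegion C F)).toReal /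
            (volume (closedBall a r)).toReal)
        Filter.atTop (nhds 0) :=
  projRegion_density_of_bounded_face_general C F hF hFb hFdim
end
end
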